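/- arXiv:2504.10026 — 8 statements merged into one kernel-verified Lean document; each statement's English description precedes it below -/
import Mathlib

section
/- The multipliers θ_n defined recursively by θ_0 = μ/a_0 and θ_n = a_0^{-1} Σ_{i=1}^{n} (a_{i-1} - a_i) θ_{n-i} for n ≥ 1 are all strictly positive. -/
open Finset

lemma a_strict_anti_step (s : ℝ) (hs0 : 0 < s) (hs1 : s < 1) (i : ℕ) :
    ((i : ℝ) + 2) ^ s - ((i : ℝ) + 1) ^ s < ((i : ℝ) + 1) ^ s - (i : ℝ) ^ s := by
  have h := (Real.strictConcaveOn_rpow hs0 hs1).2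
    (Set.mem_Ici.mpr (by positivity : (0:ℝ) ≤ (i:ℝ)))
    (Set.mem_Ici.mpr (by positivity : (0:ℝ) ≤ (i:ℝ) + 2))
    (by linarith : (i:ℝ) ≠ (i:ℝ) + 2)
    (by norm_num : (0:ℝ) < 1/2) (by norm_num : (0:ℝ) < 1/2) (by norm_num)
  simp only [smul_eq_mul] at h
  have hmid : (1:ℝ)/2 * (i : ℝ) + (1:ℝ)/2 * ((i : ℝ) + 2) = (i : ℝ) + 1 := by ring
  rw [hmid] at h
  linarith

/-- The multipliers `θ_n`, defined by `θ 0 = μ / a 0` and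
`θ n = a 0⁻¹ Σ_{i=1}^{n} (a (i-1) - a i) θ (n-i)` for `n ≥ 1`,
are all strictly positive. -/
theorem l1_multipliers_pos (α τ : ℝ) (hα0 : 0 < α) (hα1 : α < 1) (hτ : 0 < τ)
    (μ : ℝ) (hμ : μ = τ ^ α * Real.Gamma (2 - α))
    (a : ℕ → ℝ) (ha : ∀ i : ℕ, a i = ((i : ℝ) + 1) ^ (1 - α) - (i : ℝ) ^ (1 - α))
    (θ : ℕ → ℝ) (hθ0 : θ 0 = μ / a 0)
    (hθ : ∀ n : ℕ, 1 ≤ n →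
      θ n = (a 0)⁻¹ * ∑ i ∈ Finset.Icc 1 n, (a (i - 1) - a i) * θ (n - i)) :
    ∀ n : ℕ, 0 < θ n := by
  have hs0 : 0 < 1 - α := by linarith
  have ha0 : a 0 = 1 := by
    rw [ha 0]
    simp [Real.zero_rpow (by linarith : (1:ℝ) - α ≠ 0)]
  have hμpos : 0 < μ := by
    rw [hμ]
    exact mul_pos (Real.rpow_pos_of_pos hτ α) (Real.Gamma_pos_of_pos (by linarith))
  have hstep : ∀ i : ℕ, 1 ≤ i → 0 < a (i - 1) - a i := by
    intro i hi
    obtain ⟨j, rfl⟩ := Nat.exists_eq_add_of_le hi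
    have h := a_strict_anti_step (1 - α) hs0 (by linarith) j
    rw [ha, ha]
    simp only [Nat.add_sub_cancel_left] at *
    have hcast : ((1 + j : ℕ) : ℝ) = (j : ℝ) + 1 := by push_cast; ring
    have hcast1 : ((1 : ℕ) : ℝ) = 1 := by norm_num
    rw [hcast]
    have : (j : ℝ) + 1 + 1 = (j : ℝ) + 2 := by ring
    rw [this]
    -- goal should be 0 < ((j+1+1)^s - ... ) ... handle a (1+j-1) = a j
    linarith
  intro n
  induction n using Nat.strong_induction_on with
  | _ n ih =>
    rcases Nat.eq_zero_or_pos n with rfl | hn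
    · rw [hθ0, ha0]; simpa using hμpos
    · rw [hθ n hn, ha0, inv_one, one_mul]
      apply Finset.sum_pos
      · intro i hi
        simp only [Finset.mem_Icc] at hi
        exact mul_pos (hstep i hi.1) (ih (n - i) (Nat.sub_lt hn hi.1))
      · exact ⟨1, Finset.mem_Icc.mpr ⟨le_refl 1, hn⟩⟩
end

section
/- The multipliers θ_n satisfy the bound θ_n ≤ Γ(2-α) τ^α (n+1)^{α-1} for all n ≥ 0. -/
open Finset

/-- Kaluza coefficients: `kb a n = a n - ∑_{k=1}^{n-1} kb a k * a (n-k)`. -/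
private def kb (a : ℕ → ℝ) : ℕ → ℝ
  | n => a n - ∑ k ∈ (Finset.Ico 1 n).attach, kb a k * a (n - k)
  termination_by n => n
  decreasing_by exact (Finset.mem_Ico.mp k.2).2

private lemma kb_eq (a : ℕ → ℝ) (n : ℕ) :
    kb a n = a n - ∑ k ∈ Finset.Ico 1 n, kb a k * a (n - k) := by
  rw [kb]
  congr 1
  exact Finset.sum_attach (Finset.Ico 1 n) (fun k => kb a k * a (n - k))

/-- The multipliers satisfy `θ n ≤ Γ(2-α) τ^α (n+1)^{α-1}` for all `n ≥ 0`. -/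
theorem l1_multipliers_bound (α τ : ℝ) (hα0 : 0 < α) (hα1 : α < 1) (hτ : 0 < τ)
    (μ : ℝ) (hμ : μ = τ ^ α * Real.Gamma (2 - α))
    (a : ℕ → ℝ) (ha : ∀ i : ℕ, a i = ((i : ℝ) + 1) ^ (1 - α) - (i : ℝ) ^ (1 - α))
    (θ : ℕ → ℝ) (hθ0 : θ 0 = μ / a 0)
    (hθ : ∀ n : ℕ, 1 ≤ n →
      θ n = (a 0)⁻¹ * ∑ i ∈ Finset.Icc 1 n, (a (i - 1) - a i) * θ (n - i)) :
    ∀ n : ℕ, θ n ≤ Real.Gamma (2 - α) * τ ^ α * ((n : ℝ) + 1) ^ (α - 1) := by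
  have hβ : 0 < 1 - α := by linarith
  have ha0 : a 0 = 1 := by
    rw [ha 0]
    push_cast
    rw [zero_add, Real.one_rpow, Real.zero_rpow hβ.ne']
    ring
  have hapos : ∀ i, 0 < a i := by
    intro i
    rw [ha i]
    have := Real.rpow_lt_rpow (by positivity) (by linarith : (i : ℝ) < (i : ℝ) + 1) hβ
    linarith
  have hμpos : 0 < μ := by
    rw [hμ]
    exact mul_pos (Real.rpow_pos_of_pos hτ α) (Real.Gamma_pos_of_pos (by linarith))
  -- Cauchy MVT : the ratio a (m+1) / a m equals ((c+1)/c)^(1-α-1) for some c ∈ (m, m+1)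
  have hmvt : ∀ m : ℕ, ∃ c : ℝ, (m : ℝ) < c ∧ c < (m : ℝ) + 1 ∧
      a (m + 1) * c ^ (1 - α - 1) = a m * (c + 1) ^ (1 - α - 1) := by
    intro m
    have hab : (m : ℝ) < (m : ℝ) + 1 := by linarith
    have hfc : ContinuousOn (fun x : ℝ => x ^ (1 - α)) (Set.Icc (m : ℝ) ((m : ℝ) + 1)) :=
      (Real.continuous_rpow_const hβ.le).continuousOn
    have hgc : ContinuousOn (fun x : ℝ => (x + 1) ^ (1 - α)) (Set.Icc (m : ℝ) ((m : ℝ) + 1)) :=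
      ((Real.continuous_rpow_const hβ.le).comp (continuous_id.add continuous_const)).continuousOn
    have hff' : ∀ x ∈ Set.Ioo (m : ℝ) ((m : ℝ) + 1),
        HasDerivAt (fun x : ℝ => x ^ (1 - α)) ((1 - α) * x ^ (1 - α - 1)) x := by
      intro x hx
      have hx0 : 0 < x := lt_of_le_of_lt (Nat.cast_nonneg m) hx.1
      exact Real.hasDerivAt_rpow_const (Or.inl hx0.ne')
    have hgg' : ∀ x ∈ Set.Ioo (m : ℝ) ((m : ℝ) + 1),
        HasDerivAt (fun x : ℝ => (x + 1) ^ (1 - α)) (1 * ((1 - α) * (x + 1) ^ (1 - α - 1))) x := by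
      intro x hx
      have hx0 : 0 < x := lt_of_le_of_lt (Nat.cast_nonneg m) hx.1
      have h1 : HasDerivAt (fun x : ℝ => x + 1) 1 x := (hasDerivAt_id x).add_const 1
      have := h1.rpow_const (p := 1 - α) (Or.inl (by positivity))
      convert this using 1
      ring
    obtain ⟨c, hc, heq⟩ := exists_ratio_hasDerivAt_eq_ratio_slope
      (fun x : ℝ => x ^ (1 - α)) (fun x => (1 - α) * x ^ (1 - α - 1)) hab hfc hff'
      (fun x : ℝ => (x + 1) ^ (1 - α)) (fun x => 1 * ((1 - α) * (x + 1) ^ (1 - α - 1))) hgc hgg'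
    refine ⟨c, hc.1, hc.2, ?_⟩
    apply mul_left_cancel₀ hβ.ne'
    have hA : a (m + 1) = ((m : ℝ) + 1 + 1) ^ (1 - α) - ((m : ℝ) + 1) ^ (1 - α) := by
      rw [ha (m + 1)]; push_cast; ring_nf
    have hB : a m = ((m : ℝ) + 1) ^ (1 - α) - (m : ℝ) ^ (1 - α) := ha m
    rw [hA, hB]
    linear_combination heq
  have hcore : ∀ (c d : ℝ), 0 < c → c ≤ d →
      (c + 1) ^ (1 - α - 1) * d ^ (1 - α - 1) ≤ c ^ (1 - α - 1) * (d + 1) ^ (1 - α - 1) := by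
    intro c d hc hcd
    have hd : 0 < d := lt_of_lt_of_le hc hcd
    have h1 : ((c + 1) * d) ^ (1 - α - 1) ≤ (c * (d + 1)) ^ (1 - α - 1) := by
      apply Real.rpow_le_rpow_of_nonpos (by positivity) (by nlinarith) (by linarith)
    rw [Real.mul_rpow (by positivity) (by positivity),
      Real.mul_rpow (by positivity) (by positivity)] at h1
    exact h1
  -- Ratio monotonicity (log-convexity of a)
  have hR : ∀ j n : ℕ, j ≤ n → a (j + 1) * a n ≤ a (n + 1) * a j := by
    intro j n hjn
    rcases eq_or_lt_of_le hjn with rfl | hlt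
    · rw [mul_comm]
    · obtain ⟨c, hc1, hc2, Ec⟩ := hmvt j
      obtain ⟨d, hd1, hd2, Ed⟩ := hmvt n
      have hc0 : 0 < c := lt_of_le_of_lt (Nat.cast_nonneg j) hc1
      have hcd : c ≤ d := by
        have : (j : ℝ) + 1 ≤ (n : ℝ) := by exact_mod_cast hlt
        linarith
      have key := hcore c d hc0 hcd
      have hcp : (0:ℝ) < c ^ (1 - α - 1) := Real.rpow_pos_of_pos hc0 _
      have hdp : (0:ℝ) < d ^ (1 - α - 1) :=
        Real.rpow_pos_of_pos (lt_of_lt_of_le hc0 hcd) _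
      have han : (0:ℝ) ≤ a j * a n := mul_nonneg (hapos j).le (hapos n).le
      have h1 : a (j + 1) * a n * (c ^ (1 - α - 1) * d ^ (1 - α - 1)) ≤
          a (n + 1) * a j * (c ^ (1 - α - 1) * d ^ (1 - α - 1)) := by
        calc a (j + 1) * a n * (c ^ (1 - α - 1) * d ^ (1 - α - 1))
            = (a (j + 1) * c ^ (1 - α - 1)) * (a n * d ^ (1 - α - 1)) := by ring
          _ = (a j * (c + 1) ^ (1 - α - 1)) * (a n * d ^ (1 - α - 1)) := by rw [Ec]
          _ = a j * a n * ((c + 1) ^ (1 - α - 1) * d ^ (1 - α - 1)) := by ring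
          _ ≤ a j * a n * (c ^ (1 - α - 1) * (d + 1) ^ (1 - α - 1)) :=
              mul_le_mul_of_nonneg_left key han
          _ = (a j * c ^ (1 - α - 1)) * (a n * (d + 1) ^ (1 - α - 1)) := by ring
          _ = (a j * c ^ (1 - α - 1)) * (a (n + 1) * d ^ (1 - α - 1)) := by rw [Ed]
          _ = a (n + 1) * a j * (c ^ (1 - α - 1) * d ^ (1 - α - 1)) := by ring
      exact le_of_mul_le_mul_right h1 (mul_pos hcp hdp)
  -- a is nonincreasing
  have hdec : ∀ m : ℕ, a (m + 1) ≤ a m := by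
    intro m
    obtain ⟨c, hc1, _, Ec⟩ := hmvt m
    have hc0 : 0 < c := lt_of_le_of_lt (Nat.cast_nonneg m) hc1
    have h1 : (c + 1) ^ (1 - α - 1) ≤ c ^ (1 - α - 1) :=
      Real.rpow_le_rpow_of_nonpos hc0 (by linarith) (by linarith)
    have h2 : a (m + 1) * c ^ (1 - α - 1) ≤ a m * c ^ (1 - α - 1) := by
      rw [Ec]
      exact mul_le_mul_of_nonneg_left h1 (hapos m).le
    exact le_of_mul_le_mul_right h2 (Real.rpow_pos_of_pos hc0 _)
  have hanti : Antitone a := antitone_nat_of_succ_le hdec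
  -- Kaluza convolution identity
  have hconvK : ∀ n : ℕ, 1 ≤ n →
      ∑ k ∈ Finset.Ico 1 (n + 1), kb a k * a (n - k) = a n := by
    intro n hn
    rw [Finset.sum_Ico_succ_top hn, Nat.sub_self, ha0, mul_one, kb_eq]
    ring
  -- Kaluza's theorem: kb a n ≥ 0 for n ≥ 1
  have hkb : ∀ n : ℕ, 1 ≤ n → 0 ≤ kb a n := by
    intro n
    induction n using Nat.strong_induction_on with
    | _ n IH =>
      intro hn
      match n, hn with
      | 1, _ => rw [kb_eq]; simp [hapos 1 |>.le]
      | (m + 2), _ =>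
        rw [kb_eq, sub_nonneg]
        have hm1 : 1 ≤ m + 1 := Nat.le_add_left 1 m
        have key : a (m + 1) * (∑ k ∈ Finset.Ico 1 (m + 2), kb a k * a (m + 2 - k)) ≤
            a (m + 1) * a (m + 2) := by
          rw [Finset.mul_sum]
          calc ∑ k ∈ Finset.Ico 1 (m + 2), a (m + 1) * (kb a k * a (m + 2 - k))
              ≤ ∑ k ∈ Finset.Ico 1 (m + 2), a (m + 2) * (kb a k * a (m + 1 - k)) := by
                apply Finset.sum_le_sum
                intro k hk
                obtain ⟨hk1, hk2⟩ := Finset.mem_Ico.mp hk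
                have hkm : k ≤ m + 1 := by omega
                have hkb0 : 0 ≤ kb a k := IH k (by omega) hk1
                have hsub : m + 2 - k = (m + 1 - k) + 1 := by omega
                have := hR (m + 1 - k) (m + 1) (by omega)
                rw [← hsub] at this
                calc a (m + 1) * (kb a k * a (m + 2 - k))
                    = kb a k * (a (m + 2 - k) * a (m + 1)) := by ring
                  _ ≤ kb a k * (a (m + 1 + 1) * a (m + 1 - k)) :=
                      mul_le_mul_of_nonneg_left this hkb0
                  _ = a (m + 2) * (kb a k * a (m + 1 - k)) := by ring
            _ = a (m + 2) * ∑ k ∈ Finset.Ico 1 (m + 2), kb a k * a (m + 1 - k) := by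
                rw [Finset.mul_sum]
            _ = a (m + 2) * a (m + 1) := by rw [hconvK (m + 1) hm1]
            _ = a (m + 1) * a (m + 2) := by ring
        exact le_of_mul_le_mul_left key (hapos (m + 1))
  -- Partial sums of kb
  set B : ℕ → ℝ := fun n => ∑ k ∈ Finset.Ico 1 (n + 1), kb a k with hBdef
  have hB0 : B 0 = 0 := by simp [hBdef]
  have hBstep : ∀ m : ℕ, B (m + 1) = B m + kb a (m + 1) := by
    intro m
    simp only [hBdef]
    rw [Finset.sum_Ico_succ_top (Nat.le_add_left 1 m)]
  have hBmono : ∀ i j : ℕ, i ≤ j → B i ≤ B j := by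
    intro i j hij
    apply Finset.sum_le_sum_of_subset_of_nonneg
    · exact Finset.Ico_subset_Ico le_rfl (by omega)
    · intro k hk _
      exact hkb k (Finset.mem_Ico.mp hk).1
  have hBle1 : ∀ n : ℕ, B n ≤ 1 := by
    intro n
    rcases Nat.eq_zero_or_pos n with rfl | hn
    · rw [hB0]; norm_num
    · have key : B n * a n ≤ 1 * a n := by
        rw [one_mul]
        calc B n * a n = ∑ k ∈ Finset.Ico 1 (n + 1), kb a k * a n := by
              rw [hBdef]; rw [Finset.sum_mul]
          _ ≤ ∑ k ∈ Finset.Ico 1 (n + 1), kb a k * a (n - k) := by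
              apply Finset.sum_le_sum
              intro k hk
              exact mul_le_mul_of_nonneg_left (hanti (Nat.sub_le n k))
                (hkb k (Finset.mem_Ico.mp hk).1)
          _ = a n := hconvK n hn
      exact le_of_mul_le_mul_right key (hapos n)
  -- The explicit solution φ
  set φ : ℕ → ℝ := fun n => μ * (1 - B n) with hφdef
  have hφ0 : φ 0 = μ := by simp [hφdef, hB0]
  -- Convolution identity for θ
  have hconvθ : ∀ n : ℕ, ∑ i ∈ Finset.range (n + 1), a i * θ (n - i) = μ := by
    intro n
    induction n with
    | zero => simp [hθ0, ha0]
    | succ n IH =>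
      rw [Finset.sum_range_succ']
      have hrec := hθ (n + 1) (Nat.le_add_left 1 n)
      rw [ha0, inv_one, one_mul] at hrec
      have hIcc : Finset.Icc 1 (n + 1) = Finset.Ico 1 (n + 2) := (Finset.Ico_add_one_right_eq_Icc 1 (n + 1)).symm
      rw [hIcc, Finset.sum_Ico_eq_sum_range] at hrec
      rw [show n + 2 - 1 = n + 1 from rfl] at hrec
      have hrec2 : θ (n + 1) = ∑ i ∈ Finset.range (n + 1), (a i - a (i + 1)) * θ (n - i) := by
        rw [hrec]
        apply Finset.sum_congr rfl
        intro i _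
        have e1 : 1 + i - 1 = i := by omega
        have e2 : n + 1 - (1 + i) = n - i := by omega
        rw [e1, e2, add_comm 1 i]
      have hsplit : ∀ i ∈ Finset.range (n + 1), a (i + 1) * θ (n + 1 - (i + 1)) =
          a (i + 1) * θ (n - i) := by
        intro i _
        congr 2
        omega
      rw [Finset.sum_congr rfl hsplit, Nat.sub_zero, ha0, one_mul, hrec2,
        ← Finset.sum_add_distrib]
      calc ∑ i ∈ Finset.range (n + 1), (a (i + 1) * θ (n - i) + (a i - a (i + 1)) * θ (n - i))
          = ∑ i ∈ Finset.range (n + 1), a i * θ (n - i) := by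
            apply Finset.sum_congr rfl; intro i _; ring
        _ = μ := IH
  -- Convolution identity for φ
  have hconvφ : ∀ n : ℕ, ∑ i ∈ Finset.range (n + 1), a i * φ (n - i) = μ := by
    intro n
    induction n with
    | zero => simp [hφ0, ha0]
    | succ n IH =>
      rw [Finset.sum_range_succ]
      have hstep : ∀ i ∈ Finset.range (n + 1),
          a i * φ (n + 1 - i) = a i * φ (n - i) - μ * (a i * kb a (n + 1 - i)) := by
        intro i hi
        have hi' : i ≤ n := by have := Finset.mem_range.mp hi; omega
        have e1 : n + 1 - i = (n - i) + 1 := by omega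
        rw [e1]
        simp only [hφdef]
        rw [hBstep (n - i)]
        have e2 : n - i + 1 = n + 1 - i := by omega
        rw [e2]
        ring
      rw [Finset.sum_congr rfl hstep, Finset.sum_sub_distrib, IH, ← Finset.mul_sum]
      have hrefl : ∑ i ∈ Finset.range (n + 1), a i * kb a (n + 1 - i) = a (n + 1) := by
        rw [← Finset.sum_range_reflect]
        have : ∀ j ∈ Finset.range (n + 1),
            a (n + 1 - 1 - j) * kb a (n + 1 - (n + 1 - 1 - j)) = kb a (j + 1) * a (n - j) := by
          intro j hj
          have hj' : j ≤ n := by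
            have := Finset.mem_range.mp hj; omega
          have e1 : n + 1 - 1 - j = n - j := by omega
          have e2 : n + 1 - (n - j) = j + 1 := by omega
          rw [e1, e2]; ring
        rw [Finset.sum_congr rfl this]
        have hK := hconvK (n + 1) (Nat.le_add_left 1 n)
        rw [Finset.sum_Ico_eq_sum_range] at hK
        rw [show n + 1 + 1 - 1 = n + 1 from rfl] at hK
        rw [← hK]
        apply Finset.sum_congr rfl
        intro j hj
        have hj' : j ≤ n := by
          have := Finset.mem_range.mp hj; omega
        rw [add_comm 1 j, show n + 1 - (j + 1) = n - j from by omega]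
      rw [hrefl, Nat.sub_self, hφ0]
      ring
  -- Uniqueness: θ = φ
  have hθφ : ∀ n : ℕ, θ n = φ n := by
    intro n
    induction n using Nat.strong_induction_on with
    | _ n IH =>
      have h1 := hconvθ n
      have h2 := hconvφ n
      rw [Finset.sum_range_succ'] at h1 h2
      have e : ∑ i ∈ Finset.range n, a (i + 1) * θ (n - (i + 1)) =
          ∑ i ∈ Finset.range n, a (i + 1) * φ (n - (i + 1)) := by
        apply Finset.sum_congr rfl
        intro i hi
        have hi' : i < n := Finset.mem_range.mp hi
        rw [IH (n - (i + 1)) (by omega)]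
      rw [Nat.sub_zero, ha0, one_mul] at h1 h2
      rw [e] at h1
      linarith
  -- Final bound
  intro n
  have hsum : ∑ i ∈ Finset.range (n + 1), a i = ((n : ℝ) + 1) ^ (1 - α) := by
    have h1 : ∀ i : ℕ, a i = ((i + 1 : ℕ) : ℝ) ^ (1 - α) - ((i : ℕ) : ℝ) ^ (1 - α) := by
      intro i
      rw [ha i]
      push_cast
      ring_nf
    calc ∑ i ∈ Finset.range (n + 1), a i
        = ∑ i ∈ Finset.range (n + 1),
          (((i + 1 : ℕ) : ℝ) ^ (1 - α) - ((i : ℕ) : ℝ) ^ (1 - α)) :=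
          Finset.sum_congr rfl (fun i _ => h1 i)
      _ = ((n + 1 : ℕ) : ℝ) ^ (1 - α) - ((0 : ℕ) : ℝ) ^ (1 - α) :=
          Finset.sum_range_sub (fun i => ((i : ℕ) : ℝ) ^ (1 - α)) (n + 1)
      _ = ((n : ℝ) + 1) ^ (1 - α) := by
          push_cast
          rw [Real.zero_rpow hβ.ne']
          ring
  have hmono : ∀ i ∈ Finset.range (n + 1), a i * θ n ≤ a i * θ (n - i) := by
    intro i _
    apply mul_le_mul_of_nonneg_left _ (hapos i).le
    rw [hθφ n, hθφ (n - i)]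
    simp only [hφdef]
    have : B (n - i) ≤ B n := hBmono (n - i) n (Nat.sub_le n i)
    nlinarith [hμpos]
  have hkey : ((n : ℝ) + 1) ^ (1 - α) * θ n ≤ μ := by
    calc ((n : ℝ) + 1) ^ (1 - α) * θ n
        = ∑ i ∈ Finset.range (n + 1), a i * θ n := by rw [← hsum, Finset.sum_mul]
      _ ≤ ∑ i ∈ Finset.range (n + 1), a i * θ (n - i) := Finset.sum_le_sum hmono
      _ = μ := hconvθ n
  have hpow : (0:ℝ) < ((n : ℝ) + 1) ^ (1 - α) := Real.rpow_pos_of_pos (by positivity) _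
  have hfin : θ n ≤ μ * ((n : ℝ) + 1) ^ (α - 1) := by
    have e1 : ((n : ℝ) + 1) ^ (α - 1) = (((n : ℝ) + 1) ^ (1 - α))⁻¹ := by
      rw [← Real.rpow_neg (by positivity)]
      norm_num
    rw [e1, ← div_eq_mul_inv, le_div_iff₀ hpow]
    linarith [hkey]
  calc θ n ≤ μ * ((n : ℝ) + 1) ^ (α - 1) := hfin
    _ = Real.Gamma (2 - α) * τ ^ α * ((n : ℝ) + 1) ^ (α - 1) := by rw [hμ]; ring
end

section
/- The sequence of multipliers θ_n is monotonically decreasing: θ_{n+1} ≤ θ_n for all n ≥ 0. -/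
open MeasureTheory Finset

section Aux
variable {β : ℝ}

lemma aux_ig {r : ℝ} (hr : -1 < r) (c : ℝ) :
    IntegrableOn (fun t => (t + c) ^ r) (Set.Ioc (0:ℝ) 1) := by
  have h := (intervalIntegral.intervalIntegrable_rpow' (a := c) (b := 1 + c) hr).comp_add_right c
  simp only [sub_self, add_sub_cancel_right] at h
  exact (intervalIntegrable_iff_integrableOn_Ioc_of_le zero_le_one).1 h

lemma aux_J (hβ0 : 0 < β) (c : ℝ) :
    ∫ t in Set.Ioc (0:ℝ) 1, (t + c) ^ (β - 1) = ((c + 1) ^ β - c ^ β) / β := by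
  rw [← intervalIntegral.integral_of_le zero_le_one,
    intervalIntegral.integral_comp_add_right (fun x => x ^ (β - 1)) c,
    integral_rpow (Or.inl (by linarith))]
  rw [sub_add_cancel, zero_add]
  ring_nf

lemma aux_cs {β : ℝ} (hβ0 : 0 < β) (hβ1 : β < 1) (c : ℝ) (hc : 0 ≤ c) :
    (∫ t in Set.Ioc (0:ℝ) 1, (t + (c+1)) ^ (β - 1)) ^ 2 ≤
      (∫ t in Set.Ioc (0:ℝ) 1, (t + c) ^ (β - 1)) *
        (∫ t in Set.Ioc (0:ℝ) 1, (t + (c+2)) ^ (β - 1)) := by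
  set p : ℝ := (β - 1) / 2 with hp
  have hpneg : p ≤ 0 := by rw [hp]; nlinarith
  have hpgt : (-1:ℝ) < p := by rw [hp]; nlinarith
  have hβ1' : (-1:ℝ) < β - 1 := by linarith
  set μm := volume.restrict (Set.Ioc (0:ℝ) 1) with hμm
  set F : ℝ → ℝ := fun t => (t + c) ^ p with hF
  set G : ℝ → ℝ := fun t => (t + (c+2)) ^ p with hG
  have hFi : Integrable F μm := aux_ig hpgt c
  have hGi : Integrable G μm := aux_ig hpgt (c+2)
  have haet : ∀ᵐ t ∂μm, t ∈ Set.Ioc (0:ℝ) 1 := ae_restrict_mem measurableSet_Ioc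
  have hF2 : Integrable (fun t => F t ^ (2:ℕ)) μm := by
    refine (aux_ig hβ1' c).congr ?_
    filter_upwards [haet] with t ht
    rw [hF]
    rw [← Real.rpow_natCast ((t + c) ^ p) 2, ← Real.rpow_mul (by linarith [ht.1] : (0:ℝ) ≤ t + c)]
    norm_num [hp]
  have hG2 : Integrable (fun t => G t ^ (2:ℕ)) μm := by
    refine (aux_ig hβ1' (c+2)).congr ?_
    filter_upwards [haet] with t ht
    rw [hG]
    rw [← Real.rpow_natCast ((t + (c+2)) ^ p) 2,
      ← Real.rpow_mul (by linarith [ht.1] : (0:ℝ) ≤ t + (c+2))]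
    norm_num [hp]
  have hFmem : MemLp F (ENNReal.ofReal 2) μm := by
    rw [show ENNReal.ofReal 2 = 2 by norm_num]
    exact (memLp_two_iff_integrable_sq hFi.aestronglyMeasurable).2 hF2
  have hGmem : MemLp G (ENNReal.ofReal 2) μm := by
    rw [show ENNReal.ofReal 2 = 2 by norm_num]
    exact (memLp_two_iff_integrable_sq hGi.aestronglyMeasurable).2 hG2
  have hFnn : 0 ≤ᵐ[μm] F := by
    filter_upwards [haet] with t ht
    exact Real.rpow_nonneg (by linarith [ht.1]) _
  have hGnn : 0 ≤ᵐ[μm] G := by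
    filter_upwards [haet] with t ht
    exact Real.rpow_nonneg (by linarith [ht.1]) _
  have hconj : Real.HolderConjugate 2 2 := Real.HolderConjugate.two_two
  have hCS := integral_mul_le_Lp_mul_Lq_of_nonneg hconj hFnn hGnn hFmem hGmem
  -- product integrable
  have hFGi : Integrable (fun t => F t * G t) μm := by
    refine Integrable.mono ((aux_ig hpgt c).const_mul ((2:ℝ) ^ p))
      (hFi.aestronglyMeasurable.mul hGi.aestronglyMeasurable) ?_
    filter_upwards [haet] with t ht
    have h1 : (0:ℝ) < t + c := by linarith [ht.1]
    have h2 : G t ≤ (2:ℝ) ^ p := by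
      rw [hG]
      exact Real.rpow_le_rpow_of_nonpos two_pos (by linarith [ht.1]) hpneg
    have hFnn' : (0:ℝ) ≤ F t := Real.rpow_nonneg h1.le _
    have hGnn' : (0:ℝ) ≤ G t := Real.rpow_nonneg (by linarith [ht.1]) _
    rw [Real.norm_of_nonneg (mul_nonneg hFnn' hGnn'),
      Real.norm_of_nonneg (mul_nonneg (Real.rpow_nonneg two_pos.le p) hFnn')]
    calc F t * G t ≤ F t * (2:ℝ)^p := by nlinarith
    _ = (2:ℝ)^p * F t := mul_comm _ _
  -- pointwise bound on the LHS integrand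
  have hpt : ∀ t ∈ Set.Ioc (0:ℝ) 1, (t + (c+1)) ^ (β - 1) ≤ F t * G t := by
    intro t ht
    have h1 : (0:ℝ) < t + c := by linarith [ht.1]
    have hFG : F t * G t = ((t+c) * (t + (c+2))) ^ p := by
      rw [hF, hG, Real.mul_rpow h1.le (by linarith)]
    have hsq : (t + (c+1)) ^ (β - 1) = ((t + (c+1)) ^ (2:ℕ)) ^ p := by
      rw [← Real.rpow_natCast (t + (c+1)) 2, ← Real.rpow_mul (by linarith)]
      norm_num [hp]
      ring_nf
    rw [hFG, hsq]
    refine Real.rpow_le_rpow_of_nonpos (by nlinarith) (by nlinarith) hpneg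
  have hmono : (∫ t in Set.Ioc (0:ℝ) 1, (t + (c+1)) ^ (β - 1)) ≤ ∫ t, F t * G t ∂μm := by
    refine setIntegral_mono_on (aux_ig hβ1' (c+1)) hFGi measurableSet_Ioc hpt
  have hL : (∫ t, F t ^ (2:ℝ) ∂μm) = ∫ t in Set.Ioc (0:ℝ) 1, (t + c) ^ (β - 1) := by
    refine integral_congr_ae ?_
    filter_upwards [haet] with t ht
    rw [hF, ← Real.rpow_mul (by linarith [ht.1] : (0:ℝ) ≤ t + c)]
    norm_num [hp]
  have hR : (∫ t, G t ^ (2:ℝ) ∂μm) = ∫ t in Set.Ioc (0:ℝ) 1, (t + (c+2)) ^ (β - 1) := by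
    refine integral_congr_ae ?_
    filter_upwards [haet] with t ht
    rw [hG, ← Real.rpow_mul (by linarith [ht.1] : (0:ℝ) ≤ t + (c+2))]
    norm_num [hp]
  rw [hL, hR] at hCS
  set A := ∫ t in Set.Ioc (0:ℝ) 1, (t + c) ^ (β - 1) with hA
  set B := ∫ t in Set.Ioc (0:ℝ) 1, (t + (c+1)) ^ (β - 1) with hB
  set C := ∫ t in Set.Ioc (0:ℝ) 1, (t + (c+2)) ^ (β - 1) with hC
  have hAnn : 0 ≤ A := by
    refine setIntegral_nonneg measurableSet_Ioc fun t ht => Real.rpow_nonneg (by linarith [ht.1]) _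
  have hCnn : 0 ≤ C := by
    refine setIntegral_nonneg measurableSet_Ioc fun t ht => Real.rpow_nonneg (by linarith [ht.1]) _
  have hBnn : 0 ≤ B := by
    refine setIntegral_nonneg measurableSet_Ioc fun t ht => Real.rpow_nonneg (by linarith [ht.1]) _
  have hchain : B ≤ A ^ ((1:ℝ)/2) * C ^ ((1:ℝ)/2) := le_trans hmono hCS
  calc B ^ 2 ≤ (A ^ ((1:ℝ)/2) * C ^ ((1:ℝ)/2)) ^ 2 := by
        apply pow_le_pow_left₀ hBnn hchain
    _ = A * C := by
        rw [mul_pow, ← Real.rpow_natCast (A ^ ((1:ℝ)/2)) 2, ← Real.rpow_natCast (C ^ ((1:ℝ)/2)) 2,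
          ← Real.rpow_mul hAnn, ← Real.rpow_mul hCnn]
        norm_num

lemma aux_K (hβ0 : 0 < β) (hβ1 : β < 1) (c : ℝ) (hc : 0 ≤ c) :
    ((c+1+1) ^ β - (c+1) ^ β) ^ 2 ≤ ((c+1) ^ β - c ^ β) * ((c+2+1) ^ β - (c+2) ^ β) := by
  have h := aux_cs hβ0 hβ1 c hc
  rw [aux_J hβ0 c, aux_J hβ0 (c+1), aux_J hβ0 (c+2)] at h
  have hβ : β ≠ 0 := ne_of_gt hβ0
  set X := (c+1+1) ^ β - (c+1) ^ β
  set Y := (c+1) ^ β - c ^ β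
  set Z := (c+2+1) ^ β - (c+2) ^ β
  have h2 := mul_le_mul_of_nonneg_right h (sq_nonneg β)
  calc X ^ 2 = (X / β) ^ 2 * β ^ 2 := by field_simp
    _ ≤ (Y / β * (Z / β)) * β ^ 2 := h2
    _ = (Y * Z) / (β * β) * (β * β) := by rw [div_mul_div_comm, sq]
    _ = Y * Z := div_mul_cancel₀ _ (by positivity)

lemma aux_anti (hβ0 : 0 < β) (hβ1 : β < 1) (c : ℝ) (hc : 0 ≤ c) :
    (c+1+1) ^ β - (c+1) ^ β ≤ (c+1) ^ β - c ^ β := by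
  have hβ1' : (-1:ℝ) < β - 1 := by linarith
  have h : (∫ t in Set.Ioc (0:ℝ) 1, (t + (c+1)) ^ (β - 1)) ≤
      ∫ t in Set.Ioc (0:ℝ) 1, (t + c) ^ (β - 1) := by
    refine setIntegral_mono_on (aux_ig hβ1' (c+1)) (aux_ig hβ1' c) measurableSet_Ioc ?_
    intro t ht
    exact Real.rpow_le_rpow_of_nonpos (by linarith [ht.1]) (by linarith) (by linarith)
  rw [aux_J hβ0 c, aux_J hβ0 (c+1)] at h
  set X := (c+1+1) ^ β - (c+1) ^ β
  set Y := (c+1) ^ β - c ^ β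
  have hβ : β ≠ 0 := ne_of_gt hβ0
  calc X = X / β * β := by field_simp
    _ ≤ Y / β * β := mul_le_mul_of_nonneg_right h hβ0.le
    _ = Y := by field_simp

end Aux

/-- The sequence of multipliers `θ n` is monotonically decreasing:
`θ (n+1) ≤ θ n` for all `n ≥ 0`. -/
theorem l1_multipliers_anti (α τ : ℝ) (hα0 : 0 < α) (hα1 : α < 1) (hτ : 0 < τ)
    (μ : ℝ) (hμ : μ = τ ^ α * Real.Gamma (2 - α))
    (a : ℕ → ℝ) (ha : ∀ i : ℕ, a i = ((i : ℝ) + 1) ^ (1 - α) - (i : ℝ) ^ (1 - α))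
    (θ : ℕ → ℝ) (hθ0 : θ 0 = μ / a 0)
    (hθ : ∀ n : ℕ, 1 ≤ n →
      θ n = (a 0)⁻¹ * ∑ i ∈ Finset.Icc 1 n, (a (i - 1) - a i) * θ (n - i)) :
    ∀ n : ℕ, θ (n + 1) ≤ θ n := by
  set β := 1 - α with hβ
  have hβ0 : 0 < β := by simp [hβ]; linarith
  have hβ1 : β < 1 := by simp [hβ]; linarith
  -- basic facts about a
  have ha0 : a 0 = 1 := by
    rw [ha 0]
    norm_num [Real.zero_rpow (ne_of_gt hβ0), Real.one_rpow]
  have hapos : ∀ i : ℕ, 0 < a i := by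
    intro i
    rw [ha i]
    have := Real.rpow_lt_rpow (x := (i:ℝ)) (Nat.cast_nonneg i) (lt_add_one _) hβ0
    linarith
  have hcast : ∀ i : ℕ, (((i+1 : ℕ)) : ℝ) = (i:ℝ) + 1 := by intro i; push_cast; ring
  have haanti : ∀ i : ℕ, a (i+1) ≤ a i := by
    intro i
    have h := aux_anti hβ0 hβ1 (i:ℝ) (Nat.cast_nonneg i)
    rw [ha i, ha (i+1), hcast i]
    exact h
  have hacs : ∀ i : ℕ, a (i+1) ^ 2 ≤ a i * a (i+2) := by
    intro i
    have h := aux_K hβ0 hβ1 (i:ℝ) (Nat.cast_nonneg i)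
    rw [ha i, ha (i+1), ha (i+2), hcast i, hcast (i+1), hcast i]
    calc (((i:ℝ)+1+1) ^ β - ((i:ℝ)+1) ^ β)^2 ≤ _ := h
      _ = (((i:ℝ) + 1) ^ β - (i:ℝ) ^ β) * (((i:ℝ)+1+1+1) ^ β - ((i:ℝ)+1+1) ^ β) := by
        ring_nf
  -- ratio monotone
  have hr : ∀ m n : ℕ, m ≤ n → a (m+1) * a n ≤ a m * a (n+1) := by
    have hmono : Monotone (fun n => a (n+1) / a n) := by
      apply monotone_nat_of_le_succ
      intro m
      rw [div_le_div_iff₀ (hapos m) (hapos (m+1))]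
      have := hacs m
      nlinarith [hapos m, hapos (m+1), hapos (m+2)]
    intro m n hmn
    have h := hmono hmn
    rw [div_le_div_iff₀ (hapos m) (hapos n)] at h
    linarith
  -- θ recursion with a 0 = 1
  have hθrec : ∀ n : ℕ, θ (n+1) = ∑ i ∈ Icc 1 (n+1), (a (i-1) - a i) * θ (n+1-i) := by
    intro n
    rw [hθ (n+1) (by omega), ha0]
    simp
  -- partial "S" sums
  set S : ℕ → ℝ := fun n => ∑ j ∈ range (n+1), a j * θ (n - j) with hSdef
  have hθrec' : ∀ n : ℕ, θ (n+1) = ∑ i ∈ range (n+1), (a i - a (i+1)) * θ (n - i) := by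
    intro n
    rw [hθrec n, ← Finset.Ico_add_one_right_eq_Icc, Finset.sum_Ico_eq_sum_range]
    refine Finset.sum_congr (by norm_num) ?_
    intro i _
    rw [show 1 + i - 1 = i by omega, show n + 1 - (1+i) = n - i by omega, show 1 + i = i + 1 by omega]
  have hS : ∀ n : ℕ, S (n+1) = S n := by
    intro n
    have e1 : S (n+1) = ∑ j ∈ range (n+1), a (j+1) * θ (n - j) + a 0 * θ (n+1) := by
      simp only [hSdef]
      rw [Finset.sum_range_succ' (fun j => a j * θ (n + 1 - j)) (n+1)]
      simp only [Nat.succ_sub_succ, Nat.sub_zero]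
    rw [e1, ha0, one_mul, hθrec' n, ← Finset.sum_add_distrib]
    refine Finset.sum_congr rfl ?_
    intro i _
    ring
  have hSθ0 : ∀ n : ℕ, S n = θ 0 := by
    intro n
    induction n with
    | zero => simp [hSdef, ha0]
    | succ m ih => rw [hS m, ih]
  have hSrefl : ∀ n : ℕ, S n = ∑ k ∈ range (n+1), a (n - k) * θ k := by
    intro n
    simp only [hSdef]
    rw [← Finset.sum_range_reflect (fun j => a j * θ (n - j)) (n+1)]
    refine Finset.sum_congr rfl ?_
    intro k hk
    simp only [Finset.mem_range] at hk
    rw [show n + 1 - 1 - k = n - k by omega, show n - (n - k) = k by omega]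
  -- key identity
  have hkey : ∀ n : ℕ, ∑ k ∈ range (n+1), a (n - k) * (θ k - θ (k+1)) = a (n+1) * θ 0 := by
    intro n
    have e1 : ∑ k ∈ range (n+1), a (n - k) * (θ k - θ (k+1))
        = (∑ k ∈ range (n+1), a (n - k) * θ k) - ∑ k ∈ range (n+1), a (n - k) * θ (k+1) := by
      rw [← Finset.sum_sub_distrib]
      exact Finset.sum_congr rfl fun i _ => by ring
    have e2 : ∑ k ∈ range (n+2), a (n + 1 - k) * θ k
        = ∑ k ∈ range (n+1), a (n - k) * θ (k+1) + a (n+1) * θ 0 := by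
      rw [Finset.sum_range_succ' (fun k => a (n + 1 - k) * θ k) (n+1)]
      simp only [Nat.succ_sub_succ, Nat.sub_zero]
    have e3 : S (n+1) = ∑ k ∈ range (n+1), a (n - k) * θ (k+1) + a (n+1) * θ 0 := by
      rw [hSrefl (n+1)]; exact e2
    rw [e1, ← hSrefl n]
    linarith [e3, hS n]
  have hθ0pos : 0 ≤ θ 0 := by
    rw [hθ0, ha0, div_one, hμ]
    have h1 : 0 < τ ^ α := Real.rpow_pos_of_pos hτ α
    have h2 : 0 < Real.Gamma (2 - α) := Real.Gamma_pos_of_pos (by linarith)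
    positivity
  have hD : ∀ n : ℕ, 0 ≤ θ n - θ (n+1) := by
    intro n
    induction n using Nat.strong_induction_on with
    | _ n ih =>
      have hsplit := hkey n
      rw [Finset.sum_range_succ, Nat.sub_self, ha0, one_mul] at hsplit
      have hbound : ∑ k ∈ range n, a (n - k) * (θ k - θ (k+1)) ≤ a (n+1) * θ 0 := by
        match n with
        | 0 => simpa using mul_nonneg (hapos 1).le hθ0pos
        | (m+1) =>
          have hterm : ∀ k ∈ range (m+1), a (m+1-k) * (θ k - θ (k+1)) ≤
              (a (m+2) / a (m+1)) * (a (m - k) * (θ k - θ (k+1))) := by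
            intro k hk
            simp only [Finset.mem_range] at hk
            have hDk : 0 ≤ θ k - θ (k+1) := ih k (by omega)
            have hrk := hr (m - k) (m+1) (by omega)
            rw [show m - k + 1 = m + 1 - k by omega] at hrk
            rw [div_mul_eq_mul_div, le_div_iff₀ (hapos (m+1))]
            calc a (m+1-k) * (θ k - θ (k+1)) * a (m+1)
                = (a (m+1-k) * a (m+1)) * (θ k - θ (k+1)) := by ring
              _ ≤ (a (m-k) * a (m+2)) * (θ k - θ (k+1)) := mul_le_mul_of_nonneg_right hrk hDk
              _ = a (m+2) * (a (m-k) * (θ k - θ (k+1))) := by ring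
          calc ∑ k ∈ range (m+1), a (m+1-k) * (θ k - θ (k+1))
              ≤ ∑ k ∈ range (m+1), (a (m+2) / a (m+1)) * (a (m-k) * (θ k - θ (k+1))) :=
                Finset.sum_le_sum hterm
            _ = (a (m+2) / a (m+1)) * ∑ k ∈ range (m+1), a (m-k) * (θ k - θ (k+1)) := by
                rw [Finset.mul_sum]
            _ = (a (m+2) / a (m+1)) * (a (m+1) * θ 0) := by rw [hkey m]
            _ = a (m+2) * θ 0 := by
                rw [div_mul_eq_mul_div, mul_comm (a (m+1)) (θ 0), ← mul_assoc,
                  mul_div_assoc, div_self (ne_of_gt (hapos (m+1))), mul_one]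
      linarith
  intro n
  linarith [hD n]
end

section
/- For 1 ≤ n ≤ N, the sum of the multipliers satisfies Σ_{i=1}^{n} θ_{n-i} ≤ t_n^α / Γ(1+α), where t_n = nτ. -/
open Finset MeasureTheory Set intervalIntegral

/- ### Auxiliary analytic lemmas -/

/-- Chebyshev's integral inequality on a unit-length interval, for an antitone
nonnegative `f` and a monotone `g`. -/
lemma l1aux_cheb {f g : ℝ → ℝ} {x : ℝ}
    (hf : IntervalIntegrable f volume x (x + 1))
    (hg : IntervalIntegrable g volume x (x + 1))
    (hfg : IntervalIntegrable (fun t => f t * g t) volume x (x + 1))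
    (hfa : ∀ s ∈ Ioo x (x + 1), ∀ t ∈ Ioo x (x + 1), s ≤ t → f t ≤ f s)
    (hgm : ∀ s ∈ Ioo x (x + 1), ∀ t ∈ Ioo x (x + 1), s ≤ t → g s ≤ g t)
    (hf0 : ∀ t ∈ Ioo x (x + 1), 0 ≤ f t) :
    (∫ t in x..(x + 1), f t * g t) ≤ (∫ t in x..(x + 1), f t) * ∫ t in x..(x + 1), g t := by
  have hle : x ≤ x + 1 := by linarith
  have hIm : MeasurableSet (Ioo x (x + 1)) := measurableSet_Ioo
  have hvol : volume (Ioo x (x + 1)) = 1 := by rw [Real.volume_Ioo]; norm_num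
  have hvolt : volume (Ioo x (x + 1)) < ⊤ := by rw [hvol]; exact ENNReal.one_lt_top
  have hf' : IntegrableOn f (Ioo x (x + 1)) volume := (hf.1).mono_set Set.Ioo_subset_Ioc_self
  have hg' : IntegrableOn g (Ioo x (x + 1)) volume := (hg.1).mono_set Set.Ioo_subset_Ioc_self
  have hfg' : IntegrableOn (fun t => f t * g t) (Ioo x (x + 1)) volume :=
    (hfg.1).mono_set Set.Ioo_subset_Ioc_self
  rw [intervalIntegral.integral_of_le hle, intervalIntegral.integral_of_le hle,
    intervalIntegral.integral_of_le hle, MeasureTheory.integral_Ioc_eq_integral_Ioo,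
    MeasureTheory.integral_Ioc_eq_integral_Ioo, MeasureTheory.integral_Ioc_eq_integral_Ioo]
  set M : ℝ := ∫ t in Ioo x (x + 1), g t with hM
  obtain ⟨K, hK⟩ : ∃ K : ℝ, ∀ t ∈ Ioo x (x + 1), f t * (g t - M) ≤ K * (g t - M) := by
    by_cases hS : {t | t ∈ Ioo x (x + 1) ∧ g t ≤ M}.Nonempty
    · obtain ⟨s₀, hs₀⟩ := hS
      have hbdd : BddAbove {t | t ∈ Ioo x (x + 1) ∧ g t ≤ M} :=
        ⟨x + 1, fun u hu => (hu.1.2).le⟩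
      set x₀ := sSup {t | t ∈ Ioo x (x + 1) ∧ g t ≤ M} with hx₀
      have hx₀le : x₀ ≤ x + 1 := csSup_le ⟨s₀, hs₀⟩ fun u hu => (hu.1.2).le
      have hxlt : x < x₀ := lt_of_lt_of_le hs₀.1.1 (le_csSup hbdd hs₀)
      have hlow : ∀ t ∈ Ioo x (x + 1), t < x₀ → g t ≤ M := by
        intro t htI htl
        obtain ⟨u, huS, htu⟩ := exists_lt_of_lt_csSup ⟨s₀, hs₀⟩ htl
        exact le_trans (hgm t htI u huS.1 htu.le) huS.2
      have hhigh : ∀ t ∈ Ioo x (x + 1), x₀ < t → M ≤ g t := by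
        intro t htI hgt
        by_contra hcon
        push_neg at hcon
        exact absurd (le_csSup hbdd ⟨htI, hcon.le⟩) (not_le.2 hgt)
      rcases lt_or_eq_of_le hx₀le with hx₀lt | hx₀eq
      · refine ⟨f x₀, fun t htI => ?_⟩
        have hx₀I : x₀ ∈ Ioo x (x + 1) := ⟨hxlt, hx₀lt⟩
        rcases lt_trichotomy t x₀ with h | h | h
        · exact mul_le_mul_of_nonpos_right (hfa t htI x₀ hx₀I h.le)
            (sub_nonpos.2 (hlow t htI h))
        · rw [h]
        · exact mul_le_mul_of_nonneg_right (hfa x₀ hx₀I t htI h.le)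
            (sub_nonneg.2 (hhigh t htI h))
      · refine ⟨0, fun t htI => ?_⟩
        have hgle : g t ≤ M := hlow t htI (by rw [← hx₀eq] at htI; exact htI.2)
        have h2 : f t * (g t - M) ≤ 0 :=
          mul_nonpos_iff.2 (Or.inl ⟨hf0 t htI, sub_nonpos.2 hgle⟩)
        simpa using h2
    · exfalso
      have hall : ∀ t ∈ Ioo x (x + 1), M < g t := by
        intro t htI
        by_contra hcon
        push_neg at hcon
        exact hS ⟨t, htI, hcon⟩
      have hconst : IntegrableOn (fun _ : ℝ => M) (Ioo x (x + 1)) volume :=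
        integrableOn_const hvolt.ne
      have hint : IntegrableOn (fun t => g t - M) (Ioo x (x + 1)) volume := hg'.sub hconst
      have hae : 0 ≤ᵐ[volume.restrict (Ioo x (x + 1))] fun t => g t - M := by
        filter_upwards [MeasureTheory.ae_restrict_mem hIm] with t htI
        exact sub_nonneg.2 (hall t htI).le
      have hpos : 0 < ∫ t in Ioo x (x + 1), (g t - M) := by
        rw [MeasureTheory.setIntegral_pos_iff_support_of_nonneg_ae hae hint]
        refine lt_of_lt_of_le (b := volume (Ioo x (x + 1))) ?_ (measure_mono ?_)
        · show (0:ENNReal) < volume (Ioo x (x + 1))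
          rw [hvol]
          exact zero_lt_one
        · intro t htI
          exact ⟨ne_of_gt (sub_pos.2 (hall t htI)), htI⟩
      have hzero : ∫ t in Ioo x (x + 1), (g t - M) = 0 := by
        rw [MeasureTheory.integral_sub hg' hconst, MeasureTheory.setIntegral_const, MeasureTheory.measureReal_def, hvol]
        simp [hM]
      linarith
  have hconst : IntegrableOn (fun _ : ℝ => K * M) (Ioo x (x + 1)) volume :=
    integrableOn_const hvolt.ne
  have hstep : ∫ t in Ioo x (x + 1), (f t * g t - f t * M)
      ≤ ∫ t in Ioo x (x + 1), (K * g t - K * M) := by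
    refine MeasureTheory.setIntegral_mono_on (hfg'.sub (hf'.mul_const M))
      ((hg'.const_mul K).sub hconst) hIm fun t htI => ?_
    have h1 := hK t htI
    nlinarith [h1]
  have hL : ∫ t in Ioo x (x + 1), (f t * g t - f t * M)
      = (∫ t in Ioo x (x + 1), f t * g t) - (∫ t in Ioo x (x + 1), f t) * M := by
    rw [MeasureTheory.integral_sub hfg' (hf'.mul_const M), MeasureTheory.integral_mul_const]
  have hR : ∫ t in Ioo x (x + 1), (K * g t - K * M) = 0 := by
    rw [MeasureTheory.integral_sub (hg'.const_mul K) hconst,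
      MeasureTheory.integral_const_mul, MeasureTheory.setIntegral_const, MeasureTheory.measureReal_def, hvol]
    simp [hM]
  rw [hL, hR] at hstep
  linarith

lemma l1aux_beta_integrable {α : ℝ} (hα0 : 0 < α) (hα1 : α < 1) {c : ℝ} (hc : 0 < c) :
    IntervalIntegrable (fun t : ℝ => t ^ (α - 1) * (c - t) ^ (-α)) volume 0 c := by
  have hm : (0:ℝ) < c / 2 := by linarith
  have hmeas : Measurable (fun t : ℝ => t ^ (α - 1) * (c - t) ^ (-α)) := by fun_prop
  have h1 : IntervalIntegrable (fun t : ℝ => t ^ (α - 1) * (c - t) ^ (-α)) volume 0 (c/2) := by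
    have hgi : IntervalIntegrable (fun t : ℝ => (c/2) ^ (-α) * t ^ (α - 1)) volume 0 (c/2) :=
      (intervalIntegrable_rpow' (by linarith)).const_mul _
    refine hgi.mono_fun hmeas.aestronglyMeasurable.restrict ?_
    rw [Set.uIoc_of_le hm.le]
    filter_upwards [MeasureTheory.ae_restrict_mem measurableSet_Ioc] with t ht
    have ht0 : 0 < t := ht.1
    have htc : t ≤ c / 2 := ht.2
    have hb : (c - t) ^ (-α) ≤ (c/2) ^ (-α) :=
      Real.rpow_le_rpow_of_nonpos hm (by linarith) (by linarith)
    have hA : 0 ≤ t ^ (α - 1) := Real.rpow_nonneg ht0.le _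
    have hB : 0 ≤ (c - t) ^ (-α) := Real.rpow_nonneg (by linarith) _
    rw [Real.norm_eq_abs, Real.norm_eq_abs, abs_of_nonneg (mul_nonneg hA hB),
      abs_of_nonneg (mul_nonneg (Real.rpow_nonneg hm.le _) hA)]
    calc t ^ (α - 1) * (c - t) ^ (-α) ≤ t ^ (α - 1) * (c/2) ^ (-α) :=
          mul_le_mul_of_nonneg_left hb hA
      _ = (c/2) ^ (-α) * t ^ (α - 1) := mul_comm _ _
  have h2 : IntervalIntegrable (fun t : ℝ => t ^ (α - 1) * (c - t) ^ (-α)) volume (c/2) c := by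
    have hg0 : IntervalIntegrable (fun s : ℝ => s ^ (-α)) volume 0 (c/2) :=
      intervalIntegrable_rpow' (by linarith)
    have hg1 := hg0.comp_sub_left c
    rw [sub_zero] at hg1
    have hgi : IntervalIntegrable (fun t : ℝ => (c/2) ^ (α - 1) * (c - t) ^ (-α)) volume
        (c/2) c := (hg1.symm.mono_set (by
          rw [Set.uIcc_of_le (by linarith : c - c/2 ≤ c), Set.uIcc_of_le (by linarith : c/2 ≤ c)]
          rw [show c - c/2 = c/2 by ring])).const_mul _
    refine hgi.mono_fun hmeas.aestronglyMeasurable.restrict ?_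
    rw [Set.uIoc_of_le (by linarith : c/2 ≤ c)]
    filter_upwards [MeasureTheory.ae_restrict_mem measurableSet_Ioc] with t ht
    have ht0 : c/2 < t := ht.1
    have htc : t ≤ c := ht.2
    have hb : t ^ (α - 1) ≤ (c/2) ^ (α - 1) :=
      Real.rpow_le_rpow_of_nonpos hm ht0.le (by linarith)
    have hA : 0 ≤ t ^ (α - 1) := Real.rpow_nonneg (by linarith) _
    have hB : 0 ≤ (c - t) ^ (-α) := Real.rpow_nonneg (by linarith) _
    rw [Real.norm_eq_abs, Real.norm_eq_abs, abs_of_nonneg (mul_nonneg hA hB),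
      abs_of_nonneg (mul_nonneg (Real.rpow_nonneg hm.le _) hB)]
    exact mul_le_mul_of_nonneg_right hb hB
  exact h1.trans h2

lemma l1aux_beta_value {α : ℝ} (hα0 : 0 < α) (hα1 : α < 1) {c : ℝ} (hc : 0 < c) :
    ∫ t in (0:ℝ)..c, t ^ (α - 1) * (c - t) ^ (-α) = Real.Gamma α * Real.Gamma (1 - α) := by
  have hs : 0 < ((α:ℂ)).re := by simpa using hα0
  have ht : 0 < ((1:ℂ) - (α:ℂ)).re := by
    simp only [Complex.sub_re, Complex.one_re, Complex.ofReal_re]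
    linarith
  have hB := Complex.Gamma_mul_Gamma_eq_betaIntegral hs ht
  rw [show (α:ℂ) + ((1:ℂ) - (α:ℂ)) = 1 by ring, Complex.Gamma_one, one_mul] at hB
  have hscaled := Complex.betaIntegral_scaled (α:ℂ) ((1:ℂ) - (α:ℂ)) hc
  rw [show (α:ℂ) + ((1:ℂ) - (α:ℂ)) - 1 = 0 by ring, Complex.cpow_zero, one_mul] at hscaled
  have hreal : (∫ x in (0:ℝ)..c, (x:ℂ) ^ ((α:ℂ) - 1) * ((c:ℂ) - (x:ℂ)) ^ (((1:ℂ) - (α:ℂ)) - 1))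
      = ((∫ t in (0:ℝ)..c, t ^ (α - 1) * (c - t) ^ (-α) : ℝ) : ℂ) := by
    rw [← intervalIntegral.integral_ofReal]
    refine intervalIntegral.integral_congr fun x hx => ?_
    rw [Set.uIcc_of_le hc.le] at hx
    have h1 : ((x ^ (α - 1) * (c - x) ^ (-α) : ℝ) : ℂ)
        = ((x ^ (α - 1) : ℝ) : ℂ) * (((c - x) ^ (-α) : ℝ) : ℂ) := by push_cast; ring
    rw [h1, Complex.ofReal_cpow hx.1 (α - 1), Complex.ofReal_cpow (by linarith [hx.2]) (-α)]
    push_cast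
    ring_nf
  rw [hreal] at hscaled
  rw [← hscaled] at hB
  rw [show (1:ℂ) - (α:ℂ) = (((1 - α : ℝ)):ℂ) by push_cast; ring, Complex.Gamma_ofReal,
    Complex.Gamma_ofReal, ← Complex.ofReal_mul] at hB
  exact_mod_cast hB.symm

lemma l1aux_interval_cheb {α : ℝ} (hα0 : 0 < α) (hα1 : α < 1) (p q : ℕ) :
    α * (1 - α) *
        (∫ t in (p:ℝ)..((p:ℝ) + 1), t ^ (α - 1) * ((((p:ℝ) + (q:ℝ) + 1)) - t) ^ (-α))
      ≤ (((p:ℝ) + 1) ^ α - (p:ℝ) ^ α) * (((q:ℝ) + 1) ^ (1 - α) - (q:ℝ) ^ (1 - α)) := by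
  set c : ℝ := (p:ℝ) + (q:ℝ) + 1 with hc
  have hp0 : (0:ℝ) ≤ (p:ℝ) := Nat.cast_nonneg p
  have hq0 : (0:ℝ) ≤ (q:ℝ) := Nat.cast_nonneg q
  have hcpos : 0 < c := by rw [hc]; positivity
  have hp1c : (p:ℝ) + 1 ≤ c := by rw [hc]; linarith
  have hα0' : α ≠ 0 := ne_of_gt hα0
  have h1α' : (1:ℝ) - α ≠ 0 := by linarith
  have hf : IntervalIntegrable (fun t : ℝ => t ^ (α - 1)) volume (p:ℝ) ((p:ℝ) + 1) :=
    intervalIntegrable_rpow' (by linarith)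
  have hg : IntervalIntegrable (fun t : ℝ => (c - t) ^ (-α)) volume (p:ℝ) ((p:ℝ) + 1) := by
    have h1 : IntervalIntegrable (fun s : ℝ => s ^ (-α)) volume (q:ℝ) ((q:ℝ) + 1) :=
      intervalIntegrable_rpow' (by linarith)
    have h2 := h1.comp_sub_left c
    rw [show c - (q:ℝ) = (p:ℝ) + 1 by rw [hc]; ring,
      show c - ((q:ℝ) + 1) = (p:ℝ) by rw [hc]; ring] at h2
    exact h2.symm
  have hfg : IntervalIntegrable (fun t : ℝ => t ^ (α - 1) * (c - t) ^ (-α)) volume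
      (p:ℝ) ((p:ℝ) + 1) := by
    refine (l1aux_beta_integrable hα0 hα1 hcpos).mono_set ?_
    rw [Set.uIcc_of_le (by linarith : (p:ℝ) ≤ (p:ℝ) + 1), Set.uIcc_of_le hcpos.le]
    exact Set.Icc_subset_Icc hp0 hp1c
  have hcheb : (∫ t in (p:ℝ)..((p:ℝ) + 1), t ^ (α - 1) * (c - t) ^ (-α))
      ≤ (∫ t in (p:ℝ)..((p:ℝ) + 1), t ^ (α - 1)) * ∫ t in (p:ℝ)..((p:ℝ) + 1), (c - t) ^ (-α) := by
    refine l1aux_cheb hf hg hfg ?_ ?_ ?_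
    · intro s hs t ht hst
      exact Real.rpow_le_rpow_of_nonpos (lt_of_le_of_lt hp0 hs.1) hst (by linarith)
    · intro s hs t ht hst
      exact Real.rpow_le_rpow_of_nonpos (by linarith [ht.2] : 0 < c - t) (by linarith)
        (by linarith)
    · intro t ht
      exact Real.rpow_nonneg (le_of_lt (lt_of_le_of_lt hp0 ht.1)) _
  have hIf : ∫ t in (p:ℝ)..((p:ℝ) + 1), t ^ (α - 1) = (((p:ℝ) + 1) ^ α - (p:ℝ) ^ α) / α := by
    rw [integral_rpow (Or.inl (by linarith))]
    norm_num
  have hIg : ∫ t in (p:ℝ)..((p:ℝ) + 1), (c - t) ^ (-α)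
      = (((q:ℝ) + 1) ^ (1 - α) - (q:ℝ) ^ (1 - α)) / (1 - α) := by
    rw [intervalIntegral.integral_comp_sub_left (fun s : ℝ => s ^ (-α)) c,
      show c - ((p:ℝ) + 1) = (q:ℝ) by rw [hc]; ring,
      show c - (p:ℝ) = (q:ℝ) + 1 by rw [hc]; ring,
      integral_rpow (Or.inl (by linarith))]
    rw [show -α + 1 = 1 - α by ring]
  rw [hIf, hIg] at hcheb
  refine le_trans (mul_le_mul_of_nonneg_left hcheb
    (mul_nonneg hα0.le (by linarith))) (le_of_eq ?_)
  field_simp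

lemma l1aux_kernel_lb {α : ℝ} (hα0 : 0 < α) (hα1 : α < 1) (i : ℕ) (hi : 1 ≤ i) :
    Real.Gamma (2 - α) * Real.Gamma (1 + α)
      ≤ ∑ j ∈ Finset.Icc 1 i,
          (((i:ℝ) - (j:ℝ) + 1) ^ (1 - α) - ((i:ℝ) - (j:ℝ)) ^ (1 - α)) *
            ((j:ℝ) ^ α - ((j:ℝ) - 1) ^ α) := by
  have hipos : (0:ℝ) < (i:ℝ) := by exact_mod_cast hi
  have hadj : ∀ k < i, IntervalIntegrable (fun t : ℝ => t ^ (α - 1) * ((i:ℝ) - t) ^ (-α))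
      volume ((fun k : ℕ => (k:ℝ)) k) ((fun k : ℕ => (k:ℝ)) (k + 1)) := by
    intro k hk
    refine (l1aux_beta_integrable hα0 hα1 hipos).mono_set ?_
    simp only []
    rw [Set.uIcc_of_le (by push_cast; linarith : ((k:ℕ):ℝ) ≤ ((k+1:ℕ):ℝ)),
      Set.uIcc_of_le hipos.le]
    exact Set.Icc_subset_Icc (by positivity) (by exact_mod_cast hk)
  have hsum := intervalIntegral.sum_integral_adjacent_intervals (μ := volume) hadj
  simp only [Nat.cast_zero, Nat.cast_add, Nat.cast_one] at hsum
  have hGeq : Real.Gamma (2 - α) * Real.Gamma (1 + α)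
      = α * (1 - α) * (Real.Gamma α * Real.Gamma (1 - α)) := by
    rw [show (2:ℝ) - α = (1 - α) + 1 by ring, Real.Gamma_add_one (by linarith : (1:ℝ) - α ≠ 0),
      show (1:ℝ) + α = α + 1 by ring, Real.Gamma_add_one hα0.ne']
    ring
  rw [show Finset.Icc 1 i = Finset.Ico 1 (i+1) from (Finset.Ico_add_one_right_eq_Icc 1 i).symm,
    Finset.sum_Ico_eq_sum_range, show i + 1 - 1 = i from rfl,
    hGeq, ← l1aux_beta_value hα0 hα1 hipos, ← hsum, Finset.mul_sum]
  refine Finset.sum_le_sum fun k hk => ?_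
  rw [Finset.mem_range] at hk
  have hq : ((i - 1 - k : ℕ):ℝ) = (i:ℝ) - 1 - (k:ℝ) := by
    have h0 : (i - 1 - k) + (1 + k) = i := by omega
    have h' := congrArg (Nat.cast (R := ℝ)) h0
    push_cast at h'
    linarith
  have hc := l1aux_interval_cheb hα0 hα1 k (i - 1 - k)
  rw [hq, show (k:ℝ) + ((i:ℝ) - 1 - (k:ℝ)) + 1 = (i:ℝ) by ring] at hc
  have e1 : (i:ℝ) - ((1+k:ℕ):ℝ) + 1 = ((i:ℝ) - 1 - (k:ℝ)) + 1 := by push_cast; ring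
  have e2 : (i:ℝ) - ((1+k:ℕ):ℝ) = (i:ℝ) - 1 - (k:ℝ) := by push_cast; ring
  have e4 : ((1+k:ℕ):ℝ) - 1 = (k:ℝ) := by push_cast; ring
  have e3 : ((1+k:ℕ):ℝ) = (k:ℝ) + 1 := by push_cast; ring
  rw [e1, e2, e4, e3]
  exact le_trans hc (le_of_eq (mul_comm _ _))

/-- For `1 ≤ n ≤ N`, the sum of the multipliers satisfies
`Σ_{i=1}^{n} θ (n-i) ≤ t_n^α / Γ(1+α)` where `t_n = nτ`. -/
theorem l1_multipliers_sum_bound (α τ : ℝ) (hα0 : 0 < α) (hα1 : α < 1) (hτ : 0 < τ)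
    (N : ℕ) (μ : ℝ) (hμ : μ = τ ^ α * Real.Gamma (2 - α))
    (a : ℕ → ℝ) (ha : ∀ i : ℕ, a i = ((i : ℝ) + 1) ^ (1 - α) - (i : ℝ) ^ (1 - α))
    (θ : ℕ → ℝ) (hθ0 : θ 0 = μ / a 0)
    (hθ : ∀ n : ℕ, 1 ≤ n →
      θ n = (a 0)⁻¹ * ∑ i ∈ Finset.Icc 1 n, (a (i - 1) - a i) * θ (n - i)) :
    ∀ n : ℕ, 1 ≤ n → n ≤ N →
      (∑ i ∈ Finset.Icc 1 n, θ (n - i))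
        ≤ ((n : ℝ) * τ) ^ α / Real.Gamma (1 + α) := by
  intro n hn1 _
  have h1α : (0:ℝ) < 1 - α := by linarith
  have ha0 : a 0 = 1 := by
    rw [ha 0]
    simp [Real.zero_rpow (by linarith : 1 - α ≠ 0)]
  have hμpos : 0 < μ := by
    rw [hμ]
    exact mul_pos (Real.rpow_pos_of_pos hτ α) (Real.Gamma_pos_of_pos (by linarith))
  have hθ0' : θ 0 = μ := by rw [hθ0, ha0, div_one]
  -- a is antitone (consecutive terms)
  have hamono : ∀ i : ℕ, a (i + 1) ≤ a i := by
    intro i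
    have hc := (Real.concaveOn_rpow (le_of_lt h1α) (by linarith)).2
      (Set.mem_Ici.2 (Nat.cast_nonneg i))
      (show (i:ℝ) + 2 ∈ Set.Ici (0:ℝ) by
        simp only [Set.mem_Ici]; positivity)
      (by norm_num : (0:ℝ) ≤ 1/2) (by norm_num : (0:ℝ) ≤ 1/2) (by norm_num)
    simp only [smul_eq_mul] at hc
    have harg : (1:ℝ)/2 * (i:ℝ) + 1/2 * ((i:ℝ) + 2) = (i:ℝ) + 1 := by ring
    rw [harg] at hc
    rw [ha (i+1), ha i]
    push_cast
    rw [show (i:ℝ) + 1 + 1 = (i:ℝ) + 2 by ring]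
    linarith
  -- θ is nonnegative
  have hθnn : ∀ m : ℕ, 0 ≤ θ m := by
    intro m
    induction m using Nat.strong_induction_on with
    | _ m ih =>
      match m with
      | 0 => rw [hθ0']; exact hμpos.le
      | (m + 1) =>
        rw [hθ (m+1) (by omega), ha0, inv_one, one_mul]
        apply Finset.sum_nonneg
        intro i hi
        rw [Finset.mem_Icc] at hi
        apply mul_nonneg
        · have h := hamono (i - 1)
          rw [Nat.sub_add_cancel hi.1] at h
          linarith
        · exact ih (m + 1 - i) (by omega)
  -- the convolution identity
  have hconv : ∀ m : ℕ, ∑ i ∈ Finset.range (m + 1), a i * θ (m - i) = μ := by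
    intro m
    induction m with
    | zero => simp [ha0, hθ0']
    | succ m ihm =>
      rw [Finset.sum_range_succ']
      simp only [Nat.sub_zero, ha0, one_mul]
      rw [hθ (m+1) (by omega), ha0, inv_one, one_mul]
      rw [show Finset.Icc 1 (m+1) = Finset.Ico 1 (m+2) from (Finset.Ico_add_one_right_eq_Icc 1 (m+1)).symm,
        Finset.sum_Ico_eq_sum_range]
      simp only [Nat.succ_sub_succ_eq_sub, Nat.add_sub_cancel_left,
        show m + 2 - 1 = m + 1 from rfl]
      have hidx : ∀ k : ℕ, m + 1 - (1 + k) = m - k := fun k => by omega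
      simp only [hidx]
      rw [← Finset.sum_add_distrib, ← ihm]
      exact Finset.sum_congr rfl fun k _ => by ring
  -- bridge to real-subtraction form of `a`
  have haR : ∀ i j : ℕ, j ≤ i →
      a (i - j) = ((i:ℝ) - (j:ℝ) + 1) ^ (1 - α) - ((i:ℝ) - (j:ℝ)) ^ (1 - α) := by
    intro i j hji
    rw [ha (i - j)]
    rw [Nat.cast_sub hji]
  set G : ℝ := Real.Gamma (2 - α) * Real.Gamma (1 + α) with hG
  have hGpos : 0 < G :=
    mul_pos (Real.Gamma_pos_of_pos (by linarith)) (Real.Gamma_pos_of_pos (by linarith))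
  -- kernel lower bound in terms of `a`
  have hw : ∀ i : ℕ, 1 ≤ i →
      G ≤ ∑ j ∈ Finset.Icc 1 i, a (i - j) * ((j:ℝ) ^ α - ((j:ℝ) - 1) ^ α) := by
    intro i hi
    refine le_trans (l1aux_kernel_lb hα0 hα1 i hi) (le_of_eq ?_)
    refine Finset.sum_congr rfl fun j hj => ?_
    rw [Finset.mem_Icc] at hj
    rw [haR i j hj.2]
  -- the summation identity
  have hid : ∑ i ∈ Finset.Icc 1 n,
      θ (n - i) * (∑ j ∈ Finset.Icc 1 i, a (i - j) * ((j:ℝ) ^ α - ((j:ℝ) - 1) ^ α))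
      = μ * (n:ℝ) ^ α := by
    have hinner : ∀ j : ℕ, 1 ≤ j → j ≤ n →
        ∑ i ∈ Finset.Icc j n, a (i - j) * θ (n - i) = μ := by
      intro j hj1 hjn
      rw [show Finset.Icc j n = Finset.Ico j (n+1) from (Finset.Ico_add_one_right_eq_Icc j n).symm,
        Finset.sum_Ico_eq_sum_range]
      have h1 : n + 1 - j = (n - j) + 1 := by omega
      rw [h1]
      have h2 : ∀ k : ℕ, a (j + k - j) * θ (n - (j + k)) = a k * θ ((n - j) - k) := by
        intro k
        congr 2 <;> omega
      rw [Finset.sum_congr rfl fun k _ => h2 k]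
      exact hconv (n - j)
    calc ∑ i ∈ Finset.Icc 1 n,
          θ (n - i) * (∑ j ∈ Finset.Icc 1 i, a (i - j) * ((j:ℝ) ^ α - ((j:ℝ) - 1) ^ α))
        = ∑ i ∈ Finset.Ico 1 (n+1), ∑ j ∈ Finset.Ico 1 (i+1),
            θ (n - i) * (a (i - j) * ((j:ℝ) ^ α - ((j:ℝ) - 1) ^ α)) := by
          rw [Finset.Ico_add_one_right_eq_Icc]
          exact Finset.sum_congr rfl fun i _ => by rw [Finset.Ico_add_one_right_eq_Icc, Finset.mul_sum]
      _ = ∑ j ∈ Finset.Ico 1 (n+1), ∑ i ∈ Finset.Ico j (n+1),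
            θ (n - i) * (a (i - j) * ((j:ℝ) ^ α - ((j:ℝ) - 1) ^ α)) :=
          (Finset.sum_Ico_Ico_comm 1 (n+1)
            (fun j i => θ (n - i) * (a (i - j) * ((j:ℝ) ^ α - ((j:ℝ) - 1) ^ α)))).symm
      _ = ∑ j ∈ Finset.Icc 1 n, ((j:ℝ) ^ α - ((j:ℝ) - 1) ^ α) *
            ∑ i ∈ Finset.Icc j n, a (i - j) * θ (n - i) := by
          rw [Finset.Ico_add_one_right_eq_Icc]
          refine Finset.sum_congr rfl fun j hj => ?_
          rw [Finset.Ico_add_one_right_eq_Icc, Finset.mul_sum]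
          exact Finset.sum_congr rfl fun i _ => by ring
      _ = ∑ j ∈ Finset.Icc 1 n, ((j:ℝ) ^ α - ((j:ℝ) - 1) ^ α) * μ := by
          refine Finset.sum_congr rfl fun j hj => ?_
          rw [Finset.mem_Icc] at hj
          rw [hinner j hj.1 hj.2]
      _ = μ * ∑ j ∈ Finset.Icc 1 n, ((j:ℝ) ^ α - ((j:ℝ) - 1) ^ α) := by
          rw [← Finset.sum_mul]; ring
      _ = μ * (n:ℝ) ^ α := by
          congr 1
          rw [show Finset.Icc 1 n = Finset.Ico 1 (n+1) from (Finset.Ico_add_one_right_eq_Icc 1 n).symm,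
            Finset.sum_Ico_eq_sum_range, show n + 1 - 1 = n from rfl]
          have hterm : ∀ k : ℕ, (((1+k:ℕ):ℝ)) ^ α - (((1+k:ℕ):ℝ) - 1) ^ α
              = (((k+1:ℕ):ℝ)) ^ α - ((k:ℕ):ℝ) ^ α := by
            intro k
            have e1 : ((1+k:ℕ):ℝ) = ((k+1:ℕ):ℝ) := by push_cast; ring
            have e2 : ((1+k:ℕ):ℝ) - 1 = ((k:ℕ):ℝ) := by push_cast; ring
            rw [e2, e1]
          rw [Finset.sum_congr rfl fun k _ => hterm k,
            Finset.sum_range_sub (f := fun k : ℕ => ((k:ℝ)) ^ α)]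
          simp [Real.zero_rpow hα0.ne']
  -- combine
  have hineq : G * (∑ i ∈ Finset.Icc 1 n, θ (n - i)) ≤ μ * (n:ℝ) ^ α := by
    rw [Finset.mul_sum, ← hid]
    refine Finset.sum_le_sum fun i hi => ?_
    rw [Finset.mem_Icc] at hi
    rw [mul_comm]
    exact mul_le_mul_of_nonneg_left (hw i hi.1) (hθnn _)
  have hfin : (∑ i ∈ Finset.Icc 1 n, θ (n - i)) ≤ μ * (n:ℝ) ^ α / G := by
    rw [le_div_iff₀ hGpos]
    linarith [hineq]
  refine hfin.trans (le_of_eq ?_)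
  rw [hμ, hG, Real.mul_rpow (Nat.cast_nonneg n) hτ.le]
  have h2 : Real.Gamma (2 - α) ≠ 0 := (Real.Gamma_pos_of_pos (by linarith)).ne'
  field_simp
end

section
/- For any β ≥ 0 and 1 ≤ n ≤ N, one has Σ_{i=1}^{n} i^{-β} θ_{n-i} ≤ τ^α K_{β,n} (n/2)^{α-1} + (2^{β-α}/α) τ^α n^{-β+α}, where K_{β,n} = 1 + (1 - n^{1-β})/(β-1) if β ≠ 1 and K_{β,n} = 1 + ln n if β = 1. -/
set_option linter.unusedSectionVars false
set_option maxHeartbeats 1000000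

open Finset intervalIntegral MeasureTheory

lemma myCS (u v : ℝ → ℝ) (hu : IntervalIntegrable (fun s => u s ^ 2) volume 0 1)
    (hv : IntervalIntegrable (fun s => v s ^ 2) volume 0 1)
    (huv : IntervalIntegrable (fun s => u s * v s) volume 0 1)
    (hC : 0 < ∫ s in (0:ℝ)..1, v s ^ 2) :
    (∫ s in (0:ℝ)..1, u s * v s) ^ 2 ≤ (∫ s in (0:ℝ)..1, u s ^ 2) * ∫ s in (0:ℝ)..1, v s ^ 2 := by
  set A := ∫ s in (0:ℝ)..1, u s ^ 2
  set B := ∫ s in (0:ℝ)..1, u s * v s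
  set C := ∫ s in (0:ℝ)..1, v s ^ 2
  have key : ∀ lam : ℝ, 0 ≤ A - 2*lam*B + lam^2*C := by
    intro lam
    have h0 : 0 ≤ ∫ s in (0:ℝ)..1, (u s - lam * v s)^2 :=
      intervalIntegral.integral_nonneg (by norm_num) (fun x _ => sq_nonneg _)
    have hexp : (∫ s in (0:ℝ)..1, (u s - lam * v s)^2)
        = A - 2*lam*B + lam^2*C := by
      have : (fun s => (u s - lam * v s)^2)
          = fun s => (u s ^2 - (2*lam) * (u s * v s)) + lam^2 * (v s ^2) := by
        funext s; ring
      rw [this, intervalIntegral.integral_add (hu.sub (huv.const_mul _)) (hv.const_mul _),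
        intervalIntegral.integral_sub hu (huv.const_mul _),
        intervalIntegral.integral_const_mul, intervalIntegral.integral_const_mul]
    linarith [hexp ▸ h0]
  have := key (B / C)
  have h2 : A - 2*(B/C)*B + (B/C)^2*C = A - B^2/C := by field_simp; ring
  rw [h2] at this
  have : B^2/C ≤ A := by linarith
  calc B^2 = B^2/C*C := by field_simp
  _ ≤ A*C := mul_le_mul_of_nonneg_right this hC.le

lemma contOn (c e : ℝ) (hc : 0 < c) : ContinuousOn (fun s : ℝ => (s + c) ^ e) (Set.uIcc 0 1) := by
  apply ContinuousOn.rpow_const (by fun_prop)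
  intro x hx
  rw [Set.uIcc_of_le (by norm_num : (0:ℝ) ≤ 1)] at hx
  exact Or.inl (by nlinarith [hx.1])

lemma intgOn (c e : ℝ) (hc : 0 < c) :
    IntervalIntegrable (fun s : ℝ => (s + c) ^ e) volume 0 1 :=
  (contOn c e hc).intervalIntegrable


lemma logconv_int (α : ℝ) (hα0 : 0 < α) (c : ℝ) (hc : 1 ≤ c) :
    (∫ s in (0:ℝ)..1, (s + (c+1)) ^ (-α)) ^ 2
      ≤ (∫ s in (0:ℝ)..1, (s + c) ^ (-α)) * ∫ s in (0:ℝ)..1, (s + (c+2)) ^ (-α) := by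
  have hc0 : (0:ℝ) < c := lt_of_lt_of_le one_pos hc
  set u : ℝ → ℝ := fun s => (s + c) ^ (-α/2) with hu_def
  set v : ℝ → ℝ := fun s => (s + (c+2)) ^ (-α/2) with hv_def
  have hpos : ∀ s ∈ Set.Icc (0:ℝ) 1, 0 < s + c := fun s hs => by nlinarith [hs.1]
  have hu2 : ∀ s ∈ Set.Icc (0:ℝ) 1, u s ^ 2 = (s + c) ^ (-α) := by
    intro s hs
    rw [hu_def]
    rw [← Real.rpow_natCast ((s+c)^(-α/2)) 2, ← Real.rpow_mul (hpos s hs).le]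
    norm_num
  have hv2 : ∀ s ∈ Set.Icc (0:ℝ) 1, v s ^ 2 = (s + (c+2)) ^ (-α) := by
    intro s hs
    rw [hv_def]
    rw [← Real.rpow_natCast ((s+(c+2))^(-α/2)) 2, ← Real.rpow_mul (by nlinarith [hs.1])]
    norm_num
  -- pointwise: (s+c+1)^{-α} ≤ u s * v s
  have hptw : ∀ s ∈ Set.Icc (0:ℝ) 1, (s + (c+1)) ^ (-α) ≤ u s * v s := by
    intro s hs
    have h1 : (0:ℝ) < s + c := hpos s hs
    have h2 : (0:ℝ) < s + (c+2) := by nlinarith [hs.1]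
    rw [hu_def, hv_def, ← Real.mul_rpow h1.le h2.le]
    have hmul : (s+c) * (s+(c+2)) ≤ (s+(c+1))^2 := by nlinarith
    have : ((s+(c+1))^2 : ℝ) ^ (-α/2) ≤ ((s+c)*(s+(c+2))) ^ (-α/2) := by
      apply Real.rpow_le_rpow_of_nonpos (by nlinarith) hmul (by linarith)
    refine le_trans (le_of_eq ?_) this
    rw [← Real.rpow_natCast (s+(c+1)) 2, ← Real.rpow_mul (by nlinarith [hs.1])]
    norm_num
    ring_nf
  -- integrability
  have h01 : (0:ℝ) ≤ 1 := by norm_num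
  have hiu : IntervalIntegrable (fun s => u s ^ 2) volume 0 1 :=
    ((contOn c (-α/2) hc0).pow 2).intervalIntegrable
  have hiv : IntervalIntegrable (fun s => v s ^ 2) volume 0 1 :=
    ((contOn (c+2) (-α/2) (by linarith)).pow 2).intervalIntegrable
  have hiuv : IntervalIntegrable (fun s => u s * v s) volume 0 1 :=
    ((contOn c (-α/2) hc0).mul (contOn (c+2) (-α/2) (by linarith))).intervalIntegrable
  have hIcc : Set.uIcc (0:ℝ) 1 = Set.Icc 0 1 := Set.uIcc_of_le h01
  have hEqU : ∫ s in (0:ℝ)..1, u s ^ 2 = ∫ s in (0:ℝ)..1, (s + c) ^ (-α) :=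
    intervalIntegral.integral_congr (by rw [hIcc]; exact hu2)
  have hEqV : ∫ s in (0:ℝ)..1, v s ^ 2 = ∫ s in (0:ℝ)..1, (s + (c+2)) ^ (-α) :=
    intervalIntegral.integral_congr (by rw [hIcc]; exact hv2)
  have hCpos : 0 < ∫ s in (0:ℝ)..1, v s ^ 2 := by
    rw [hEqV]
    have hlow : ∀ s ∈ Set.Icc (0:ℝ) 1, ((c+3):ℝ) ^ (-α) ≤ (s + (c+2)) ^ (-α) := by
      intro s hs
      exact Real.rpow_le_rpow_of_nonpos (by nlinarith [hs.1]) (by nlinarith [hs.2]) (by linarith)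
    have := intervalIntegral.integral_mono_on h01
      (intervalIntegrable_const) (intgOn (c+2) (-α) (by linarith)) hlow
    rw [intervalIntegral.integral_const] at this
    have hpc : (0:ℝ) < ((c+3):ℝ) ^ (-α) := Real.rpow_pos_of_pos (by linarith) _
    calc (0:ℝ) < ((c+3):ℝ) ^ (-α) := hpc
    _ ≤ _ := by calc ((c+3):ℝ) ^ (-α) = ((1:ℝ) - 0) • ((c+3):ℝ) ^ (-α) := by norm_num
                    _ ≤ _ := this
  have hmono : (∫ s in (0:ℝ)..1, (s + (c+1)) ^ (-α)) ≤ ∫ s in (0:ℝ)..1, u s * v s := by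
    apply intervalIntegral.integral_mono_on h01 (intgOn (c+1) (-α) (by linarith)) hiuv hptw
  have hnn : 0 ≤ ∫ s in (0:ℝ)..1, (s + (c+1)) ^ (-α) :=
    intervalIntegral.integral_nonneg h01 (fun x hx => Real.rpow_nonneg (by nlinarith [hx.1]) _)
  have hcs := myCS u v hiu hiv hiuv hCpos
  calc (∫ s in (0:ℝ)..1, (s + (c+1)) ^ (-α)) ^ 2 ≤ (∫ s in (0:ℝ)..1, u s * v s)^2 :=
        pow_le_pow_left₀ hnn hmono 2
  _ ≤ (∫ s in (0:ℝ)..1, u s ^ 2) * ∫ s in (0:ℝ)..1, v s ^ 2 := hcs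
  _ = _ := by rw [hEqU, hEqV]

lemma rpow_intgOn (c d β : ℝ) (hc : 0 < c) (hcd : c ≤ d) :
    IntervalIntegrable (fun t : ℝ => t ^ (-β)) volume c d := by
  apply ContinuousOn.intervalIntegrable
  apply ContinuousOn.rpow_const (by fun_prop)
  intro x hx
  rw [Set.uIcc_of_le hcd] at hx
  exact Or.inl (by nlinarith [hx.1])

lemma sumK (β : ℝ) (hβ : 0 ≤ β) (k n : ℕ) (hk1 : 1 ≤ k) (hkn : k ≤ n) :
    ∑ i ∈ Finset.Icc 1 k, (i:ℝ) ^ (-β)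
      ≤ (if β = 1 then 1 + Real.log n else 1 + (1 - (n : ℝ) ^ (1 - β)) / (β - 1)) := by
  have hn1 : (1:ℝ) ≤ (n:ℝ) := by exact_mod_cast Nat.one_le_cast.2 (le_trans hk1 hkn)
  have hkr : (1:ℝ) ≤ (k:ℝ) := by exact_mod_cast hk1
  have hkn' : (k:ℝ) ≤ (n:ℝ) := by exact_mod_cast hkn
  -- Step 1: sum ≤ 1 + ∫_1^k t^(-β)
  have hstep1 : ∑ i ∈ Finset.Icc 1 k, (i:ℝ) ^ (-β) ≤ 1 + ∫ t in (1:ℝ)..(k:ℝ), t ^ (-β) := by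
    have h01 := Finset.sum_Ioc_consecutive (fun i : ℕ => (i:ℝ)^(-β)) (Nat.zero_le 1) hk1
    have hone : ∑ i ∈ Finset.Ioc (0:ℕ) 1, ((i:ℝ))^(-β) = 1 := by
      rw [show Finset.Ioc (0:ℕ) 1 = {1} by decide, Finset.sum_singleton]
      norm_num
    have hicc : Finset.Icc 1 k = Finset.Ioc 0 k := Finset.Icc_add_one_left_eq_Ioc 0 k
    have hsplit : ∑ i ∈ Finset.Icc 1 k, (i:ℝ) ^ (-β)
        = (1:ℝ) + ∑ i ∈ Finset.Ioc 1 k, (i:ℝ) ^ (-β) := by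
      rw [hicc, ← h01, hone]
    rw [hsplit]
    gcongr
    -- ∑_{i ∈ Ioc 1 k} i^{-β} ≤ ∫_1^k
    have hreidx : ∑ i ∈ Finset.Ioc 1 k, (i:ℝ) ^ (-β)
        = ∑ j ∈ range (k-1), ((j:ℝ)+2) ^ (-β) := by
      rw [← (show Finset.Icc 2 k = Finset.Ioc 1 k from Finset.Icc_add_one_left_eq_Ioc 1 k), show Finset.Icc 2 k = Finset.Ico 2 (k+1) by rw [Finset.Ico_add_one_right_eq_Icc],
        Finset.sum_Ico_eq_sum_range, show k+1-2 = k-1 from by omega]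
      apply Finset.sum_congr rfl
      intro j _
      congr 1
      push_cast
      ring
    rw [hreidx]
    have hterm : ∀ j ∈ range (k-1), ((j:ℝ)+2) ^ (-β)
        ≤ ∫ t in ((j:ℝ)+1)..((j:ℝ)+2), t ^ (-β) := by
      intro j _
      have h1 : ((j:ℝ)+2) ^ (-β) = ∫ t in ((j:ℝ)+1)..((j:ℝ)+2), ((j:ℝ)+2) ^ (-β) := by
        rw [intervalIntegral.integral_const]
        norm_num
      rw [h1]
      apply intervalIntegral.integral_mono_on (by linarith)
        (intervalIntegrable_const) (rpow_intgOn _ _ β (by positivity) (by linarith))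
      intro x hx
      exact Real.rpow_le_rpow_of_nonpos (by linarith [hx.1]) hx.2 (by linarith)
    have hadj : ∑ j ∈ range (k-1), ∫ t in ((j:ℝ)+1)..((j:ℝ)+2), t ^ (-β)
        = ∫ t in (1:ℝ)..(k:ℝ), t ^ (-β) := by
      have := intervalIntegral.sum_integral_adjacent_intervals
        (a := fun j : ℕ => ((j:ℝ)+1)) (μ := volume) (f := fun t : ℝ => t ^ (-β)) (n := k-1)
        (fun j _ => rpow_intgOn _ _ β (by positivity) (by push_cast; linarith))
      norm_num at this
      rw [show ((((k-1):ℕ)):ℝ)+1 = (k:ℝ) by push_cast [Nat.cast_sub hk1]; ring] at this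
      rw [← this]
      apply Finset.sum_congr rfl
      intro j _
      congr 1
      push_cast
      ring
    calc ∑ j ∈ range (k-1), ((j:ℝ)+2) ^ (-β)
        ≤ ∑ j ∈ range (k-1), ∫ t in ((j:ℝ)+1)..((j:ℝ)+2), t ^ (-β) := Finset.sum_le_sum hterm
    _ = _ := hadj
  -- Step 2: ∫_1^k ≤ ∫_1^n
  have hstep2 : (∫ t in (1:ℝ)..(k:ℝ), t ^ (-β)) ≤ ∫ t in (1:ℝ)..(n:ℝ), t ^ (-β) := by
    rw [← intervalIntegral.integral_add_adjacent_intervals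
      (rpow_intgOn _ _ β one_pos hkr) (rpow_intgOn _ _ β (by linarith) hkn')]
    have : 0 ≤ ∫ t in ((k:ℝ))..(n:ℝ), t ^ (-β) :=
      intervalIntegral.integral_nonneg hkn' (fun x hx => Real.rpow_nonneg (by linarith [hx.1]) _)
    linarith
  -- Step 3: compute ∫_1^n
  have hval : (∫ t in (1:ℝ)..(n:ℝ), t ^ (-β))
      = (if β = 1 then Real.log n else (1 - (n : ℝ) ^ (1 - β)) / (β - 1)) := by
    by_cases hb1 : β = 1
    · rw [if_pos hb1, hb1]
      have : ∀ t ∈ Set.uIcc (1:ℝ) (n:ℝ), t ^ (-(1:ℝ)) = t⁻¹ := by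
        intro t _
        rw [Real.rpow_neg_one]
      rw [intervalIntegral.integral_congr this, integral_inv]
      · rw [div_one]
      · rw [Set.uIcc_of_le hn1]
        intro h
        linarith [h.1]
    · rw [if_neg hb1]
      have h0 : (0:ℝ) ∉ Set.uIcc (1:ℝ) (n:ℝ) := by
        rw [Set.uIcc_of_le hn1]
        intro h
        linarith [h.1]
      rw [integral_rpow (Or.inr ⟨by intro h; apply hb1; linarith [neg_eq_iff_eq_neg.mp h], h0⟩)]
      rw [Real.one_rpow, show (-β+1) = 1-β by ring]
      have hb : β - 1 ≠ 0 := by intro h; apply hb1; linarith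
      have hb' : (1:ℝ) - β ≠ 0 := by intro h; apply hb1; linarith
      field_simp
      ring
  calc ∑ i ∈ Finset.Icc 1 k, (i:ℝ) ^ (-β) ≤ 1 + ∫ t in (1:ℝ)..(k:ℝ), t ^ (-β) := hstep1
  _ ≤ 1 + ∫ t in (1:ℝ)..(n:ℝ), t ^ (-β) := by linarith
  _ = _ := by rw [hval]; split_ifs <;> ring


section PowSum
variable {α : ℝ} (hα0 : 0 < α) (hα1 : α < 1)
include hα0 hα1

lemma bern (j : ℕ) : α * ((j:ℝ)+1)^(α-1) ≤ ((j:ℝ)+1)^α - (j:ℝ)^α := by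
  have hy : (0:ℝ) < (j:ℝ)+1 := by positivity
  have hjnn : (0:ℝ) ≤ (j:ℝ) := Nat.cast_nonneg j
  have hgm := Real.geom_mean_le_arith_mean2_weighted hα0.le (by linarith : (0:ℝ) ≤ 1-α)
    (div_nonneg hjnn hy.le) zero_le_one (by ring)
  rw [Real.one_rpow, mul_one] at hgm
  have h2 := mul_le_mul_of_nonneg_right hgm (Real.rpow_nonneg hy.le α)
  rw [Real.div_rpow hjnn hy.le, div_mul_cancel₀ _ (ne_of_gt (Real.rpow_pos_of_pos hy α))] at h2
  have hyy : ((j:ℝ)+1)^α = ((j:ℝ)+1)^(α-1) * ((j:ℝ)+1) := by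
    rw [Real.rpow_sub_one (ne_of_gt hy)]; field_simp
  have h4 : (α * ((j:ℝ)/((j:ℝ)+1)) + (1-α)*1) * ((j:ℝ)+1)^α
      = α*((j:ℝ)*(((j:ℝ)+1)^α/((j:ℝ)+1))) + (1-α)*((j:ℝ)+1)^α := by ring
  have h5 : ((j:ℝ)+1)^α/((j:ℝ)+1) = ((j:ℝ)+1)^(α-1) := by
    rw [hyy]; field_simp
  rw [h4, h5, hyy] at h2
  nlinarith [h2]

lemma powsum (m : ℕ) : ∑ j ∈ range m, ((j:ℝ)+1)^(α-1) ≤ (m:ℝ)^α / α := by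
  have htel : ∑ j ∈ range m, (((j:ℝ)+1)^α - (j:ℝ)^α) = (m:ℝ)^α := by
    have hf : ∀ j ∈ range m, (((j:ℝ)+1)^α - (j:ℝ)^α)
        = (fun i : ℕ => ((i:ℝ))^α) (j+1) - (fun i : ℕ => ((i:ℝ))^α) j := by
      intro j _
      simp only
      push_cast
      ring
    rw [Finset.sum_congr rfl hf, Finset.sum_range_sub (fun i : ℕ => ((i:ℝ))^α)]
    simp [Real.zero_rpow (ne_of_gt hα0)]
  have hstep : ∀ j ∈ range m, ((j:ℝ)+1)^(α-1) ≤ (((j:ℝ)+1)^α - (j:ℝ)^α)/α := by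
    intro j _
    rw [le_div_iff₀ hα0]
    calc ((j:ℝ)+1)^(α-1) * α = α * ((j:ℝ)+1)^(α-1) := mul_comm _ _
    _ ≤ _ := bern hα0 hα1 j
  calc ∑ j ∈ range m, ((j:ℝ)+1)^(α-1) ≤ ∑ j ∈ range m, ((((j:ℝ)+1)^α - (j:ℝ)^α)/α) :=
        Finset.sum_le_sum hstep
  _ = (∑ j ∈ range m, (((j:ℝ)+1)^α - (j:ℝ)^α))/α := by rw [Finset.sum_div]
  _ = (m:ℝ)^α / α := by rw [htel]
end PowSum

section AFacts
variable {α : ℝ} (hα0 : 0 < α) (hα1 : α < 1) {a : ℕ → ℝ}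
  (ha : ∀ i : ℕ, a i = ((i : ℝ) + 1) ^ (1 - α) - (i : ℝ) ^ (1 - α))

include hα0 hα1 ha

lemma a_pos' : ∀ i, 0 < a i := by
  intro i
  rw [ha i]
  have : ((i:ℝ)) ^ (1-α) < ((i:ℝ)+1) ^ (1-α) :=
    Real.rpow_lt_rpow (Nat.cast_nonneg i) (by linarith) (by linarith)
  linarith

lemma a_dec' : ∀ i, a (i+1) ≤ a i := by
  intro i
  have hc := (Real.concaveOn_rpow (by linarith : (0:ℝ) ≤ 1-α) (by linarith)).2
    (Set.mem_Ici.2 (Nat.cast_nonneg i) : (i:ℝ) ∈ Set.Ici (0:ℝ))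
    (Set.mem_Ici.2 (by positivity) : ((i:ℝ)+2) ∈ Set.Ici (0:ℝ))
    (by norm_num : (0:ℝ) ≤ 1/2) (by norm_num : (0:ℝ) ≤ 1/2) (by norm_num)
  simp only [smul_eq_mul] at hc
  rw [show (1/2 * (i:ℝ) + 1/2 * ((i:ℝ)+2)) = (i:ℝ)+1 by ring] at hc
  rw [ha i, ha (i+1)]
  push_cast
  rw [show ((i:ℝ)+1+1) = (i:ℝ)+2 by ring]
  linarith

lemma a_int' (k : ℕ) : a k = (1-α) * ∫ s in (0:ℝ)..1, (s + (k:ℝ)) ^ (-α) := by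
  have h1 : (∫ s in (0:ℝ)..1, (s + (k:ℝ)) ^ (-α)) = ∫ t in ((0:ℝ)+k)..((1:ℝ)+k), t ^ (-α) :=
    intervalIntegral.integral_comp_add_right (fun t => t ^ (-α)) (k:ℝ)
  have h2 : (∫ t in ((0:ℝ)+k)..((1:ℝ)+k), t ^ (-α))
      = (((1:ℝ)+k) ^ (-α+1) - ((0:ℝ)+k) ^ (-α+1)) / (-α+1) :=
    integral_rpow (Or.inl (by linarith))
  rw [ha k, h1, h2, show (-α+1) = 1-α by ring]
  have h3 : (1-α) * ((((1:ℝ)+k) ^ (1-α) - ((0:ℝ)+k) ^ (1-α)) / (1-α))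
      = ((1:ℝ)+k)^(1-α) - ((0:ℝ)+k)^(1-α) := by
    rw [mul_div_assoc']
    exact mul_div_cancel_left₀ _ (by intro h; apply absurd h; intro h2; linarith [sub_eq_zero.mp h2])
  rw [h3, show (1:ℝ)+(k:ℝ) = (k:ℝ)+1 by ring, show (0:ℝ)+(k:ℝ) = (k:ℝ) by ring]


lemma a_logconv : ∀ k, a (k+1) ^ 2 ≤ a k * a (k+2) := by
  intro k
  match k with
  | 0 =>
    set p := 1 - α with hp
    have h31 : a 3 ≤ a 1 := le_trans (a_dec' hα0 hα1 ha 2) (a_dec' hα0 hα1 ha 1)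
    have e1 : a 1 = (2:ℝ)^p - 1 := by
      rw [ha 1]; norm_num
    have e2 : a 2 = (3:ℝ)^p - (2:ℝ)^p := by
      rw [ha 2]; norm_num
    have e3 : a 3 = (4:ℝ)^p - (3:ℝ)^p := by
      rw [ha 3]; norm_num
    have e0 : a 0 = 1 := by
      rw [ha 0]; norm_num [Real.zero_rpow (show p ≠ 0 by intro h; linarith)]
    have h4 : (4:ℝ)^p = (2:ℝ)^p * (2:ℝ)^p := by
      rw [← Real.mul_rpow (by norm_num) (by norm_num)]; norm_num
    rw [e0, e1, e2, one_mul]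
    rw [e1, e3, h4] at h31
    nlinarith
  | (j+1) =>
    have hc : (1:ℝ) ≤ ((j:ℝ)+1) := by
      linarith [show (0:ℝ) ≤ (j:ℝ) from Nat.cast_nonneg j]
    have hli := logconv_int α hα0 ((j:ℝ)+1) hc
    have r0 := a_int' hα0 hα1 ha (j+1)
    have r1 := a_int' hα0 hα1 ha (j+2)
    have r2 := a_int' hα0 hα1 ha (j+3)
    push_cast at r0 r1 r2
    rw [show ((j:ℝ)+2) = ((j:ℝ)+1)+1 by ring] at r1
    rw [show ((j:ℝ)+3) = ((j:ℝ)+1)+2 by ring] at r2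
    rw [show (j+1+1) = j+2 by ring, show (j+1+2) = j+3 by ring]
    rw [r0, r1, r2]
    have h1a : (0:ℝ) < 1 - α := by linarith
    have hmul := mul_le_mul_of_nonneg_left hli (by positivity : (0:ℝ) ≤ (1-α)^2)
    nlinarith [hmul]

lemma a_ratio : ∀ j k, j ≤ k → a k * a (j+1) ≤ a (k+1) * a j := by
  intro j k
  induction k with
  | zero => intro hj; interval_cases j; rw [mul_comm]
  | succ k IH =>
    intro hj
    rcases Nat.eq_or_lt_of_le hj with h | h
    · rw [h, mul_comm]
    · have hjk : j ≤ k := Nat.lt_succ_iff.mp h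
      have h1 := IH hjk
      have h2 := a_logconv hα0 hα1 ha k
      have hk := a_pos' hα0 hα1 ha k
      have hk1 := a_pos' hα0 hα1 ha (k+1)
      have hj0 := a_pos' hα0 hα1 ha j
      have hchain : a k * (a (k+1) * a (j+1)) ≤ a k * (a (k+2) * a j) := by
        nlinarith [mul_le_mul_of_nonneg_right h1 hk1.le, mul_le_mul_of_nonneg_right h2 hj0.le]
      have := le_of_mul_le_mul_left (by linarith [hchain] : a k * (a (k+1) * a (j+1)) ≤ a k * (a (k+2) * a j)) hk
      calc a (k+1) * a (j+1) = a (k+1) * a (j+1) := rfl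
      _ ≤ a (k+2) * a j := this
      _ = a (k+1+1) * a j := by norm_num

lemma a_sum (m : ℕ) : ∑ i ∈ range m, a i = (m:ℝ) ^ (1-α) := by
  have hf : ∀ i ∈ range m, a i = (fun i : ℕ => ((i:ℝ))^(1-α)) (i+1) - (fun i : ℕ => ((i:ℝ))^(1-α)) i := by
    intro i _
    simp only
    rw [ha i]
    push_cast
    ring
  rw [Finset.sum_congr rfl hf, Finset.sum_range_sub (fun i : ℕ => ((i:ℝ))^(1-α))]
  simp [Real.zero_rpow (show (1:ℝ)-α ≠ 0 by intro h; linarith)]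
end AFacts

section ThetaFacts
variable {α τ μ : ℝ} {a θ : ℕ → ℝ}
  (hα0 : 0 < α) (hα1 : α < 1) (hτ : 0 < τ)
  (hμ : μ = τ ^ α * Real.Gamma (2 - α))
  (ha : ∀ i : ℕ, a i = ((i : ℝ) + 1) ^ (1 - α) - (i : ℝ) ^ (1 - α))
  (hθ0 : θ 0 = μ / a 0)
  (hθ : ∀ n : ℕ, 1 ≤ n →
      θ n = (a 0)⁻¹ * ∑ i ∈ Finset.Icc 1 n, (a (i - 1) - a i) * θ (n - i))

include hα0 hα1 hτ hμ ha hθ0 hθ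

lemma mu_pos : 0 < μ := by
  rw [hμ]
  exact mul_pos (Real.rpow_pos_of_pos hτ α) (Real.Gamma_pos_of_pos (by linarith))

lemma theta_conv : ∀ n : ℕ, ∑ i ∈ range (n+1), a i * θ (n - i) = μ := by
  intro n
  induction n with
  | zero =>
    rw [Finset.sum_range_one]
    simp only [Nat.sub_zero, hθ0]
    have h0 : a 0 ≠ 0 := ne_of_gt (a_pos' hα0 hα1 ha 0)
    field_simp
  | succ n IH =>
    have ha0 := a_pos' hα0 hα1 ha 0
    have hrec := hθ (n+1) (by omega)
    have hIcc : ∑ i ∈ Finset.Icc 1 (n+1), (a (i - 1) - a i) * θ (n + 1 - i)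
        = ∑ i ∈ range (n+1), (a i - a (i+1)) * θ (n - i) := by
      rw [show Finset.Icc 1 (n+1) = Finset.Ico 1 (n+2) by exact (Finset.Ico_add_one_right_eq_Icc 1 (n+1)).symm,
        Finset.sum_Ico_eq_sum_range]
      apply Finset.sum_congr (by norm_num)
      intro i _
      congr 1
      · congr 2 <;> omega
      · congr 1; omega
    rw [Finset.sum_range_succ']
    have h1 : ∀ i ∈ range (n+1), a (i+1) * θ (n + 1 - (i+1)) = a (i+1) * θ (n-i) := by
      intro i _; congr 2; omega
    rw [Finset.sum_congr rfl h1]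
    have h2 : a 0 * θ (n + 1 - 0) = ∑ i ∈ range (n+1), (a i - a (i+1)) * θ (n - i) := by
      simp only [Nat.sub_zero]
      rw [hrec, hIcc, ← mul_assoc, mul_inv_cancel₀ (ne_of_gt ha0), one_mul]
    rw [h2, ← Finset.sum_add_distrib, ← IH]
    apply Finset.sum_congr rfl
    intro i _
    ring

lemma theta_nonneg : ∀ n, 0 ≤ θ n := by
  intro n
  induction n using Nat.strong_induction_on with
  | _ n IH =>
    match n with
    | 0 =>
      rw [hθ0]
      exact le_of_lt (div_pos (mu_pos hα0 hα1 hτ hμ ha hθ0 hθ)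
        (a_pos' hα0 hα1 ha 0))
    | (m+1) =>
      rw [hθ (m+1) (by omega)]
      apply mul_nonneg (inv_nonneg.2 (a_pos' hα0 hα1 ha 0).le)
      apply Finset.sum_nonneg
      intro i hi
      simp only [Finset.mem_Icc] at hi
      apply mul_nonneg
      · have := a_dec' hα0 hα1 ha (i-1)
        have hi1 : i - 1 + 1 = i := by omega
        rw [hi1] at this
        linarith
      · exact IH _ (by omega)

lemma theta_diff_rel : ∀ m : ℕ,
    ∑ i ∈ range (m+1), a i * (θ (m-i) - θ (m-i+1)) = a (m+1) * θ 0 := by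
  intro m
  have c1 := theta_conv hα0 hα1 hτ hμ ha hθ0 hθ m
  have c2 := theta_conv hα0 hα1 hτ hμ ha hθ0 hθ (m+1)
  rw [Finset.sum_range_succ] at c2
  have h1 : ∀ i ∈ range (m+1), a i * θ (m + 1 - i) = a i * θ (m-i+1) := by
    intro i hi
    simp only [Finset.mem_range] at hi
    congr 2
    omega
  rw [Finset.sum_congr rfl h1] at c2
  simp only [Nat.sub_self] at c2
  have : ∑ i ∈ range (m+1), a i * (θ (m-i) - θ (m-i+1))
      = (∑ i ∈ range (m+1), a i * θ (m-i)) - ∑ i ∈ range (m+1), a i * θ (m-i+1) := by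
    rw [← Finset.sum_sub_distrib]
    apply Finset.sum_congr rfl
    intro i _
    ring
  rw [this, c1]
  linarith

lemma theta_mono : ∀ m : ℕ, θ (m+1) ≤ θ m := by
  have hd : ∀ m : ℕ, 0 ≤ θ m - θ (m+1) := by
    intro m
    induction m using Nat.strong_induction_on with
    | _ m IH =>
      match m with
      | 0 =>
        have R0 := theta_diff_rel hα0 hα1 hτ hμ ha hθ0 hθ 0
        rw [Finset.sum_range_one] at R0
        simp only [Nat.sub_zero, Nat.zero_sub] at R0
        have ha0 := a_pos' hα0 hα1 ha 0
        have ha1 := a_pos' hα0 hα1 ha 1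
        have hθ0nn := theta_nonneg hα0 hα1 hτ hμ ha hθ0 hθ 0
        nlinarith [R0]
      | (m+1) =>
        have Rm1 := theta_diff_rel hα0 hα1 hτ hμ ha hθ0 hθ (m+1)
        have Rm := theta_diff_rel hα0 hα1 hτ hμ ha hθ0 hθ m
        rw [Finset.sum_range_succ'] at Rm1
        have e1 : ∀ i ∈ range (m+1),
            a (i+1) * (θ (m+1-(i+1)) - θ (m+1-(i+1)+1)) = a (i+1) * (θ (m-i) - θ (m-i+1)) := by
          intro i hi
          simp only [Finset.mem_range] at hi
          congr 3 <;> omega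
        rw [Finset.sum_congr rfl e1] at Rm1
        simp only [Nat.sub_zero] at Rm1
        -- Rm1 : ∑ i in range (m+1), a (i+1) * (θ (m-i) - θ (m-i+1)) + a 0 * (θ (m+1) - θ (m+2)) = a (m+2) * θ 0
        have key : a (m+1) * (a 0 * (θ (m+1) - θ (m+1+1)))
            = ∑ i ∈ range (m+1), (a (m+2) * a i - a (m+1) * a (i+1)) * (θ (m-i) - θ (m-i+1)) := by
          have h2 : a (m+1) * (a 0 * (θ (m+1) - θ (m+1+1)))
              = a (m+2) * (a (m+1) * θ 0)
                - a (m+1) * ∑ i ∈ range (m+1), a (i+1) * (θ (m-i) - θ (m-i+1)) := by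
            have : a 0 * (θ (m+1) - θ (m+1+1))
                = a (m+2) * θ 0 - ∑ i ∈ range (m+1), a (i+1) * (θ (m-i) - θ (m-i+1)) := by
              rw [show (m+1+1) = m+2 by omega] at *
              linarith [Rm1]
            rw [this]
            ring
          rw [h2, ← Rm, Finset.mul_sum, Finset.mul_sum, ← Finset.sum_sub_distrib]
          apply Finset.sum_congr rfl
          intro i _
          ring
        have hnn : 0 ≤ a (m+1) * (a 0 * (θ (m+1) - θ (m+1+1))) := by
          rw [key]
          apply Finset.sum_nonneg
          intro i hi
          simp only [Finset.mem_range] at hi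
          apply mul_nonneg
          · have := a_ratio hα0 hα1 ha i (m+1) (by omega)
            linarith
          · exact IH (m-i) (by omega)
        have ha0 := a_pos' hα0 hα1 ha 0
        have ham1 := a_pos' hα0 hα1 ha (m+1)
        nlinarith [hnn, mul_pos ham1 ha0]
  intro m
  linarith [hd m]

lemma theta_antitone : ∀ j m : ℕ, j ≤ m → θ m ≤ θ j := by
  have := antitone_nat_of_succ_le (theta_mono hα0 hα1 hτ hμ ha hθ0 hθ)
  intro j m h
  exact this h

lemma theta_ptw : ∀ m : ℕ, θ m ≤ μ * ((m:ℝ)+1) ^ (α-1) := by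
  intro m
  have hS : ∑ i ∈ range (m+1), a i = ((m:ℝ)+1) ^ (1-α) := by
    rw [a_sum hα0 hα1 ha (m+1)]
    push_cast
    norm_num
  have h1 : θ m * (((m:ℝ)+1) ^ (1-α)) ≤ μ := by
    rw [← theta_conv hα0 hα1 hτ hμ ha hθ0 hθ m, ← hS, Finset.mul_sum]
    apply Finset.sum_le_sum
    intro i hi
    simp only [Finset.mem_range] at hi
    have hmono := theta_antitone hα0 hα1 hτ hμ ha hθ0 hθ (m-i) m (by omega)
    have hai := (a_pos' hα0 hα1 ha i).le
    calc θ m * a i = a i * θ m := mul_comm _ _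
    _ ≤ a i * θ (m-i) := mul_le_mul_of_nonneg_left hmono hai
  have hx : (0:ℝ) < (m:ℝ)+1 := by positivity
  have hid : ((m:ℝ)+1) ^ (1-α) * ((m:ℝ)+1) ^ (α-1) = 1 := by
    rw [← Real.rpow_add hx]; norm_num
  have hp : 0 ≤ ((m:ℝ)+1) ^ (α-1) := Real.rpow_nonneg hx.le _
  calc θ m = θ m * (((m:ℝ)+1)^(1-α) * ((m:ℝ)+1)^(α-1)) := by rw [hid, mul_one]
  _ = (θ m * (((m:ℝ)+1)^(1-α))) * ((m:ℝ)+1)^(α-1) := by ring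
  _ ≤ μ * ((m:ℝ)+1)^(α-1) := mul_le_mul_of_nonneg_right h1 hp

lemma theta_cumsum : ∀ m : ℕ, ∑ j ∈ range m, θ j ≤ μ/α * (m:ℝ)^α := by
  intro m
  calc ∑ j ∈ range m, θ j ≤ ∑ j ∈ range m, μ * ((j:ℝ)+1)^(α-1) :=
        Finset.sum_le_sum (fun j _ => theta_ptw hα0 hα1 hτ hμ ha hθ0 hθ j)
  _ = μ * ∑ j ∈ range m, ((j:ℝ)+1)^(α-1) := by rw [Finset.mul_sum]
  _ ≤ μ * ((m:ℝ)^α/α) :=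
      mul_le_mul_of_nonneg_left (powsum hα0 hα1 m) (mu_pos hα0 hα1 hτ hμ ha hθ0 hθ).le
  _ = μ/α * (m:ℝ)^α := by ring
end ThetaFacts



lemma Gamma_two_sub_le_one {α : ℝ} (hα0 : 0 < α) (hα1 : α < 1) : Real.Gamma (2 - α) ≤ 1 := by
  have hc := Real.convexOn_Gamma.2 (by norm_num : (1:ℝ) ∈ Set.Ioi (0:ℝ))
    (by norm_num : (2:ℝ) ∈ Set.Ioi (0:ℝ)) hα0.le (by linarith : (0:ℝ) ≤ 1-α) (by ring)
  simp only [smul_eq_mul] at hc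
  rw [show α * 1 + (1-α) * 2 = 2 - α by ring, Real.Gamma_one, Real.Gamma_two] at hc
  linarith

/-- For `β ≥ 0` and `1 ≤ n ≤ N`,
`Σ_{i=1}^{n} i^{-β} θ (n-i) ≤ τ^α K_{β,n} (n/2)^{α-1} + (2^{β-α}/α) τ^α n^{-β+α}`,
where `K_{β,n} = 1 + (1 - n^{1-β})/(β-1)` if `β ≠ 1` and `K_{β,n} = 1 + ln n` if `β = 1`. -/
theorem l1_multipliers_weighted_sum_bound (α τ : ℝ) (hα0 : 0 < α) (hα1 : α < 1)
    (hτ : 0 < τ) (N : ℕ) (μ : ℝ) (hμ : μ = τ ^ α * Real.Gamma (2 - α))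
    (a : ℕ → ℝ) (ha : ∀ i : ℕ, a i = ((i : ℝ) + 1) ^ (1 - α) - (i : ℝ) ^ (1 - α))
    (θ : ℕ → ℝ) (hθ0 : θ 0 = μ / a 0)
    (hθ : ∀ n : ℕ, 1 ≤ n →
      θ n = (a 0)⁻¹ * ∑ i ∈ Finset.Icc 1 n, (a (i - 1) - a i) * θ (n - i))
    (β : ℝ) (hβ : 0 ≤ β) :
    ∀ n : ℕ, 1 ≤ n → n ≤ N →
      (∑ i ∈ Finset.Icc 1 n, (i : ℝ) ^ (-β) * θ (n - i))
        ≤ τ ^ α * (if β = 1 then 1 + Real.log n else 1 + (1 - (n : ℝ) ^ (1 - β)) / (β - 1))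
            * ((n : ℝ) / 2) ^ (α - 1)
          + (2 ^ (β - α) / α) * τ ^ α * (n : ℝ) ^ (-β + α) := by
  intro n hn1 _hnN
  have hμpos : 0 < μ := mu_pos hα0 hα1 hτ hμ ha hθ0 hθ
  have hμτ : μ ≤ τ ^ α := by
    rw [hμ]
    calc τ^α * Real.Gamma (2-α) ≤ τ^α * 1 :=
          mul_le_mul_of_nonneg_left (Gamma_two_sub_le_one hα0 hα1) (Real.rpow_pos_of_pos hτ α).le
    _ = τ^α := mul_one _
  set K := (if β = 1 then 1 + Real.log n else 1 + (1 - (n : ℝ) ^ (1 - β)) / (β - 1)) with hK_def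
  set h := n / 2 with hh_def
  set k := n - h with hk_def
  have hkn : k ≤ n := by omega
  have hk1 : 1 ≤ k := by omega
  have hnr : (1:ℝ) ≤ (n:ℝ) := by exact_mod_cast hn1
  have hn2pos : (0:ℝ) < (n:ℝ)/2 := by linarith
  have hhr : (h:ℝ) ≤ (n:ℝ)/2 := by
    have h1 : (2*h : ℕ) ≤ n := by omega
    have h2 := (Nat.cast_le (α := ℝ)).2 h1
    push_cast at h2
    linarith
  have hkr : (n:ℝ)/2 ≤ (k:ℝ) := by
    have h1 : n ≤ 2*k := by omega
    have h2 := (Nat.cast_le (α := ℝ)).2 h1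
    push_cast at h2
    linarith
  have hh2 : (n:ℝ) - 1 ≤ 2*(h:ℝ) := by
    have h1 : n ≤ 2*h + 1 := by omega
    have h2 := (Nat.cast_le (α := ℝ)).2 h1
    push_cast at h2
    linarith
  have hkcast : (k:ℝ) = (n:ℝ) - (h:ℝ) := by
    rw [hk_def, Nat.cast_sub (by omega)]
  have hicc : Finset.Icc 1 n = Finset.Ioc 0 n := Finset.Icc_add_one_left_eq_Ioc 0 n
  have hicck : Finset.Icc 1 k = Finset.Ioc 0 k := Finset.Icc_add_one_left_eq_Ioc 0 k
  have hsplit := Finset.sum_Ioc_consecutive (fun i : ℕ => (i:ℝ)^(-β) * θ (n-i)) (Nat.zero_le k) hkn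
  -- Part A : small i
  have hA : ∑ i ∈ Finset.Ioc 0 k, (i:ℝ)^(-β) * θ (n-i) ≤ τ^α * K * ((n:ℝ)/2)^(α-1) := by
    have hterm : ∀ i ∈ Finset.Ioc 0 k, (i:ℝ)^(-β) * θ (n-i)
        ≤ (i:ℝ)^(-β) * (μ * ((n:ℝ)/2)^(α-1)) := by
      intro i hi
      simp only [Finset.mem_Ioc] at hi
      apply mul_le_mul_of_nonneg_left _ (Real.rpow_nonneg (Nat.cast_nonneg i) _)
      have hp := theta_ptw hα0 hα1 hτ hμ ha hθ0 hθ (n-i)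
      have hcast : ((n-i:ℕ):ℝ) = (n:ℝ) - (i:ℝ) := by
        rw [Nat.cast_sub (le_trans hi.2 hkn)]
      have hik : (i:ℝ) ≤ (k:ℝ) := by exact_mod_cast hi.2
      have hge : (n:ℝ)/2 ≤ ((n-i:ℕ):ℝ) + 1 := by
        rw [hcast]
        have hik' : (i:ℝ) ≤ (n:ℝ) - (h:ℝ) := by rw [← hkcast]; exact hik
        linarith [hh2]
      calc θ (n-i) ≤ μ * (((n-i:ℕ):ℝ)+1)^(α-1) := hp
      _ ≤ μ * ((n:ℝ)/2)^(α-1) :=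
          mul_le_mul_of_nonneg_left
            (Real.rpow_le_rpow_of_nonpos hn2pos hge (by linarith)) hμpos.le
    have hsum1 : ∑ i ∈ Finset.Ioc 0 k, (i:ℝ)^(-β) * θ (n-i)
        ≤ (∑ i ∈ Finset.Ioc 0 k, (i:ℝ)^(-β)) * (μ * ((n:ℝ)/2)^(α-1)) := by
      rw [Finset.sum_mul]
      exact Finset.sum_le_sum hterm
    have hKb := sumK β hβ k n hk1 hkn
    rw [hicck] at hKb
    have hSnn : (0:ℝ) ≤ ∑ i ∈ Finset.Ioc 0 k, (i:ℝ)^(-β) :=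
      Finset.sum_nonneg (fun i _ => Real.rpow_nonneg (Nat.cast_nonneg i) _)
    have hpw : (0:ℝ) ≤ ((n:ℝ)/2)^(α-1) := Real.rpow_nonneg hn2pos.le _
    calc ∑ i ∈ Finset.Ioc 0 k, (i:ℝ)^(-β) * θ (n-i)
        ≤ (∑ i ∈ Finset.Ioc 0 k, (i:ℝ)^(-β)) * (μ * ((n:ℝ)/2)^(α-1)) := hsum1
    _ ≤ K * (τ^α * ((n:ℝ)/2)^(α-1)) := by
        apply mul_le_mul hKb (mul_le_mul_of_nonneg_right hμτ hpw)
          (mul_nonneg hμpos.le hpw) (le_trans hSnn hKb)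
    _ = τ^α * K * ((n:ℝ)/2)^(α-1) := by ring
  -- Part B : large i
  have hB : ∑ i ∈ Finset.Ioc k n, (i:ℝ)^(-β) * θ (n-i)
      ≤ 2^(β-α)/α * τ^α * (n:ℝ)^(-β+α) := by
    have hθnn := theta_nonneg hα0 hα1 hτ hμ ha hθ0 hθ
    have hterm : ∀ i ∈ Finset.Ioc k n, (i:ℝ)^(-β) * θ (n-i)
        ≤ ((n:ℝ)/2)^(-β) * θ (n-i) := by
      intro i hi
      simp only [Finset.mem_Ioc] at hi
      apply mul_le_mul_of_nonneg_right _ (hθnn _)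
      apply Real.rpow_le_rpow_of_nonpos hn2pos _ (by linarith : -β ≤ 0)
      have : (k:ℝ) ≤ (i:ℝ) := by exact_mod_cast hi.1.le
      linarith
    have hre : ∑ i ∈ Finset.Ioc k n, θ (n-i) = ∑ j ∈ range h, θ j := by
      apply Finset.sum_nbij' (i := fun i => n - i) (j := fun j => n - j)
      · intro i hi
        simp only [Finset.mem_Ioc] at hi
        simp only [Finset.mem_range]
        omega
      · intro j hj
        simp only [Finset.mem_range] at hj
        simp only [Finset.mem_Ioc]
        omega
      · intro i hi
        simp only [Finset.mem_Ioc] at hi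
        omega
      · intro j hj
        simp only [Finset.mem_range] at hj
        omega
      · intro i _
        rfl
    have hcum := theta_cumsum hα0 hα1 hτ hμ ha hθ0 hθ h
    have hpw : (0:ℝ) ≤ ((n:ℝ)/2)^(-β) := Real.rpow_nonneg hn2pos.le _
    have hμα : (0:ℝ) ≤ μ/α := by positivity
    calc ∑ i ∈ Finset.Ioc k n, (i:ℝ)^(-β) * θ (n-i)
        ≤ ∑ i ∈ Finset.Ioc k n, ((n:ℝ)/2)^(-β) * θ (n-i) := Finset.sum_le_sum hterm
    _ = ((n:ℝ)/2)^(-β) * ∑ i ∈ Finset.Ioc k n, θ (n-i) := by rw [Finset.mul_sum]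
    _ = ((n:ℝ)/2)^(-β) * ∑ j ∈ range h, θ j := by rw [hre]
    _ ≤ ((n:ℝ)/2)^(-β) * (μ/α * ((h:ℝ))^α) := by
        apply mul_le_mul_of_nonneg_left _ hpw
        exact hcum
    _ ≤ ((n:ℝ)/2)^(-β) * (μ/α * ((n:ℝ)/2)^α) := by
        apply mul_le_mul_of_nonneg_left _ hpw
        exact mul_le_mul_of_nonneg_left
          (Real.rpow_le_rpow (Nat.cast_nonneg h) hhr hα0.le) hμα
    _ ≤ 2^(β-α)/α * τ^α * (n:ℝ)^(-β+α) := by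
        have hnpos : (0:ℝ) < (n:ℝ) := by linarith
        have e1 : ((n:ℝ)/2)^(-β) * ((n:ℝ)/2)^α = ((n:ℝ)/2)^(-β+α) :=
          (Real.rpow_add hn2pos (-β) α).symm
        have e2 : ((n:ℝ)/2)^(-β+α) = (n:ℝ)^(-β+α) / (2:ℝ)^(-β+α) :=
          Real.div_rpow hnpos.le (by norm_num) _
        have e3 : ((2:ℝ)^(-β+α))⁻¹ = (2:ℝ)^(β-α) := by
          rw [← Real.rpow_neg (by norm_num : (0:ℝ) ≤ 2), show -(-β+α) = β-α by ring]
        have e4 : ((n:ℝ)/2)^(-β) * (μ/α * ((n:ℝ)/2)^α)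
            = μ/α * ((n:ℝ)^(-β+α) * (2:ℝ)^(β-α)) := by
          calc ((n:ℝ)/2)^(-β) * (μ/α * ((n:ℝ)/2)^α)
              = μ/α * (((n:ℝ)/2)^(-β) * ((n:ℝ)/2)^α) := by ring
          _ = μ/α * (((n:ℝ)/2)^(-β+α)) := by rw [e1]
          _ = μ/α * ((n:ℝ)^(-β+α) / (2:ℝ)^(-β+α)) := by rw [e2]
          _ = μ/α * ((n:ℝ)^(-β+α) * ((2:ℝ)^(-β+α))⁻¹) := by ring
          _ = μ/α * ((n:ℝ)^(-β+α) * (2:ℝ)^(β-α)) := by rw [e3]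
        rw [e4]
        have hfac : (0:ℝ) ≤ (n:ℝ)^(-β+α) * (2:ℝ)^(β-α) :=
          mul_nonneg (Real.rpow_nonneg hnpos.le _) (Real.rpow_nonneg (by norm_num) _)
        calc μ/α * ((n:ℝ)^(-β+α) * (2:ℝ)^(β-α))
            ≤ τ^α/α * ((n:ℝ)^(-β+α) * (2:ℝ)^(β-α)) := by
              apply mul_le_mul_of_nonneg_right _ hfac
              gcongr
        _ = 2^(β-α)/α * τ^α * (n:ℝ)^(-β+α) := by ring
  rw [hicc, ← hsplit]
  exact add_le_add hA hB
end

section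
/- For any sequence (u^i)_{i=0}^N in a complex normed vector space, the discrete fractional integral operator E^α applied to the L1 discrete derivative recovers the increment: E^α(D_τ^α u^n) = u^n - u^0 for n = 1,…,N, where D_τ^α u^n = μ^{-1}(a_0 u^n - Σ_{i=1}^{n-1}(a_{n-i-1}-a_{n-i}) u^i - a_{n-1} u^0) and E^α(v^n) = Σ_{i=1}^{n} θ_{n-i} v^i. -/
open Finset


private lemma sum_Icc_eq_sum_range'' {M : Type*} [AddCommMonoid M] (f : ℕ → M) (m n : ℕ) :
    ∑ i ∈ Finset.Icc m n, f i = ∑ i ∈ Finset.range (n + 1 - m), f (m + i) := by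
  rw [← Finset.Ico_add_one_right_eq_Icc, Finset.sum_Ico_eq_sum_range]

/-- For any sequence `(u^i)` in a complex normed vector space, the discrete fractional
integral operator `E^α` applied to the L1 discrete derivative recovers the increment:
`E^α (D_τ^α u^n) = u^n - u^0` for `n = 1,…,N`. -/
theorem l1_discrete_fundamental_theorem
    {E : Type*} [NormedAddCommGroup E] [NormedSpace ℂ E]
    (α τ : ℝ) (hα0 : 0 < α) (hα1 : α < 1) (hτ : 0 < τ)
    (N : ℕ) (μ : ℝ) (hμ : μ = τ ^ α * Real.Gamma (2 - α))
    (a : ℕ → ℝ) (ha : ∀ i : ℕ, a i = ((i : ℝ) + 1) ^ (1 - α) - (i : ℝ) ^ (1 - α))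
    (θ : ℕ → ℝ) (hθ0 : θ 0 = μ / a 0)
    (hθ : ∀ n : ℕ, 1 ≤ n →
      θ n = (a 0)⁻¹ * ∑ i ∈ Finset.Icc 1 n, (a (i - 1) - a i) * θ (n - i))
    (u : ℕ → E) (D : ℕ → E)
    (hD : ∀ n : ℕ, 1 ≤ n →
      D n = μ⁻¹ • (a 0 • u n - (∑ i ∈ Finset.Icc 1 (n - 1),
        (a (n - i - 1) - a (n - i)) • u i) - a (n - 1) • u 0)) :
    ∀ n : ℕ, 1 ≤ n → n ≤ N →
      (∑ i ∈ Finset.Icc 1 n, θ (n - i) • D i) = u n - u 0 := by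
  have h1α : (0:ℝ) < 1 - α := by linarith
  have ha0 : a 0 = 1 := by
    rw [ha]
    simp [Real.zero_rpow (ne_of_gt h1α)]
  have hμpos : 0 < μ := by
    have hg := Real.Gamma_pos_of_pos (by linarith : (0:ℝ) < 2 - α)
    rw [hμ]
    positivity
  have hμne : μ ≠ 0 := ne_of_gt hμpos
  -- Key convolution identity: ∑_{m=0}^p a m * θ (p - m) = μ
  have hS : ∀ p : ℕ, ∑ m ∈ Finset.range (p+1), a m * θ (p - m) = μ := by
    intro p
    induction p with
    | zero => simp [ha0, hθ0]
    | succ p ih =>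
      have hrec : θ (p+1) = ∑ m ∈ Finset.range (p+1), (a m - a (m+1)) * θ (p - m) := by
        rw [hθ (p+1) (by omega), ha0, inv_one, one_mul,
          sum_Icc_eq_sum_range'']
        have hr : p + 1 + 1 - 1 = p + 1 := by omega
        rw [hr]
        refine Finset.sum_congr rfl fun m _ => ?_
        have e1 : 1 + m - 1 = m := by omega
        have e2 : p + 1 - (1 + m) = p - m := by omega
        have e3 : 1 + m = m + 1 := by omega
        rw [e1, e2, e3]
      rw [Finset.sum_range_succ']
      have e4 : ∀ m : ℕ, p + 1 - (m + 1) = p - m := fun m => by omega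
      simp only [e4, Nat.sub_zero, ha0, one_mul]
      rw [hrec, ← Finset.sum_add_distrib, ← ih]
      refine Finset.sum_congr rfl fun m _ => ?_
      ring
  -- Telescoping form of the discrete derivative
  have hD' : ∀ i : ℕ, 1 ≤ i →
      μ • D i = ∑ k ∈ Finset.Icc 1 i, a (i - k) • (u k - u (k-1)) := by
    intro i hi
    obtain ⟨m, rfl⟩ : ∃ m, i = m + 1 := ⟨i - 1, by omega⟩
    rw [hD (m+1) hi, smul_smul, mul_inv_cancel₀ hμne, one_smul]
    have S1 : ∑ k ∈ Finset.Icc 1 (m+1), a (m+1-k) • u k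
        = (∑ k ∈ Finset.Icc 1 m, a (m+1-k) • u k) + a 0 • u (m+1) := by
      rw [Finset.sum_Icc_succ_top (by omega : 1 ≤ m+1)]
      norm_num
    have S2 : ∑ k ∈ Finset.Icc 1 (m+1), a (m+1-k) • u (k-1)
        = a m • u 0 + ∑ k ∈ Finset.Icc 1 m, a (m-k) • u k := by
      rw [sum_Icc_eq_sum_range'']
      have hr : m + 1 + 1 - 1 = m + 1 := by omega
      rw [hr]
      have step : ∀ t ∈ Finset.range (m+1),
          a (m+1-(1+t)) • u (1+t-1) = a (m - t) • u t := by
        intro t _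
        have e1 : m + 1 - (1 + t) = m - t := by omega
        have e2 : 1 + t - 1 = t := by omega
        rw [e1, e2]
      rw [Finset.sum_congr rfl step, Finset.sum_range_succ']
      rw [add_comm]
      congr 1
      rw [sum_Icc_eq_sum_range'']
      have hr2 : m + 1 - 1 = m := by omega
      rw [hr2]
      refine Finset.sum_congr rfl fun t _ => ?_
      have e1 : m - (t + 1) = m - (1 + t) := by omega
      have e2 : t + 1 = 1 + t := by omega
      rw [e1, e2]
    have S3 : ∑ k ∈ Finset.Icc 1 m, (a (m+1-k-1) - a (m+1-k)) • u k
        = (∑ k ∈ Finset.Icc 1 m, a (m-k) • u k)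
          - ∑ k ∈ Finset.Icc 1 m, a (m+1-k) • u k := by
      rw [← Finset.sum_sub_distrib]
      refine Finset.sum_congr rfl fun k hk => ?_
      have e1 : m + 1 - k - 1 = m - k := by omega
      rw [e1, sub_smul]
    have expand : ∑ k ∈ Finset.Icc 1 (m+1), a (m+1-k) • (u k - u (k-1))
        = (∑ k ∈ Finset.Icc 1 (m+1), a (m+1-k) • u k)
          - ∑ k ∈ Finset.Icc 1 (m+1), a (m+1-k) • u (k-1) := by
      rw [← Finset.sum_sub_distrib]
      exact Finset.sum_congr rfl fun k _ => smul_sub _ _ _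
    have e5 : m + 1 - 1 = m := by omega
    rw [expand, S1, S2, e5, S3]
    abel
  intro n hn _
  have key : μ • (∑ i ∈ Finset.Icc 1 n, θ (n - i) • D i) = μ • (u n - u 0) := by
    rw [Finset.smul_sum]
    calc ∑ i ∈ Finset.Icc 1 n, μ • θ (n-i) • D i
        = ∑ i ∈ Finset.Icc 1 n, ∑ k ∈ Finset.Icc 1 i,
            (θ (n-i) * a (i-k)) • (u k - u (k-1)) := by
          refine Finset.sum_congr rfl fun i hi => ?_
          have hi1 : 1 ≤ i := (Finset.mem_Icc.mp hi).1
          rw [smul_comm, hD' i hi1, Finset.smul_sum]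
          exact Finset.sum_congr rfl fun k _ => smul_smul _ _ _
      _ = ∑ k ∈ Finset.Icc 1 n, ∑ i ∈ Finset.Icc k n,
            (θ (n-i) * a (i-k)) • (u k - u (k-1)) := by
          refine Finset.sum_comm' fun i k => ?_
          simp only [Finset.mem_Icc]
          omega
      _ = ∑ k ∈ Finset.Icc 1 n, μ • (u k - u (k-1)) := by
          refine Finset.sum_congr rfl fun k hk => ?_
          rw [← Finset.sum_smul]
          congr 1
          obtain ⟨hk1, hk2⟩ := Finset.mem_Icc.mp hk
          rw [sum_Icc_eq_sum_range'']
          have hr : n + 1 - k = (n - k) + 1 := by omega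
          rw [hr, ← hS (n - k)]
          refine Finset.sum_congr rfl fun m _ => ?_
          have e1 : k + m - k = m := by omega
          have e2 : n - (k + m) = n - k - m := by omega
          rw [e1, e2, mul_comm]
      _ = μ • (u n - u 0) := by
          rw [← Finset.smul_sum]
          congr 1
          rw [sum_Icc_eq_sum_range'']
          have hr : n + 1 - 1 = n := by omega
          rw [hr]
          have step : ∀ t ∈ Finset.range n,
              u (1+t) - u (1+t-1) = u (t+1) - u t := by
            intro t _
            have e1 : 1 + t - 1 = t := by omega
            have e2 : 1 + t = t + 1 := by omega
            rw [e1, e2]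
          rw [Finset.sum_congr rfl step, Finset.sum_range_sub]
  exact smul_right_injective E hμne key
end

section
/- (Weakly singular convolution bound) For 0 < α < 1, β > 0, τ > 0, t_k = kτ, and integers 0 ≤ j < n-1, one has τ Σ_{i=j+1}^{n-1} t_{n-i}^{α-1} t_{i-j}^{β-1} ≤ B(α,β) t_{n-j}^{α+β-1}, where B is the Beta function. -/
open Finset

section WSCAux
open MeasureTheory intervalIntegral

lemma wsc_beta_scaled {α β a : ℝ} (hα : 0 < α) (hβ : 0 < β) (ha : 0 < a) :
    ∫ x in (0:ℝ)..a, x ^ (β - 1) * (a - x) ^ (α - 1) =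
      Real.Gamma α * Real.Gamma β / Real.Gamma (α + β) * a ^ (α + β - 1) := by
  have hb : 0 < (β:ℂ).re := by simpa using hβ
  have ha' : 0 < (α:ℂ).re := by simpa using hα
  have h1 := Complex.betaIntegral_scaled (β:ℂ) (α:ℂ) ha
  have h2 := Complex.Gamma_mul_Gamma_eq_betaIntegral hb ha'
  have hne : Complex.Gamma ((β:ℂ) + (α:ℂ)) ≠ 0 := by
    rw [show ((β:ℂ) + (α:ℂ)) = ((β + α : ℝ):ℂ) by push_cast; ring, Complex.Gamma_ofReal]
    exact_mod_cast (Real.Gamma_pos_of_pos (by linarith)).ne'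
  have key : (∫ x in (0:ℝ)..a, (x:ℂ) ^ ((β:ℂ) - 1) * ((a:ℂ) - x) ^ ((α:ℂ) - 1))
      = ((∫ x in (0:ℝ)..a, x ^ (β - 1) * (a - x) ^ (α - 1) : ℝ) : ℂ) := by
    rw [← intervalIntegral.integral_ofReal]
    refine intervalIntegral.integral_congr fun x hx => ?_
    rw [Set.uIcc_of_le ha.le] at hx
    rw [Complex.ofReal_mul, Complex.ofReal_cpow hx.1, Complex.ofReal_cpow (by linarith [hx.2])]
    push_cast
    ring
  have hb2 : Complex.betaIntegral (β:ℂ) (α:ℂ)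
      = Complex.Gamma β * Complex.Gamma α / Complex.Gamma ((β:ℂ) + (α:ℂ)) := by
    rw [eq_div_iff hne, mul_comm, ← h2]
  apply Complex.ofReal_injective
  rw [← key, h1, hb2]
  have e1 : ((β:ℂ) + (α:ℂ) - 1) = ((α + β - 1 : ℝ) : ℂ) := by push_cast; ring
  rw [e1, ← Complex.ofReal_cpow ha.le,
    show ((β:ℂ) + (α:ℂ)) = ((β + α : ℝ):ℂ) by push_cast; ring,
    Complex.Gamma_ofReal, Complex.Gamma_ofReal, Complex.Gamma_ofReal]
  rw [show β + α = α + β by ring]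
  push_cast
  ring

lemma wsc_intble {α β : ℝ} (hα0 : 0 < α) (hβ : 0 < β) {m : ℝ} (hm : 0 < m) :
    IntervalIntegrable (fun x => x ^ (β - 1) * (m - x) ^ (α - 1)) volume 0 m := by
  have A : IntervalIntegrable (fun x : ℝ => x ^ (β - 1)) volume 0 (m/2) :=
    intervalIntegral.intervalIntegrable_rpow' (by linarith)
  have A2 : ContinuousOn (fun x : ℝ => (m - x) ^ (α - 1)) (Set.uIcc 0 (m/2)) := by
    apply ContinuousOn.rpow_const ((continuous_const.sub continuous_id).continuousOn)
    intro x hx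
    rw [Set.uIcc_of_le (by linarith)] at hx
    exact Or.inl (by have := hx.2; intro h; simp only [Pi.sub_apply, id_eq] at h; linarith [sub_eq_zero.1 h])
  have hA := A.mul_continuousOn A2
  have B0 : IntervalIntegrable (fun x : ℝ => x ^ (α - 1)) volume 0 (m/2) :=
    intervalIntegral.intervalIntegrable_rpow' (by linarith)
  have B1 := (B0.comp_sub_left m).symm
  rw [show m - (m/2) = m/2 by ring, sub_zero] at B1
  have B2 : ContinuousOn (fun x : ℝ => x ^ (β - 1)) (Set.uIcc (m/2) m) := by
    apply ContinuousOn.rpow_const continuousOn_id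
    intro x hx
    rw [Set.uIcc_of_le (by linarith)] at hx
    exact Or.inl (by have := hx.1; intro h; simp only [id_eq] at h; rw [h] at this; linarith)
  have hB := B1.continuousOn_mul B2
  exact hA.trans hB

lemma wsc_deriv {α β m x : ℝ} (hx0 : 0 < x) (hxm : x < m) :
    HasDerivAt (fun y => y ^ (β - 1) * (m - y) ^ (α - 1))
      (x ^ (β - 2) * (m - x) ^ (α - 2) * ((β - 1) * m + (2 - α - β) * x)) x := by
  have hmx : (0:ℝ) < m - x := by linarith
  have h1 : HasDerivAt (fun y : ℝ => y ^ (β - 1)) ((β - 1) * x ^ (β - 1 - 1)) x :=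
    Real.hasDerivAt_rpow_const (Or.inl hx0.ne')
  have h2 : HasDerivAt (fun y : ℝ => m - y) (-1) x := (hasDerivAt_id x).const_sub m
  have h3 : HasDerivAt (fun y : ℝ => (m - y) ^ (α - 1)) ((α - 1) * (m - x) ^ (α - 1 - 1) * (-1)) x := by
    have := (Real.hasDerivAt_rpow_const (x := m - x) (p := α - 1) (Or.inl hmx.ne')).comp x h2
    simpa [Function.comp_def] using this
  have h4 := h1.mul h3
  refine h4.congr_deriv ?_
  have e1 : x ^ (β - 1) = x ^ (β - 2) * x := by
    rw [show β - 1 = (β - 2) + 1 by ring, Real.rpow_add_one hx0.ne']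
  have e2 : (m - x) ^ (α - 1) = (m - x) ^ (α - 2) * (m - x) := by
    rw [show α - 1 = (α - 2) + 1 by ring, Real.rpow_add_one hmx.ne']
  rw [show β - 1 - 1 = β - 2 by ring, show α - 1 - 1 = α - 2 by ring, e1, e2]
  ring

lemma wsc_mono {α β m c : ℝ}
    (hsign : ∀ x, 0 ≤ x → c ≤ x → x ≤ m → 0 ≤ (β - 1) * m + (2 - α - β) * x)
    {s t : ℝ} (hs : 0 < s) (hcs : c ≤ s) (hst : s ≤ t) (htm : t < m) :
    s ^ (β - 1) * (m - s) ^ (α - 1) ≤ t ^ (β - 1) * (m - t) ^ (α - 1) := by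
  have hsub : Set.Icc s t ⊆ Set.Ioo 0 m := fun x hx =>
    ⟨lt_of_lt_of_le hs hx.1, lt_of_le_of_lt hx.2 htm⟩
  have hmono := monotoneOn_of_deriv_nonneg (convex_Icc s t)
    (f := fun y => y ^ (β - 1) * (m - y) ^ (α - 1))
    (fun x hx => (wsc_deriv (hsub hx).1 (hsub hx).2).continuousAt.continuousWithinAt)
    (fun x hx => by
      rw [interior_Icc] at hx
      exact (wsc_deriv (hsub (Set.Ioo_subset_Icc_self hx)).1
        (hsub (Set.Ioo_subset_Icc_self hx)).2).differentiableAt.differentiableWithinAt)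
    (fun x hx => by
      rw [interior_Icc] at hx
      have hx' := hsub (Set.Ioo_subset_Icc_self hx)
      rw [(wsc_deriv hx'.1 hx'.2).deriv]
      have h1 : (0:ℝ) ≤ x ^ (β - 2) * (m - x) ^ (α - 2) :=
        mul_nonneg (Real.rpow_nonneg hx'.1.le _) (Real.rpow_nonneg (by linarith [hx'.2]) _)
      have h2 := hsign x hx'.1.le (le_trans hcs hx.1.le) hx'.2.le
      positivity)
  exact hmono (Set.left_mem_Icc.2 hst) (Set.right_mem_Icc.2 hst) hst

lemma wsc_anti {α β m c : ℝ} (hcm : c < m)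
    (hsign : ∀ x, 0 < x → x ≤ c → (β - 1) * m + (2 - α - β) * x ≤ 0)
    {s t : ℝ} (hs : 0 < s) (hst : s ≤ t) (htc : t ≤ c) :
    t ^ (β - 1) * (m - t) ^ (α - 1) ≤ s ^ (β - 1) * (m - s) ^ (α - 1) := by
  have hsub : Set.Icc s t ⊆ Set.Ioo 0 m := fun x hx =>
    ⟨lt_of_lt_of_le hs hx.1, lt_of_le_of_lt (le_trans hx.2 htc) hcm⟩
  have hanti := antitoneOn_of_deriv_nonpos (convex_Icc s t)
    (f := fun y => y ^ (β - 1) * (m - y) ^ (α - 1))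
    (fun x hx => (wsc_deriv (hsub hx).1 (hsub hx).2).continuousAt.continuousWithinAt)
    (fun x hx => by
      rw [interior_Icc] at hx
      exact (wsc_deriv (hsub (Set.Ioo_subset_Icc_self hx)).1
        (hsub (Set.Ioo_subset_Icc_self hx)).2).differentiableAt.differentiableWithinAt)
    (fun x hx => by
      rw [interior_Icc] at hx
      have hx' := hsub (Set.Ioo_subset_Icc_self hx)
      rw [(wsc_deriv hx'.1 hx'.2).deriv]
      have h1 : (0:ℝ) ≤ x ^ (β - 2) * (m - x) ^ (α - 2) :=
        mul_nonneg (Real.rpow_nonneg hx'.1.le _) (Real.rpow_nonneg (by linarith [hx'.2]) _)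
      have h2 := hsign x hx'.1 (le_trans hx.2.le htc)
      exact mul_nonpos_of_nonneg_of_nonpos h1 h2)
  exact hanti (Set.left_mem_Icc.2 hst) (Set.right_mem_Icc.2 hst) hst

lemma wsc_main {α β : ℝ} (hα0 : 0 < α) (hα1 : α < 1) (hβ : 0 < β) {m : ℕ} (hm : 2 ≤ m) :
    ∑ k ∈ Finset.Icc 1 (m - 1), ((m:ℝ) - k) ^ (α - 1) * (k:ℝ) ^ (β - 1)
      ≤ Real.Gamma α * Real.Gamma β / Real.Gamma (α + β) * (m:ℝ) ^ (α + β - 1) := by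
  have hmR : (0:ℝ) < m := by exact_mod_cast (by omega : 0 < m)
  set g : ℝ → ℝ := fun x => x ^ (β - 1) * ((m:ℝ) - x) ^ (α - 1) with hgdef
  have hInt : IntervalIntegrable g volume 0 (m:ℝ) := wsc_intble hα0 hβ hmR
  have subInt : ∀ a b : ℝ, 0 ≤ a → a ≤ b → b ≤ (m:ℝ) → IntervalIntegrable g volume a b := by
    intro a b ha hab hbm
    exact hInt.mono_set (by
      rw [Set.uIcc_of_le hab, Set.uIcc_of_le hmR.le]
      exact Set.Icc_subset_Icc ha hbm)
  set c : ℝ := if β < 1 then (1 - β) * m / (2 - α - β) else 0 with hcdef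
  have hc0 : 0 ≤ c := by
    rw [hcdef]; split_ifs with h
    · exact div_nonneg (mul_nonneg (by linarith) hmR.le) (by linarith)
    · exact le_refl 0
  have hcm : c < m := by
    rw [hcdef]; split_ifs with h
    · rw [div_lt_iff₀ (by linarith)]; nlinarith
    · exact hmR
  have hsign_neg : ∀ x, 0 < x → x ≤ c → (β - 1) * m + (2 - α - β) * x ≤ 0 := by
    intro x hx hxc
    rw [hcdef] at hxc
    split_ifs at hxc with h
    · rw [le_div_iff₀ (by linarith)] at hxc; nlinarith
    · linarith
  have hsign_pos : ∀ x, 0 ≤ x → c ≤ x → x ≤ (m:ℝ) → 0 ≤ (β - 1) * m + (2 - α - β) * x := by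
    intro x hx hcx hxm
    rw [hcdef] at hcx
    split_ifs at hcx with h
    · rw [div_le_iff₀ (by linarith)] at hcx; nlinarith
    · nlinarith
  set K : ℕ := min (Nat.floor c) (m - 1) with hKdef
  have hK1 : K ≤ m - 1 := min_le_right _ _
  have hKc : ∀ k : ℕ, k ≤ K → (k:ℝ) ≤ c := by
    intro k hk
    have h1 : k ≤ Nat.floor c := le_trans hk (min_le_left _ _)
    calc (k:ℝ) ≤ (Nat.floor c : ℝ) := by exact_mod_cast h1
      _ ≤ c := Nat.floor_le hc0
  have hKc' : ∀ k : ℕ, K + 1 ≤ k → k ≤ m - 1 → c < k := by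
    intro k h1 h2
    rcases le_or_gt (Nat.floor c) (m - 1) with h | h
    · have h3 : Nat.floor c + 1 ≤ k := by omega
      calc c < (Nat.floor c : ℝ) + 1 := Nat.lt_floor_add_one c
        _ ≤ k := by exact_mod_cast h3
    · exfalso; have : K = m - 1 := min_eq_right h.le; omega
  -- termwise bounds
  have hbound1 : ∀ i : ℕ, i < K →
      g ((1 + i : ℕ) : ℝ) ≤ ∫ x in ((i:ℕ):ℝ)..(((i+1:ℕ)):ℝ), g x := by
    intro i hi
    have hkc : ((1 + i : ℕ):ℝ) ≤ c := hKc _ (by omega)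
    have hkc2 : (i:ℝ) + 1 ≤ c := by push_cast at hkc; linarith
    have hab : ((i:ℕ):ℝ) ≤ ((i+1:ℕ):ℝ) := by push_cast; linarith
    have hIk : IntervalIntegrable g volume ((i:ℕ):ℝ) ((i+1:ℕ):ℝ) :=
      subInt _ _ (by positivity) hab (by push_cast; linarith [hcm])
    have hae : (fun _ => g ((1 + i : ℕ):ℝ)) ≤ᵐ[volume.restrict (Set.Icc ((i:ℕ):ℝ) ((i+1:ℕ):ℝ))] g := by
      rw [← Measure.restrict_congr_set Ioc_ae_eq_Icc]
      filter_upwards [ae_restrict_mem measurableSet_Ioc] with x hx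
      have hx0 : (0:ℝ) < x := lt_of_le_of_lt (by positivity) hx.1
      have hxk : x ≤ ((1 + i : ℕ):ℝ) := by
        have h2 := hx.2; push_cast at h2 ⊢; linarith
      exact wsc_anti hcm hsign_neg hx0 hxk hkc
    have hmono := intervalIntegral.integral_mono_ae_restrict hab
      (_root_.intervalIntegrable_const (c := g ((1 + i : ℕ):ℝ))) hIk hae
    rwa [intervalIntegral.integral_const, show ((i+1:ℕ):ℝ) - ((i:ℕ):ℝ) = 1 by push_cast; ring,
      one_smul] at hmono
  have hbound2 : ∀ i : ℕ, i < m - 1 - K →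
      g ((1 + (K + i) : ℕ) : ℝ) ≤ ∫ x in ((K+1+i:ℕ):ℝ)..((K+1+(i+1):ℕ):ℝ), g x := by
    intro i hi
    have hck : c < ((1 + (K + i) : ℕ):ℝ) := hKc' _ (by omega) (by omega)
    have hk1m : ((1 + (K + i) : ℕ):ℝ) + 1 ≤ (m:ℝ) := by
      exact_mod_cast (by omega : 1 + (K + i) + 1 ≤ m)
    have hk1m2 : (K:ℝ) + (i:ℝ) + 2 ≤ (m:ℝ) := by push_cast at hk1m; linarith
    have hk0 : (0:ℝ) < ((1 + (K + i) : ℕ):ℝ) := by exact_mod_cast (by omega : 0 < 1 + (K + i))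
    have hab : ((K+1+i:ℕ):ℝ) ≤ ((K+1+(i+1):ℕ):ℝ) := by push_cast; linarith
    have hIk : IntervalIntegrable g volume ((K+1+i:ℕ):ℝ) ((K+1+(i+1):ℕ):ℝ) :=
      subInt _ _ (by positivity) hab (by push_cast; linarith)
    have hae : (fun _ => g ((1 + (K + i) : ℕ):ℝ))
        ≤ᵐ[volume.restrict (Set.Icc ((K+1+i:ℕ):ℝ) ((K+1+(i+1):ℕ):ℝ))] g := by
      rw [← Measure.restrict_congr_set Ico_ae_eq_Icc]
      filter_upwards [ae_restrict_mem measurableSet_Ico] with x hx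
      have hkx : ((1 + (K + i) : ℕ):ℝ) ≤ x := by
        have h1 := hx.1; push_cast at h1 ⊢; linarith
      have hxm : x < (m:ℝ) := by
        have h2 := hx.2; push_cast at h2 ⊢; linarith
      exact wsc_mono hsign_pos hk0 hck.le hkx hxm
    have hmono := intervalIntegral.integral_mono_ae_restrict hab
      (_root_.intervalIntegrable_const (c := g ((1 + (K + i) : ℕ):ℝ))) hIk hae
    rwa [intervalIntegral.integral_const,
      show ((K+1+(i+1):ℕ):ℝ) - ((K+1+i:ℕ):ℝ) = 1 by push_cast; ring, one_smul] at hmono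
  -- reindex the sum
  have hre : ∑ k ∈ Finset.Icc 1 (m - 1), ((m:ℝ) - k) ^ (α - 1) * (k:ℝ) ^ (β - 1)
      = ∑ i ∈ Finset.range K, g ((1 + i : ℕ) : ℝ)
        + ∑ i ∈ Finset.range (m - 1 - K), g ((1 + (K + i) : ℕ) : ℝ) := by
    rw [show Finset.Icc 1 (m-1) = Finset.Ico 1 m by rw [← Finset.Ico_add_one_right_eq_Icc]; congr 1; omega]
    rw [Finset.sum_Ico_eq_sum_range]
    rw [← Finset.sum_range_add_sum_Ico (fun i => ((m:ℝ) - (1+i:ℕ)) ^ (α - 1) * ((1+i:ℕ):ℝ) ^ (β - 1))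
      (show K ≤ m - 1 from hK1)]
    congr 1
    · exact Finset.sum_congr rfl fun i _ => mul_comm _ _
    · rw [Finset.sum_Ico_eq_sum_range]
      exact Finset.sum_congr rfl fun i _ => mul_comm _ _
  -- telescoping sums of integrals
  have hS1 : ∑ i ∈ Finset.range K, (∫ x in ((i:ℕ):ℝ)..((i+1:ℕ):ℝ), g x)
      = ∫ x in (((0:ℕ)):ℝ)..((K:ℕ):ℝ), g x := by
    apply intervalIntegral.sum_integral_adjacent_intervals (a := fun i : ℕ => ((i:ℕ):ℝ))
    intro i hi
    refine subInt _ _ (by positivity) (by push_cast; linarith) ?_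
    have : i + 1 ≤ m := by omega
    exact_mod_cast this
  have hS2 : ∑ i ∈ Finset.range (m-1-K), (∫ x in ((K+1+i:ℕ):ℝ)..((K+1+(i+1):ℕ):ℝ), g x)
      = ∫ x in ((K+1+0:ℕ):ℝ)..((K+1+(m-1-K):ℕ):ℝ), g x := by
    apply intervalIntegral.sum_integral_adjacent_intervals (a := fun i : ℕ => ((K+1+i:ℕ):ℝ))
    intro i hi
    refine subInt _ _ (by positivity) (by push_cast; linarith) ?_
    have : K + 1 + (i+1) ≤ m := by omega
    exact_mod_cast this
  have hmid : 0 ≤ ∫ x in ((K:ℕ):ℝ)..((K+1+0:ℕ):ℝ), g x := by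
    apply intervalIntegral.integral_nonneg (by push_cast; linarith)
    intro x hx
    have hx0 : (0:ℝ) ≤ x := le_trans (by positivity) hx.1
    have hxm : x ≤ (m:ℝ) := by
      have h2 := hx.2
      have : (K+1+0 : ℕ) ≤ m := by omega
      have := (Nat.cast_le (α := ℝ)).2 this
      linarith
    exact mul_nonneg (Real.rpow_nonneg hx0 _) (Real.rpow_nonneg (by linarith) _)
  have hIa : IntervalIntegrable g volume (((0:ℕ)):ℝ) ((K:ℕ):ℝ) :=
    subInt _ _ (by positivity) (by push_cast; positivity) (by exact_mod_cast (by omega : K ≤ m))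
  have hIb : IntervalIntegrable g volume ((K:ℕ):ℝ) ((K+1+0:ℕ):ℝ) :=
    subInt _ _ (by positivity) (by push_cast; linarith) (by exact_mod_cast (by omega : K+1+0 ≤ m))
  have hIc : IntervalIntegrable g volume ((K+1+0:ℕ):ℝ) ((K+1+(m-1-K):ℕ):ℝ) :=
    subInt _ _ (by positivity) (by exact_mod_cast (by omega : K+1+0 ≤ K+1+(m-1-K)))
      (by exact_mod_cast (by omega : K+1+(m-1-K) ≤ m))
  have hsplit : (∫ x in (((0:ℕ)):ℝ)..((K:ℕ):ℝ), g x) + (∫ x in ((K:ℕ):ℝ)..((K+1+0:ℕ):ℝ), g x)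
      + (∫ x in ((K+1+0:ℕ):ℝ)..((K+1+(m-1-K):ℕ):ℝ), g x) = ∫ x in (((0:ℕ)):ℝ)..((K+1+(m-1-K):ℕ):ℝ), g x := by
    rw [intervalIntegral.integral_add_adjacent_intervals hIa hIb,
      intervalIntegral.integral_add_adjacent_intervals (hIa.trans hIb) hIc]
  have hval : (∫ x in (((0:ℕ)):ℝ)..((K+1+(m-1-K):ℕ):ℝ), g x)
      = Real.Gamma α * Real.Gamma β / Real.Gamma (α + β) * (m:ℝ) ^ (α + β - 1) := by
    rw [show (K+1+(m-1-K):ℕ) = m by omega, Nat.cast_zero]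
    exact wsc_beta_scaled hα0 hβ hmR
  calc ∑ k ∈ Finset.Icc 1 (m - 1), ((m:ℝ) - k) ^ (α - 1) * (k:ℝ) ^ (β - 1)
      = ∑ i ∈ Finset.range K, g ((1 + i : ℕ) : ℝ)
        + ∑ i ∈ Finset.range (m - 1 - K), g ((1 + (K + i) : ℕ) : ℝ) := hre
    _ ≤ (∑ i ∈ Finset.range K, ∫ x in ((i:ℕ):ℝ)..((i+1:ℕ):ℝ), g x)
        + ∑ i ∈ Finset.range (m-1-K), ∫ x in ((K+1+i:ℕ):ℝ)..((K+1+(i+1):ℕ):ℝ), g x := by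
        apply add_le_add
        · exact Finset.sum_le_sum fun i hi => hbound1 i (Finset.mem_range.1 hi)
        · exact Finset.sum_le_sum fun i hi => hbound2 i (Finset.mem_range.1 hi)
    _ = (∫ x in (((0:ℕ)):ℝ)..((K:ℕ):ℝ), g x) + ∫ x in ((K+1+0:ℕ):ℝ)..((K+1+(m-1-K):ℕ):ℝ), g x := by
        rw [hS1, hS2]
    _ ≤ ∫ x in (((0:ℕ)):ℝ)..((K+1+(m-1-K):ℕ):ℝ), g x := by rw [← hsplit]; linarith
    _ = _ := hval

end WSCAux

open MeasureTheory intervalIntegral in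
/-- Weakly singular convolution bound: for `0 < α < 1`, `β > 0`, `τ > 0`, `t_k = kτ`
and integers `0 ≤ j < n - 1`,
`τ Σ_{i=j+1}^{n-1} t_{n-i}^{α-1} t_{i-j}^{β-1} ≤ B(α,β) t_{n-j}^{α+β-1}`,
where `B(α,β) = Γ(α)Γ(β)/Γ(α+β)` is the Beta function. -/
theorem weakly_singular_convolution_bound
    (α β τ : ℝ) (hα0 : 0 < α) (hα1 : α < 1) (hβ : 0 < β) (hτ : 0 < τ)
    (n j : ℕ) (hj : j < n - 1) :
    τ * ∑ i ∈ Finset.Icc (j + 1) (n - 1),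
        (((n : ℝ) - i) * τ) ^ (α - 1) * (((i : ℝ) - j) * τ) ^ (β - 1)
      ≤ (Real.Gamma α * Real.Gamma β / Real.Gamma (α + β))
          * (((n : ℝ) - j) * τ) ^ (α + β - 1) := by
  have hn2 : 2 ≤ n := by omega
  set m : ℕ := n - j with hmdef
  have hm2 : 2 ≤ m := by omega
  have hcast : (m:ℝ) = (n:ℝ) - j := by
    rw [hmdef]; push_cast [Nat.cast_sub (by omega : j ≤ n)]; ring
  have hsum : ∑ i ∈ Finset.Icc (j + 1) (n - 1),
        (((n : ℝ) - i) * τ) ^ (α - 1) * (((i : ℝ) - j) * τ) ^ (β - 1)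
      = ∑ k ∈ Finset.Icc 1 (m - 1), (((m:ℝ) - k) * τ) ^ (α - 1) * ((k:ℝ) * τ) ^ (β - 1) := by
    rw [show Finset.Icc (j+1) (n-1) = Finset.Ico (j+1) n by
      rw [← Finset.Ico_add_one_right_eq_Icc]; congr 1; omega]
    rw [show Finset.Icc 1 (m-1) = Finset.Ico 1 m by
      rw [← Finset.Ico_add_one_right_eq_Icc]; congr 1; omega]
    rw [Finset.sum_Ico_eq_sum_range, Finset.sum_Ico_eq_sum_range]
    rw [show n - (j+1) = m - 1 by omega]
    apply Finset.sum_congr rfl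
    intro i _
    have e1 : ((j+1+i : ℕ):ℝ) - j = ((1+i:ℕ):ℝ) := by push_cast; ring
    have e2 : (n:ℝ) - ((j+1+i:ℕ):ℝ) = (m:ℝ) - ((1+i:ℕ):ℝ) := by rw [hcast]; push_cast; ring
    rw [e1, e2]
  rw [hsum, ← hcast]
  have hSfac : ∑ k ∈ Finset.Icc 1 (m - 1), (((m:ℝ) - k) * τ) ^ (α - 1) * ((k:ℝ) * τ) ^ (β - 1)
      = (τ ^ (α - 1) * τ ^ (β - 1))
        * ∑ k ∈ Finset.Icc 1 (m - 1), ((m:ℝ) - k) ^ (α - 1) * (k:ℝ) ^ (β - 1) := by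
    rw [Finset.mul_sum]
    apply Finset.sum_congr rfl
    intro k hk
    obtain ⟨hk1, hk2⟩ := Finset.mem_Icc.1 hk
    have hkm : k < m := by omega
    have h1 : (0:ℝ) ≤ (m:ℝ) - k := by
      have : (k:ℝ) < m := by exact_mod_cast hkm
      linarith
    rw [Real.mul_rpow h1 hτ.le, Real.mul_rpow (Nat.cast_nonneg k) hτ.le]
    ring
  rw [hSfac, Real.mul_rpow (Nat.cast_nonneg m) hτ.le]
  have hτpow : τ * (τ ^ (α - 1) * τ ^ (β - 1)) = τ ^ (α + β - 1) := by
    rw [← Real.rpow_add hτ, mul_comm, ← Real.rpow_add_one hτ.ne']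
    congr 1; ring
  have hτp : 0 ≤ τ ^ (α + β - 1) := Real.rpow_nonneg hτ.le _
  calc τ * ((τ ^ (α - 1) * τ ^ (β - 1))
        * ∑ k ∈ Finset.Icc 1 (m - 1), ((m:ℝ) - k) ^ (α - 1) * (k:ℝ) ^ (β - 1))
      = τ ^ (α + β - 1) * ∑ k ∈ Finset.Icc 1 (m - 1), ((m:ℝ) - k) ^ (α - 1) * (k:ℝ) ^ (β - 1) := by
        rw [← mul_assoc, hτpow]
    _ ≤ τ ^ (α + β - 1) * (Real.Gamma α * Real.Gamma β / Real.Gamma (α + β) * (m:ℝ) ^ (α + β - 1)) :=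
        mul_le_mul_of_nonneg_left (wsc_main hα0 hα1 hβ hm2) hτp
    _ = Real.Gamma α * Real.Gamma β / Real.Gamma (α + β) * ((m:ℝ) ^ (α + β - 1) * τ ^ (α + β - 1)) := by
        ring
end

section
/- (Discrete Sobolev/Gagliardo–Nirenberg inequality in 2D) For any grid function u on an M×M uniform grid of [0,L]² vanishing on the boundary, ‖u‖_∞ ≤ C ‖u‖^{1/2} (‖u‖ + |u|_2)^{1/2}, where ‖u‖ is the discrete L² norm, |u|_2 = ‖Δ_h u‖ with Δ_h the standard five-point discrete Laplacian, and C is independent of the grid. -/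
open Finset

private lemma abel_sum (n : ℕ) (a b : ℕ → ℂ) (h0 : a 0 = 0) (hn : a (n+1) = 0) :
    ∑ k ∈ range (n+1), (a (k+1) - a k) * b k
      = -∑ k ∈ range n, a (k+1) * (b (k+1) - b k) := by
  have h1 : ∑ k ∈ range (n+1), a (k+1) * b k = ∑ k ∈ range n, a (k+1) * b k := by
    rw [Finset.sum_range_succ, hn, zero_mul, add_zero]
  have h2 : ∑ k ∈ range (n+1), a k * b k = ∑ k ∈ range n, a (k+1) * b (k+1) := by
    rw [Finset.sum_range_succ', h0, zero_mul, add_zero]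
  calc ∑ k ∈ range (n+1), (a (k+1) - a k) * b k
      = ∑ k ∈ range (n+1), a (k+1) * b k - ∑ k ∈ range (n+1), a k * b k := by
        rw [← Finset.sum_sub_distrib]
        exact Finset.sum_congr rfl fun k _ => by ring
    _ = ∑ k ∈ range n, (a (k+1) * b k - a (k+1) * b (k+1)) := by
        rw [h1, h2, Finset.sum_sub_distrib]
    _ = -∑ k ∈ range n, a (k+1) * (b (k+1) - b k) := by
        rw [← Finset.sum_neg_distrib]
        exact Finset.sum_congr rfl fun k _ => by ring

private lemma sbp_le (n : ℕ) (v : ℕ → ℂ) (h0 : v 0 = 0) (hn : v (n+1) = 0) :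
    ∑ k ∈ range (n+1), ‖v (k+1) - v k‖^2
      ≤ Real.sqrt (∑ k ∈ range n, ‖v (k+1)‖^2) *
        Real.sqrt (∑ k ∈ range n, ‖v (k+2) - 2*v (k+1) + v k‖^2) := by
  have h0' : (starRingEnd ℂ) (v 0) = 0 := by rw [h0]; simp
  have hn' : (starRingEnd ℂ) (v (n+1)) = 0 := by rw [hn]; simp
  have key : ((∑ k ∈ range (n+1), ‖v (k+1) - v k‖^2 : ℝ) : ℂ)
      = -∑ k ∈ range n, (starRingEnd ℂ) (v (k+1)) * ((v (k+2) - v (k+1)) - (v (k+1) - v k)) := by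
    have h := abel_sum n (fun k => (starRingEnd ℂ) (v k)) (fun k => v (k+1) - v k) h0' hn'
    have hL : ∑ k ∈ range (n+1), ((starRingEnd ℂ) (v (k+1)) - (starRingEnd ℂ) (v k)) * (v (k+1) - v k)
        = ((∑ k ∈ range (n+1), ‖v (k+1) - v k‖^2 : ℝ) : ℂ) := by
      push_cast
      refine Finset.sum_congr rfl fun k _ => ?_
      rw [← map_sub, mul_comm, Complex.mul_conj']
    rw [← hL, h]
  have hnn : (0:ℝ) ≤ ∑ k ∈ range (n+1), ‖v (k+1) - v k‖^2 :=
    Finset.sum_nonneg fun k _ => by positivity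
  calc ∑ k ∈ range (n+1), ‖v (k+1) - v k‖^2
      = ‖((∑ k ∈ range (n+1), ‖v (k+1) - v k‖^2 : ℝ) : ℂ)‖ := by
        rw [Complex.norm_real, Real.norm_eq_abs, abs_of_nonneg hnn]
    _ = ‖∑ k ∈ range n, (starRingEnd ℂ) (v (k+1)) * ((v (k+2) - v (k+1)) - (v (k+1) - v k))‖ := by
        rw [key, norm_neg]
    _ ≤ ∑ k ∈ range n, ‖v (k+1)‖ * ‖v (k+2) - 2*v (k+1) + v k‖ := by
        refine (norm_sum_le _ _).trans (le_of_eq (Finset.sum_congr rfl fun k _ => ?_))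
        rw [norm_mul, RCLike.norm_conj]
        congr 2
        ring
    _ ≤ _ := Real.sum_mul_le_sqrt_mul_sqrt _ _ _

private lemma d2_bound (a b c d : ℂ) :
    ‖a‖^2 - ‖c‖^2 - ‖b‖^2 + ‖d‖^2
      ≤ ‖a - c - b + d‖ * (‖a‖ + ‖b‖) + ‖c - d‖ * (‖a - c‖ + ‖b - d‖) := by
  have hid : ‖a‖^2 - ‖c‖^2 - ‖b‖^2 + ‖d‖^2
      = ((a - c - b + d) * (starRingEnd ℂ) (a + b)).re
        + ((c - d) * (starRingEnd ℂ) ((a - c) + (b - d))).re := by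
    simp only [Complex.sq_norm, Complex.normSq_apply, Complex.mul_re,
      Complex.add_re, Complex.add_im, Complex.sub_re, Complex.sub_im, Complex.conj_re,
      Complex.conj_im]
    ring
  rw [hid]
  have h1 : ((a - c - b + d) * (starRingEnd ℂ) (a + b)).re ≤ ‖a - c - b + d‖ * (‖a‖ + ‖b‖) := by
    calc ((a - c - b + d) * (starRingEnd ℂ) (a + b)).re
        ≤ ‖(a - c - b + d) * (starRingEnd ℂ) (a + b)‖ := Complex.re_le_norm _
      _ = ‖a - c - b + d‖ * ‖a + b‖ := by rw [norm_mul, RCLike.norm_conj]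
      _ ≤ ‖a - c - b + d‖ * (‖a‖ + ‖b‖) := by
          exact mul_le_mul_of_nonneg_left (norm_add_le _ _) (norm_nonneg _)
  have h2 : ((c - d) * (starRingEnd ℂ) ((a - c) + (b - d))).re
      ≤ ‖c - d‖ * (‖a - c‖ + ‖b - d‖) := by
    calc ((c - d) * (starRingEnd ℂ) ((a - c) + (b - d))).re
        ≤ ‖(c - d) * (starRingEnd ℂ) ((a - c) + (b - d))‖ := Complex.re_le_norm _
      _ = ‖c - d‖ * ‖(a - c) + (b - d)‖ := by rw [norm_mul, RCLike.norm_conj]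
      _ ≤ ‖c - d‖ * (‖a - c‖ + ‖b - d‖) := by
          exact mul_le_mul_of_nonneg_left (norm_add_le _ _) (norm_nonneg _)
  linarith

private lemma cs2 (s t : Finset ℕ) (f g : ℕ → ℕ → ℝ) :
    ∑ j ∈ s, ∑ k ∈ t, f j k * g j k
      ≤ Real.sqrt (∑ j ∈ s, ∑ k ∈ t, f j k ^ 2) *
        Real.sqrt (∑ j ∈ s, ∑ k ∈ t, g j k ^ 2) := by
  have h := Real.sum_mul_le_sqrt_mul_sqrt (s ×ˢ t) (fun p => f p.1 p.2) (fun p => g p.1 p.2)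
  simpa [Finset.sum_product] using h

private lemma shift_le (n : ℕ) (g : ℕ → ℝ) (hg : ∀ i, 0 ≤ g i) :
    ∑ i ∈ range n, g (i+1) ≤ ∑ i ∈ range (n+1), g i := by
  rw [Finset.sum_range_succ']
  exact le_add_of_nonneg_right (hg 0)

private lemma tail_le (n : ℕ) (g : ℕ → ℝ) (hg : ∀ i, 0 ≤ g i) :
    ∑ i ∈ range n, g i ≤ ∑ i ∈ range (n+1), g i := by
  rw [Finset.sum_range_succ]
  exact le_add_of_nonneg_right (hg n)

private lemma strip (n : ℕ) (g : ℕ → ℝ) (h0 : g 0 = 0) (hn : g (n+1) = 0) :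
    ∑ k ∈ range (n+2), g k = ∑ k ∈ range n, g (k+1) := by
  rw [show n + 2 = (n+1)+1 from rfl, Finset.sum_range_succ, hn, add_zero,
    Finset.sum_range_succ', h0, add_zero]

set_option maxHeartbeats 2000000 in
/-- Discrete Sobolev/Gagliardo–Nirenberg inequality in 2D: there is a constant `C`,
independent of the grid, such that for any grid function `u` on an `M×M` uniform grid
of `[0,L]²` vanishing on the boundary,
`‖u‖_∞ ≤ C ‖u‖^{1/2} (‖u‖ + |u|₂)^{1/2}`, where `‖u‖` is the discrete `L²` norm and
`|u|₂ = ‖Δ_h u‖` with `Δ_h` the five-point discrete Laplacian. -/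
theorem discrete_sobolev_2d :
    ∃ C : ℝ, 0 < C ∧ ∀ (M : ℕ), 2 ≤ M → ∀ (L : ℝ), 0 < L →
      ∀ u : ℕ → ℕ → ℂ,
        (∀ j k : ℕ, j = 0 ∨ j = M ∨ k = 0 ∨ k = M → u j k = 0) →
        ∀ j k : ℕ, j ≤ M → k ≤ M →
          ‖u j k‖ ≤
            C * (Real.sqrt ((L / M) ^ 2 *
                  ∑ p ∈ Finset.Icc 1 (M - 1), ∑ q ∈ Finset.Icc 1 (M - 1),
                    ‖u p q‖ ^ 2)) ^ ((1 : ℝ) / 2)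
              * (Real.sqrt ((L / M) ^ 2 *
                    ∑ p ∈ Finset.Icc 1 (M - 1), ∑ q ∈ Finset.Icc 1 (M - 1),
                      ‖u p q‖ ^ 2)
                 + Real.sqrt ((L / M) ^ 2 *
                    ∑ p ∈ Finset.Icc 1 (M - 1), ∑ q ∈ Finset.Icc 1 (M - 1),
                      ‖(u (p - 1) q - 2 * u p q + u (p + 1) q) / (L / M) ^ 2
                        + (u p (q - 1) - 2 * u p q + u p (q + 1)) / (L / M) ^ 2‖ ^ 2))
                ^ ((1 : ℝ) / 2) := by
  refine ⟨2, two_pos, ?_⟩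
  intro M hM L hL u hbc J K hJ hK
  obtain ⟨m, rfl⟩ : ∃ m, M = m + 2 := ⟨M - 2, by omega⟩
  simp only [show m + 2 - 1 = m + 1 by omega]
  have hz0x : ∀ k, u 0 k = 0 := fun k => hbc 0 k (Or.inl rfl)
  have hzMx : ∀ k, u (m+2) k = 0 := fun k => hbc _ _ (Or.inr (Or.inl rfl))
  have hz0y : ∀ j, u j 0 = 0 := fun j => hbc _ _ (Or.inr (Or.inr (Or.inl rfl)))
  have hzMy : ∀ j, u j (m+2) = 0 := fun j => hbc _ _ (Or.inr (Or.inr (Or.inr rfl)))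
  -- internal quantities
  set S0 : ℝ := ∑ j ∈ range (m+3), ∑ k ∈ range (m+3), ‖u j k‖^2 with hS0def
  set Sx : ℝ := ∑ j ∈ range (m+2), ∑ k ∈ range (m+3), ‖u (j+1) k - u j k‖^2 with hSxdef
  set Sy : ℝ := ∑ j ∈ range (m+3), ∑ k ∈ range (m+2), ‖u j (k+1) - u j k‖^2 with hSydef
  set Sxy : ℝ := ∑ j ∈ range (m+2), ∑ k ∈ range (m+2),
      ‖u (j+1) (k+1) - u (j+1) k - u j (k+1) + u j k‖^2 with hSxydef
  set P : ℕ → ℕ → ℂ := fun j k => u (j+2) (k+1) - 2*u (j+1) (k+1) + u j (k+1) with hP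
  set Q : ℕ → ℕ → ℂ := fun j k => u (j+1) (k+2) - 2*u (j+1) (k+1) + u (j+1) k with hQ
  set TP : ℝ := ∑ j ∈ range (m+1), ∑ k ∈ range (m+1), ‖P j k‖^2 with hTPdef
  set TQ : ℝ := ∑ j ∈ range (m+1), ∑ k ∈ range (m+1), ‖Q j k‖^2 with hTQdef
  set T : ℝ := ∑ j ∈ range (m+1), ∑ k ∈ range (m+1), ‖P j k + Q j k‖^2 with hTdef
  have hS00 : 0 ≤ S0 := Finset.sum_nonneg fun j _ => Finset.sum_nonneg fun k _ => by positivity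
  have hSxy0 : 0 ≤ Sxy := Finset.sum_nonneg fun j _ => Finset.sum_nonneg fun k _ => by positivity
  have hTP0 : 0 ≤ TP := Finset.sum_nonneg fun j _ => Finset.sum_nonneg fun k _ => by positivity
  have hTQ0 : 0 ≤ TQ := Finset.sum_nonneg fun j _ => Finset.sum_nonneg fun k _ => by positivity
  have hT0 : 0 ≤ T := Finset.sum_nonneg fun j _ => Finset.sum_nonneg fun k _ => by positivity
  -- Step 1+2 : pointwise bound
  have hpt : ‖u J K‖^2 ≤ 2*(Real.sqrt Sxy * Real.sqrt S0) + 2*(Real.sqrt Sx * Real.sqrt Sy) := by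
    have tele1 : ∀ j, ∑ k ∈ range K, (‖u j (k+1)‖^2 - ‖u j k‖^2) = ‖u j K‖^2 := by
      intro j
      rw [Finset.sum_range_sub (f := fun k => ‖u j k‖^2), hz0y j]
      simp
    have htele : ‖u J K‖^2 = ∑ j ∈ range J, ∑ k ∈ range K,
        (‖u (j+1) (k+1)‖^2 - ‖u (j+1) k‖^2 - (‖u j (k+1)‖^2 - ‖u j k‖^2)) := by
      have inner : ∀ j, ∑ k ∈ range K,
          (‖u (j+1) (k+1)‖^2 - ‖u (j+1) k‖^2 - (‖u j (k+1)‖^2 - ‖u j k‖^2))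
          = ‖u (j+1) K‖^2 - ‖u j K‖^2 := by
        intro j
        rw [Finset.sum_sub_distrib, tele1 (j+1), tele1 j]
      rw [Finset.sum_congr rfl fun j _ => inner j,
        Finset.sum_range_sub (f := fun j => ‖u j K‖^2), hz0x K]
      simp
    set Bnd : ℕ → ℕ → ℝ := fun j k =>
      ‖u (j+1) (k+1) - u (j+1) k - u j (k+1) + u j k‖ * (‖u (j+1) (k+1)‖ + ‖u j (k+1)‖)
      + ‖u (j+1) k - u j k‖ * (‖u (j+1) (k+1) - u (j+1) k‖ + ‖u j (k+1) - u j k‖) with hBnd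
    have hBnn : ∀ j k, 0 ≤ Bnd j k := fun j k => by
      simp only [hBnd]; positivity
    have hptw : ∀ j k, ‖u (j+1) (k+1)‖^2 - ‖u (j+1) k‖^2 - (‖u j (k+1)‖^2 - ‖u j k‖^2)
        ≤ Bnd j k := by
      intro j k
      have h := d2_bound (u (j+1) (k+1)) (u j (k+1)) (u (j+1) k) (u j k)
      simp only [hBnd]
      linarith
    have hstep1 : ‖u J K‖^2 ≤ ∑ j ∈ range (m+2), ∑ k ∈ range (m+2), Bnd j k := by
      rw [htele]
      calc ∑ j ∈ range J, ∑ k ∈ range K,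
            (‖u (j+1) (k+1)‖^2 - ‖u (j+1) k‖^2 - (‖u j (k+1)‖^2 - ‖u j k‖^2))
          ≤ ∑ j ∈ range J, ∑ k ∈ range K, Bnd j k :=
            Finset.sum_le_sum fun j _ => Finset.sum_le_sum fun k _ => hptw j k
        _ ≤ ∑ j ∈ range J, ∑ k ∈ range (m+2), Bnd j k :=
            Finset.sum_le_sum fun j _ => Finset.sum_le_sum_of_subset_of_nonneg
              (Finset.range_subset_range.2 hK) (fun k _ _ => hBnn j k)
        _ ≤ ∑ j ∈ range (m+2), ∑ k ∈ range (m+2), Bnd j k :=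
            Finset.sum_le_sum_of_subset_of_nonneg (Finset.range_subset_range.2 hJ)
              (fun j _ _ => Finset.sum_nonneg fun k _ => hBnn j k)
    have hsplit : ∑ j ∈ range (m+2), ∑ k ∈ range (m+2), Bnd j k
        = (∑ j ∈ range (m+2), ∑ k ∈ range (m+2),
            ‖u (j+1) (k+1) - u (j+1) k - u j (k+1) + u j k‖ * ‖u (j+1) (k+1)‖)
          + (∑ j ∈ range (m+2), ∑ k ∈ range (m+2),
            ‖u (j+1) (k+1) - u (j+1) k - u j (k+1) + u j k‖ * ‖u j (k+1)‖)
          + ((∑ j ∈ range (m+2), ∑ k ∈ range (m+2),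
            ‖u (j+1) k - u j k‖ * ‖u (j+1) (k+1) - u (j+1) k‖)
          + (∑ j ∈ range (m+2), ∑ k ∈ range (m+2),
            ‖u (j+1) k - u j k‖ * ‖u j (k+1) - u j k‖)) := by
      simp only [hBnd, mul_add, Finset.sum_add_distrib]
    have hW1 : ∑ j ∈ range (m+2), ∑ k ∈ range (m+2), ‖u (j+1) (k+1)‖^2 ≤ S0 := by
      calc ∑ j ∈ range (m+2), ∑ k ∈ range (m+2), ‖u (j+1) (k+1)‖^2
          ≤ ∑ j ∈ range (m+2), ∑ k ∈ range (m+3), ‖u (j+1) k‖^2 :=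
            Finset.sum_le_sum fun j _ => shift_le (m+2) (fun k => ‖u (j+1) k‖^2)
              (fun i => by positivity)
        _ ≤ ∑ j ∈ range (m+3), ∑ k ∈ range (m+3), ‖u j k‖^2 :=
            shift_le (m+2) (fun j => ∑ k ∈ range (m+3), ‖u j k‖^2)
              (fun i => Finset.sum_nonneg fun k _ => by positivity)
    have hW2 : ∑ j ∈ range (m+2), ∑ k ∈ range (m+2), ‖u j (k+1)‖^2 ≤ S0 := by
      calc ∑ j ∈ range (m+2), ∑ k ∈ range (m+2), ‖u j (k+1)‖^2
          ≤ ∑ j ∈ range (m+2), ∑ k ∈ range (m+3), ‖u j k‖^2 :=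
            Finset.sum_le_sum fun j _ => shift_le (m+2) (fun k => ‖u j k‖^2)
              (fun i => by positivity)
        _ ≤ ∑ j ∈ range (m+3), ∑ k ∈ range (m+3), ‖u j k‖^2 :=
            tail_le (m+2) (fun j => ∑ k ∈ range (m+3), ‖u j k‖^2)
              (fun i => Finset.sum_nonneg fun k _ => by positivity)
    have hWx : ∑ j ∈ range (m+2), ∑ k ∈ range (m+2), ‖u (j+1) k - u j k‖^2 ≤ Sx :=
      Finset.sum_le_sum fun j _ => tail_le (m+2) (fun k => ‖u (j+1) k - u j k‖^2)
        (fun i => by positivity)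
    have hW3 : ∑ j ∈ range (m+2), ∑ k ∈ range (m+2), ‖u (j+1) (k+1) - u (j+1) k‖^2 ≤ Sy :=
      shift_le (m+2) (fun j => ∑ k ∈ range (m+2), ‖u j (k+1) - u j k‖^2)
        (fun i => Finset.sum_nonneg fun k _ => by positivity)
    have hW4 : ∑ j ∈ range (m+2), ∑ k ∈ range (m+2), ‖u j (k+1) - u j k‖^2 ≤ Sy :=
      tail_le (m+2) (fun j => ∑ k ∈ range (m+2), ‖u j (k+1) - u j k‖^2)
        (fun i => Finset.sum_nonneg fun k _ => by positivity)
    have h1 : ∑ j ∈ range (m+2), ∑ k ∈ range (m+2),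
        ‖u (j+1) (k+1) - u (j+1) k - u j (k+1) + u j k‖ * ‖u (j+1) (k+1)‖
        ≤ Real.sqrt Sxy * Real.sqrt S0 := by
      refine (cs2 (range (m+2)) (range (m+2))
        (fun j k => ‖u (j+1) (k+1) - u (j+1) k - u j (k+1) + u j k‖)
        (fun j k => ‖u (j+1) (k+1)‖)).trans ?_
      exact mul_le_mul (by rw [hSxydef]) (Real.sqrt_le_sqrt hW1)
        (Real.sqrt_nonneg _) (Real.sqrt_nonneg _)
    have h2 : ∑ j ∈ range (m+2), ∑ k ∈ range (m+2),
        ‖u (j+1) (k+1) - u (j+1) k - u j (k+1) + u j k‖ * ‖u j (k+1)‖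
        ≤ Real.sqrt Sxy * Real.sqrt S0 := by
      refine (cs2 (range (m+2)) (range (m+2))
        (fun j k => ‖u (j+1) (k+1) - u (j+1) k - u j (k+1) + u j k‖)
        (fun j k => ‖u j (k+1)‖)).trans ?_
      exact mul_le_mul (by rw [hSxydef]) (Real.sqrt_le_sqrt hW2)
        (Real.sqrt_nonneg _) (Real.sqrt_nonneg _)
    have h3 : ∑ j ∈ range (m+2), ∑ k ∈ range (m+2),
        ‖u (j+1) k - u j k‖ * ‖u (j+1) (k+1) - u (j+1) k‖
        ≤ Real.sqrt Sx * Real.sqrt Sy := by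
      refine (cs2 (range (m+2)) (range (m+2))
        (fun j k => ‖u (j+1) k - u j k‖)
        (fun j k => ‖u (j+1) (k+1) - u (j+1) k‖)).trans ?_
      exact mul_le_mul (Real.sqrt_le_sqrt hWx) (Real.sqrt_le_sqrt hW3)
        (Real.sqrt_nonneg _) (Real.sqrt_nonneg _)
    have h4 : ∑ j ∈ range (m+2), ∑ k ∈ range (m+2),
        ‖u (j+1) k - u j k‖ * ‖u j (k+1) - u j k‖
        ≤ Real.sqrt Sx * Real.sqrt Sy := by
      refine (cs2 (range (m+2)) (range (m+2))
        (fun j k => ‖u (j+1) k - u j k‖)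
        (fun j k => ‖u j (k+1) - u j k‖)).trans ?_
      exact mul_le_mul (Real.sqrt_le_sqrt hWx) (Real.sqrt_le_sqrt hW4)
        (Real.sqrt_nonneg _) (Real.sqrt_nonneg _)
    calc ‖u J K‖^2 ≤ ∑ j ∈ range (m+2), ∑ k ∈ range (m+2), Bnd j k := hstep1
      _ = _ := hsplit
      _ ≤ (Real.sqrt Sxy * Real.sqrt S0 + Real.sqrt Sxy * Real.sqrt S0)
          + (Real.sqrt Sx * Real.sqrt Sy + Real.sqrt Sx * Real.sqrt Sy) :=
            add_le_add (add_le_add h1 h2) (add_le_add h3 h4)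
      _ = 2*(Real.sqrt Sxy * Real.sqrt S0) + 2*(Real.sqrt Sx * Real.sqrt Sy) := by ring

  -- Step 3 : Sx ≤ √S0 √TP
  have hSxle : Sx ≤ Real.sqrt S0 * Real.sqrt TP := by
    have hswap : Sx = ∑ k ∈ range (m+3), ∑ j ∈ range (m+2), ‖u (j+1) k - u j k‖^2 := by
      rw [hSxdef]; exact Finset.sum_comm
    have hcol : ∀ k, ∑ j ∈ range (m+2), ‖u (j+1) k - u j k‖^2
        ≤ Real.sqrt (∑ j ∈ range (m+1), ‖u (j+1) k‖^2) *
          Real.sqrt (∑ j ∈ range (m+1), ‖u (j+2) k - 2*u (j+1) k + u j k‖^2) :=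
      fun k => sbp_le (m+1) (fun j => u j k) (hz0x k) (hzMx k)
    have hsum : ∑ k ∈ range (m+3), ∑ j ∈ range (m+2), ‖u (j+1) k - u j k‖^2
        ≤ Real.sqrt (∑ k ∈ range (m+3), ∑ j ∈ range (m+1), ‖u (j+1) k‖^2) *
          Real.sqrt (∑ k ∈ range (m+3), ∑ j ∈ range (m+1),
            ‖u (j+2) k - 2*u (j+1) k + u j k‖^2) := by
      refine (Finset.sum_le_sum fun k _ => hcol k).trans ?_
      exact Real.sum_sqrt_mul_sqrt_le _ (fun k => Finset.sum_nonneg fun j _ => by positivity)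
        (fun k => Finset.sum_nonneg fun j _ => by positivity)
    have hα : ∑ k ∈ range (m+3), ∑ j ∈ range (m+1), ‖u (j+1) k‖^2 ≤ S0 := by
      rw [Finset.sum_comm]
      calc ∑ j ∈ range (m+1), ∑ k ∈ range (m+3), ‖u (j+1) k‖^2
          ≤ ∑ j ∈ range (m+2), ∑ k ∈ range (m+3), ‖u j k‖^2 :=
            shift_le (m+1) (fun j => ∑ k ∈ range (m+3), ‖u j k‖^2)
              (fun i => Finset.sum_nonneg fun k _ => by positivity)
        _ ≤ S0 := by
            rw [hS0def]
            exact tail_le (m+2) (fun j => ∑ k ∈ range (m+3), ‖u j k‖^2)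
              (fun i => Finset.sum_nonneg fun k _ => by positivity)
    have hβ : ∑ k ∈ range (m+3), ∑ j ∈ range (m+1),
        ‖u (j+2) k - 2*u (j+1) k + u j k‖^2 = TP := by
      rw [strip (m+1) (fun k => ∑ j ∈ range (m+1), ‖u (j+2) k - 2*u (j+1) k + u j k‖^2)
        (by simp [hz0y]) (by simp [hzMy]), hTPdef, hP]
      exact Finset.sum_comm
    rw [hswap]
    refine hsum.trans ?_
    rw [hβ]
    exact mul_le_mul_of_nonneg_right (Real.sqrt_le_sqrt hα) (Real.sqrt_nonneg _)

  have hSyle : Sy ≤ Real.sqrt S0 * Real.sqrt TQ := by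
    have hcol : ∀ j, ∑ k ∈ range (m+2), ‖u j (k+1) - u j k‖^2
        ≤ Real.sqrt (∑ k ∈ range (m+1), ‖u j (k+1)‖^2) *
          Real.sqrt (∑ k ∈ range (m+1), ‖u j (k+2) - 2*u j (k+1) + u j k‖^2) :=
      fun j => sbp_le (m+1) (fun k => u j k) (hz0y j) (hzMy j)
    have hsum : ∑ j ∈ range (m+3), ∑ k ∈ range (m+2), ‖u j (k+1) - u j k‖^2
        ≤ Real.sqrt (∑ j ∈ range (m+3), ∑ k ∈ range (m+1), ‖u j (k+1)‖^2) *
          Real.sqrt (∑ j ∈ range (m+3), ∑ k ∈ range (m+1),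
            ‖u j (k+2) - 2*u j (k+1) + u j k‖^2) := by
      refine (Finset.sum_le_sum fun j _ => hcol j).trans ?_
      exact Real.sum_sqrt_mul_sqrt_le _ (fun j => Finset.sum_nonneg fun k _ => by positivity)
        (fun j => Finset.sum_nonneg fun k _ => by positivity)
    have hα : ∑ j ∈ range (m+3), ∑ k ∈ range (m+1), ‖u j (k+1)‖^2 ≤ S0 := by
      rw [hS0def]
      refine Finset.sum_le_sum fun j _ => ?_
      calc ∑ k ∈ range (m+1), ‖u j (k+1)‖^2
          ≤ ∑ k ∈ range (m+2), ‖u j k‖^2 :=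
            shift_le (m+1) (fun k => ‖u j k‖^2) (fun i => by positivity)
        _ ≤ ∑ k ∈ range (m+3), ‖u j k‖^2 :=
            tail_le (m+2) (fun k => ‖u j k‖^2) (fun i => by positivity)
    have hβ : ∑ j ∈ range (m+3), ∑ k ∈ range (m+1),
        ‖u j (k+2) - 2*u j (k+1) + u j k‖^2 = TQ := by
      rw [strip (m+1) (fun j => ∑ k ∈ range (m+1), ‖u j (k+2) - 2*u j (k+1) + u j k‖^2)
        (by simp [hz0x]) (by simp [hzMx]), hTQdef, hQ]
    rw [hSydef]
    refine hsum.trans ?_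
    rw [hβ]
    exact mul_le_mul_of_nonneg_right (Real.sqrt_le_sqrt hα) (Real.sqrt_nonneg _)

  -- Step 5 : cross identity
  have hre : ∑ j ∈ range (m+1), ∑ k ∈ range (m+1),
      (P j k * (starRingEnd ℂ) (Q j k)).re = Sxy := by
    simp only [hP, hQ]
    have stepA : ∀ k, ((∑ j ∈ range (m+2),
          ‖u (j+1) (k+1) - u (j+1) k - u j (k+1) + u j k‖^2 : ℝ) : ℂ)
        = -∑ j ∈ range (m+1), (starRingEnd ℂ) (u (j+1) (k+1) - u (j+1) k) *
            ((u (j+2) (k+1) - 2*u (j+1) (k+1) + u j (k+1))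
              - (u (j+2) k - 2*u (j+1) k + u j k)) := by
      intro k
      have hA := abel_sum (m+1) (fun j => (starRingEnd ℂ) (u j (k+1) - u j k))
        (fun j => u (j+1) (k+1) - u (j+1) k - u j (k+1) + u j k)
        (by simp [hz0x]) (by simp [hzMx])
      have hL : ∑ j ∈ range (m+2),
          ((starRingEnd ℂ) (u (j+1) (k+1) - u (j+1) k)
            - (starRingEnd ℂ) (u j (k+1) - u j k)) *
            (u (j+1) (k+1) - u (j+1) k - u j (k+1) + u j k)
          = ((∑ j ∈ range (m+2),
              ‖u (j+1) (k+1) - u (j+1) k - u j (k+1) + u j k‖^2 : ℝ) : ℂ) := by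
        push_cast
        refine Finset.sum_congr rfl fun j _ => ?_
        rw [← map_sub, show (u (j+1) (k+1) - u (j+1) k) - (u j (k+1) - u j k)
            = u (j+1) (k+1) - u (j+1) k - u j (k+1) + u j k by ring]
        rw [mul_comm, Complex.mul_conj']
      rw [← hL, hA]
      congr 1
      refine Finset.sum_congr rfl fun j _ => ?_
      congr 1
      ring
    have stepB : ∀ j, ∑ k ∈ range (m+2),
        (starRingEnd ℂ) (u (j+1) (k+1) - u (j+1) k) *
          ((u (j+2) (k+1) - 2*u (j+1) (k+1) + u j (k+1))
            - (u (j+2) k - 2*u (j+1) k + u j k))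
        = -∑ k ∈ range (m+1), (u (j+2) (k+1) - 2*u (j+1) (k+1) + u j (k+1)) *
            (starRingEnd ℂ) (u (j+1) (k+2) - 2*u (j+1) (k+1) + u (j+1) k) := by
      intro j
      have hB := abel_sum (m+1) (fun k => u (j+2) k - 2*u (j+1) k + u j k)
        (fun k => (starRingEnd ℂ) (u (j+1) (k+1) - u (j+1) k))
        (by simp [hz0y]) (by simp [hzMy])
      calc ∑ k ∈ range (m+2),
          (starRingEnd ℂ) (u (j+1) (k+1) - u (j+1) k) *
            ((u (j+2) (k+1) - 2*u (j+1) (k+1) + u j (k+1))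
              - (u (j+2) k - 2*u (j+1) k + u j k))
          = ∑ k ∈ range (m+2),
            ((u (j+2) (k+1) - 2*u (j+1) (k+1) + u j (k+1))
              - (u (j+2) k - 2*u (j+1) k + u j k)) *
            (starRingEnd ℂ) (u (j+1) (k+1) - u (j+1) k) :=
            Finset.sum_congr rfl fun k _ => mul_comm _ _
        _ = -∑ k ∈ range (m+1), (u (j+2) (k+1) - 2*u (j+1) (k+1) + u j (k+1)) *
              ((starRingEnd ℂ) (u (j+1) (k+2) - u (j+1) (k+1))
                - (starRingEnd ℂ) (u (j+1) (k+1) - u (j+1) k)) := hB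
        _ = -∑ k ∈ range (m+1), (u (j+2) (k+1) - 2*u (j+1) (k+1) + u j (k+1)) *
              (starRingEnd ℂ) (u (j+1) (k+2) - 2*u (j+1) (k+1) + u (j+1) k) := by
            congr 1
            refine Finset.sum_congr rfl fun k _ => ?_
            rw [← map_sub]
            congr 2
            ring
    have hcross : ((Sxy : ℝ) : ℂ)
        = ∑ j ∈ range (m+1), ∑ k ∈ range (m+1),
          (u (j+2) (k+1) - 2*u (j+1) (k+1) + u j (k+1)) *
            (starRingEnd ℂ) (u (j+1) (k+2) - 2*u (j+1) (k+1) + u (j+1) k) := by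
      have swapSxy : Sxy = ∑ k ∈ range (m+2), ∑ j ∈ range (m+2),
          ‖u (j+1) (k+1) - u (j+1) k - u j (k+1) + u j k‖^2 := by
        rw [hSxydef]; exact Finset.sum_comm
      calc ((Sxy : ℝ) : ℂ)
          = ∑ k ∈ range (m+2), ((∑ j ∈ range (m+2),
              ‖u (j+1) (k+1) - u (j+1) k - u j (k+1) + u j k‖^2 : ℝ) : ℂ) := by
            rw [swapSxy, Complex.ofReal_sum]
        _ = ∑ k ∈ range (m+2), -∑ j ∈ range (m+1),
              (starRingEnd ℂ) (u (j+1) (k+1) - u (j+1) k) *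
                ((u (j+2) (k+1) - 2*u (j+1) (k+1) + u j (k+1))
                  - (u (j+2) k - 2*u (j+1) k + u j k)) :=
            Finset.sum_congr rfl fun k _ => stepA k
        _ = -∑ k ∈ range (m+2), ∑ j ∈ range (m+1),
              (starRingEnd ℂ) (u (j+1) (k+1) - u (j+1) k) *
                ((u (j+2) (k+1) - 2*u (j+1) (k+1) + u j (k+1))
                  - (u (j+2) k - 2*u (j+1) k + u j k)) := by
            rw [← Finset.sum_neg_distrib]
        _ = -∑ j ∈ range (m+1), ∑ k ∈ range (m+2),
              (starRingEnd ℂ) (u (j+1) (k+1) - u (j+1) k) *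
                ((u (j+2) (k+1) - 2*u (j+1) (k+1) + u j (k+1))
                  - (u (j+2) k - 2*u (j+1) k + u j k)) := by
            rw [Finset.sum_comm]
        _ = -∑ j ∈ range (m+1), -∑ k ∈ range (m+1),
              (u (j+2) (k+1) - 2*u (j+1) (k+1) + u j (k+1)) *
                (starRingEnd ℂ) (u (j+1) (k+2) - 2*u (j+1) (k+1) + u (j+1) k) := by
            rw [Finset.sum_congr rfl fun j _ => stepB j]
        _ = ∑ j ∈ range (m+1), ∑ k ∈ range (m+1),
              (u (j+2) (k+1) - 2*u (j+1) (k+1) + u j (k+1)) *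
                (starRingEnd ℂ) (u (j+1) (k+2) - 2*u (j+1) (k+1) + u (j+1) k) := by
            rw [Finset.sum_neg_distrib, neg_neg]
    have hconj := congrArg Complex.re hcross
    simp only [Complex.ofReal_re, Complex.re_sum] at hconj
    exact hconj.symm

  -- Step 6 : T = TP + TQ + 2 Sxy
  have hTsum : T = TP + TQ + 2 * Sxy := by
    have hterm : ∀ j k, ‖P j k + Q j k‖^2
        = ‖P j k‖^2 + ‖Q j k‖^2 + 2*(P j k * (starRingEnd ℂ) (Q j k)).re := by
      intro j k
      simp only [Complex.sq_norm]
      exact Complex.normSq_add _ _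
    calc T = ∑ j ∈ range (m+1), ∑ k ∈ range (m+1), ‖P j k + Q j k‖^2 := hTdef
      _ = ∑ j ∈ range (m+1), ∑ k ∈ range (m+1),
          (‖P j k‖^2 + ‖Q j k‖^2 + 2*(P j k * (starRingEnd ℂ) (Q j k)).re) :=
          Finset.sum_congr rfl fun j _ => Finset.sum_congr rfl fun k _ => hterm j k
      _ = (∑ j ∈ range (m+1), ∑ k ∈ range (m+1), ‖P j k‖^2)
          + (∑ j ∈ range (m+1), ∑ k ∈ range (m+1), ‖Q j k‖^2)
          + 2*(∑ j ∈ range (m+1), ∑ k ∈ range (m+1),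
              (P j k * (starRingEnd ℂ) (Q j k)).re) := by
          simp only [Finset.sum_add_distrib, ← Finset.mul_sum]
      _ = TP + TQ + 2*Sxy := by rw [← hTPdef, ← hTQdef, hre]

  have hSxyT : Sxy ≤ T := by linarith
  have hTPT : TP ≤ T := by linarith
  have hTQT : TQ ≤ T := by linarith
  -- Step 7 : main bound
  have hmain : ‖u J K‖^2 ≤ 4 * (Real.sqrt S0 * Real.sqrt T) := by
    have e1 : Real.sqrt Sxy * Real.sqrt S0 ≤ Real.sqrt T * Real.sqrt S0 :=
      mul_le_mul_of_nonneg_right (Real.sqrt_le_sqrt hSxyT) (Real.sqrt_nonneg _)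
    have hc0 : (0:ℝ) ≤ Real.sqrt S0 * Real.sqrt T := by positivity
    have c1 : Sx ≤ Real.sqrt S0 * Real.sqrt T :=
      hSxle.trans (mul_le_mul_of_nonneg_left (Real.sqrt_le_sqrt hTPT) (Real.sqrt_nonneg _))
    have c2 : Sy ≤ Real.sqrt S0 * Real.sqrt T :=
      hSyle.trans (mul_le_mul_of_nonneg_left (Real.sqrt_le_sqrt hTQT) (Real.sqrt_nonneg _))
    have e2 : Real.sqrt Sx * Real.sqrt Sy ≤ Real.sqrt S0 * Real.sqrt T := by
      calc Real.sqrt Sx * Real.sqrt Sy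
          ≤ Real.sqrt (Real.sqrt S0 * Real.sqrt T) * Real.sqrt (Real.sqrt S0 * Real.sqrt T) :=
            mul_le_mul (Real.sqrt_le_sqrt c1) (Real.sqrt_le_sqrt c2) (Real.sqrt_nonneg _)
              (Real.sqrt_nonneg _)
        _ = Real.sqrt S0 * Real.sqrt T := Real.mul_self_sqrt hc0
    nlinarith [Real.sqrt_nonneg S0, Real.sqrt_nonneg T]
  -- Step 8 : conversion
  set hv : ℝ := L / ((m+2 : ℕ) : ℝ) with hvdef
  have hv0 : 0 < hv := by
    rw [hvdef]
    exact div_pos hL (by positivity)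
  have hvne : hv ≠ 0 := ne_of_gt hv0
  have l1 : ∀ f : ℕ → ℝ, ∑ p ∈ Finset.Icc 1 (m+1), f p = ∑ p ∈ range (m+1), f (p+1) := by
    intro f
    rw [← Finset.Ico_add_one_right_eq_Icc, Finset.sum_Ico_eq_sum_range,
      show m + 1 + 1 - 1 = m + 1 by omega]
    exact Finset.sum_congr rfl fun i _ => by rw [Nat.add_comm]
  have hS0' : (∑ p ∈ Finset.Icc 1 (m+1), ∑ q ∈ Finset.Icc 1 (m+1), ‖u p q‖^2) = S0 := by
    rw [l1 (fun p => ∑ q ∈ Finset.Icc 1 (m+1), ‖u p q‖^2)]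
    rw [Finset.sum_congr rfl fun p _ => l1 (fun q => ‖u (p+1) q‖^2)]
    rw [hS0def]
    rw [strip (m+1) (fun j => ∑ k ∈ range (m+3), ‖u j k‖^2) (by simp [hz0x]) (by simp [hzMx])]
    exact Finset.sum_congr rfl fun j _ =>
      (strip (m+1) (fun k => ‖u (j+1) k‖^2) (by simp [hz0y]) (by simp [hzMy])).symm
  have hΔ : (∑ p ∈ Finset.Icc 1 (m+1), ∑ q ∈ Finset.Icc 1 (m+1),
      ‖(u (p - 1) q - 2 * u p q + u (p + 1) q) / (L / (m+2:ℕ)) ^ 2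
        + (u p (q - 1) - 2 * u p q + u p (q + 1)) / (L / (m+2:ℕ)) ^ 2‖ ^ 2)
      = T / hv^4 := by
    rw [l1, Finset.sum_congr rfl fun p _ => l1 _]
    rw [hTdef, Finset.sum_div]
    refine Finset.sum_congr rfl fun j _ => ?_
    rw [Finset.sum_div]
    refine Finset.sum_congr rfl fun k _ => ?_
    have e1 : j + 1 - 1 = j := by omega
    have e2 : k + 1 - 1 = k := by omega
    have e3 : j + 1 + 1 = j + 2 := by omega
    have e4 : k + 1 + 1 = k + 2 := by omega
    rw [e1, e2, e3, e4, ← add_div]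
    rw [show (u j (k+1) - 2*u (j+1) (k+1) + u (j+2) (k+1))
        + (u (j+1) k - 2*u (j+1) (k+1) + u (j+1) (k+2)) = P j k + Q j k by
      simp only [hP, hQ]; ring]
    rw [norm_div, div_pow]
    congr 1
    rw [norm_pow, norm_div, Complex.norm_real, Complex.norm_natCast]
    rw [hvdef, Real.norm_eq_abs, abs_of_pos hL]
    ring
  rw [hS0', hΔ, ← Real.sqrt_eq_rpow, ← Real.sqrt_eq_rpow]
  set A : ℝ := Real.sqrt (hv^2*S0) with hAdef
  set B : ℝ := Real.sqrt (hv^2*(T/hv^4)) with hBdef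
  have hA0 : 0 ≤ A := Real.sqrt_nonneg _
  have hB0 : 0 ≤ B := Real.sqrt_nonneg _
  have hABeq : A * B = Real.sqrt S0 * Real.sqrt T := by
    rw [hAdef, hBdef, ← Real.sqrt_mul (mul_nonneg (sq_nonneg hv) hS00)]
    rw [show hv^2*S0*(hv^2*(T/hv^4)) = S0*T by field_simp]
    exact Real.sqrt_mul hS00 T
  have key : ‖u J K‖^2 ≤ 4*(A*(A+B)) := by
    have h4 : 4*(A*B) ≤ 4*(A*(A+B)) := by nlinarith
    calc ‖u J K‖^2 ≤ 4 * (Real.sqrt S0 * Real.sqrt T) := hmain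
      _ = 4*(A*B) := by rw [hABeq]
      _ ≤ 4*(A*(A+B)) := h4
  calc ‖u J K‖ = Real.sqrt (‖u J K‖^2) := (Real.sqrt_sq (norm_nonneg _)).symm
    _ ≤ Real.sqrt (4*(A*(A+B))) := Real.sqrt_le_sqrt key
    _ = 2 * Real.sqrt A * Real.sqrt (A+B) := by
        rw [show (4:ℝ)*(A*(A+B)) = (2*Real.sqrt A*Real.sqrt (A+B))^2 by
          rw [mul_pow, mul_pow, Real.sq_sqrt hA0, Real.sq_sqrt (by positivity)]; ring]
        exact Real.sqrt_sq (by positivity)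
end
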